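/- arXiv:0810.3538 — 10 statements merged into one kernel-verified Lean document; each statement's English description precedes it below -/
import Mathlib

section
/- Suppose in addition that φ is nonnegative. Then ∫_0^∞ exp(−G(x)) dx = +∞ if and only if ∫_0^∞ φ(u) du ≤ 1 (the integral of φ being taken in [0,∞]). (This is the analytic content of the recurrence criterion for the reflected excited Brownian motion with nonnegative, space-homogeneous excitation.) -/
open MeasureTheory Set

lemma aux_inv_top : (∫⁻ x in Ioi (1:ℝ), ENNReal.ofReal x⁻¹) = ⊤ := by
  by_contra hne
  have hlt : (∫⁻ x in Ioi (1:ℝ), ENNReal.ofReal x⁻¹) < ⊤ := lt_top_iff_ne_top.mpr hne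
  have hmeas : AEStronglyMeasurable (fun x : ℝ => x⁻¹) (volume.restrict (Ioi 1)) :=
    measurable_inv.aestronglyMeasurable
  have hnn : 0 ≤ᶠ[ae (volume.restrict (Ioi (1:ℝ)))] (fun x : ℝ => x⁻¹) := by
    filter_upwards [ae_restrict_mem measurableSet_Ioi] with x hx
    exact inv_nonneg.mpr (le_of_lt (lt_trans one_pos hx))
  have hint : IntegrableOn (fun x : ℝ => x⁻¹) (Ioi 1) volume :=
    ⟨hmeas, (hasFiniteIntegral_iff_ofReal hnn).mpr hlt⟩
  have hint' : IntegrableOn (fun x : ℝ => x ^ (-1 : ℝ)) (Ioi 1) volume := by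
    refine hint.congr_fun (fun x hx => ?_) measurableSet_Ioi
    exact (Real.rpow_neg_one x).symm
  have := (integrableOn_Ioi_rpow_iff (by norm_num : (0:ℝ) < 1)).mp hint'
  linarith

/-- Let `φ : [0,∞) → ℝ` be bounded Borel-measurable and nonnegative, `h l = ∫_0^l φ`,
`G x = ∫_0^x h(l)/l dl`.  Then `∫_0^∞ exp(-G(x)) dx = +∞` iff `∫_0^∞ φ(u) du ≤ 1`
(the latter integral taken in `[0,∞]`). -/
theorem stmt_0 (φ h G : ℝ → ℝ)
    (hφm : Measurable φ)
    (hφb : ∃ C : ℝ, ∀ u, 0 ≤ u → |φ u| ≤ C)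
    (hφ0 : ∀ u, 0 ≤ u → 0 ≤ φ u)
    (hh : ∀ l, h l = ∫ u in (0:ℝ)..l, φ u)
    (hG : ∀ x, G x = ∫ l in (0:ℝ)..x, h l / l) :
    (∫⁻ x in Ioi (0:ℝ), ENNReal.ofReal (Real.exp (-(G x)))) = ⊤ ↔
      (∫⁻ u in Ioi (0:ℝ), ENNReal.ofReal (φ u)) ≤ 1 := by
  obtain ⟨C, hC⟩ := hφb
  set M : ℝ := max C 1 with hMdef
  have hM1 : (1:ℝ) ≤ M := le_max_right _ _
  have hM0 : (0:ℝ) < M := lt_of_lt_of_le one_pos hM1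
  -- indicator version of φ
  set ψ : ℝ → ℝ := (Ici (0:ℝ)).indicator φ with hψdef
  have hψm : Measurable ψ := hφm.indicator measurableSet_Ici
  have hψeq : ∀ u : ℝ, 0 ≤ u → ψ u = φ u := fun u hu => indicator_of_mem hu φ
  have hψ0 : ∀ u : ℝ, 0 ≤ ψ u := by
    intro u
    by_cases hu : (0:ℝ) ≤ u
    · rw [hψeq u hu]; exact hφ0 u hu
    · simp [hψdef, indicator_of_notMem, hu]
  have hψb : ∀ u : ℝ, |ψ u| ≤ M := by
    intro u
    by_cases hu : (0:ℝ) ≤ u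
    · rw [hψeq u hu]; exact (hC u hu).trans (le_max_left _ _)
    · simp only [hψdef, indicator_of_notMem (by simpa using hu : u ∉ Ici (0:ℝ))]
      simpa using le_of_lt hM0
  have hψint : ∀ a b : ℝ, IntervalIntegrable ψ volume a b := by
    intro a b
    rw [intervalIntegrable_iff']
    refine Measure.integrableOn_of_bounded (by rw [Real.volume_interval]; exact ENNReal.ofReal_ne_top) hψm.aestronglyMeasurable (M := M) ?_
    exact ae_of_all _ fun u => by simpa using hψb u
  -- primitive H
  set H : ℝ → ℝ := fun l => ∫ u in (0:ℝ)..l, ψ u with hHdef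
  have hHcont : Continuous H := intervalIntegral.continuous_primitive hψint 0
  have hhH : ∀ l : ℝ, 0 ≤ l → h l = H l := by
    intro l hl
    rw [hh l, hHdef]
    refine intervalIntegral.integral_congr (fun u hu => ?_)
    rw [uIcc_of_le hl] at hu
    exact (hψeq u hu.1).symm
  have hH00 : H 0 = 0 := intervalIntegral.integral_same
  have hHmono : Monotone H := by
    intro a b hab
    have hadd := intervalIntegral.integral_add_adjacent_intervals (hψint 0 a) (hψint a b)
    have hpos : 0 ≤ ∫ u in a..b, ψ u :=
      intervalIntegral.integral_nonneg hab (fun u _ => hψ0 u)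
    simp only [hHdef]
    linarith [hadd]
  have hH0 : ∀ l : ℝ, 0 ≤ l → 0 ≤ H l := fun l hl => hH00 ▸ hHmono hl
  have hHle : ∀ l : ℝ, 0 ≤ l → H l ≤ M * l := by
    intro l hl
    have : H l ≤ ∫ _ in (0:ℝ)..l, M := by
      refine intervalIntegral.integral_mono_on hl (hψint 0 l)
        (intervalIntegrable_const) (fun u _ => ?_)
      exact (le_abs_self _).trans (hψb u)
    simpa [mul_comm] using this
  -- relation with lintegral
  have hHlin : ∀ l : ℝ, 0 ≤ l →
      ENNReal.ofReal (H l) = ∫⁻ u in Ioc (0:ℝ) l, ENNReal.ofReal (φ u) := by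
    intro l hl
    have h1 : H l = ∫ u in Ioc (0:ℝ) l, ψ u := intervalIntegral.integral_of_le hl
    have h2 : IntegrableOn ψ (Ioc 0 l) volume := by
      have := (intervalIntegrable_iff' (f := ψ) (a := 0) (b := l)).mp (hψint 0 l)
      exact this.mono_set (by rw [uIcc_of_le hl]; exact Ioc_subset_Icc_self)
    rw [h1, ofReal_integral_eq_lintegral_ofReal h2 (ae_of_all _ hψ0)]
    refine setLIntegral_congr_fun measurableSet_Ioc (fun u hu => ?_)
    rw [hψeq u (le_of_lt hu.1)]
  -- F := H l / l
  set F : ℝ → ℝ := fun l => H l / l with hFdef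
  have hFm : Measurable F := hHcont.measurable.div measurable_id
  have hF0 : ∀ l : ℝ, 0 ≤ l → 0 ≤ F l := fun l hl => div_nonneg (hH0 l hl) hl
  have hFleM : ∀ l : ℝ, 0 ≤ l → F l ≤ M := by
    intro l hl
    rcases eq_or_lt_of_le hl with hl' | hl'
    · simp [hFdef, ← hl', hH00]
      exact le_of_lt hM0
    · rw [hFdef]
      rw [div_le_iff₀ hl']
      exact hHle l hl
  have hFint : ∀ x : ℝ, 0 ≤ x → IntervalIntegrable F volume 0 x := by
    intro x hx
    rw [intervalIntegrable_iff']
    refine Measure.integrableOn_of_bounded (by rw [Real.volume_interval]; exact ENNReal.ofReal_ne_top) hFm.aestronglyMeasurable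
      (M := M) ?_
    rw [ae_restrict_iff' measurableSet_uIcc]
    refine ae_of_all _ fun l hl => ?_
    rw [uIcc_of_le hx] at hl
    rw [Real.norm_eq_abs, abs_of_nonneg (hF0 l hl.1)]
    exact hFleM l hl.1
  have hGF : ∀ x : ℝ, 0 ≤ x → G x = ∫ l in (0:ℝ)..x, F l := by
    intro x hx
    rw [hG x]
    refine intervalIntegral.integral_congr (fun l hl => ?_)
    rw [uIcc_of_le hx] at hl
    rw [hFdef]
    simp only []
    rw [hhH l hl.1]
  have hGnn : ∀ x : ℝ, 0 ≤ x → 0 ≤ G x := by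
    intro x hx
    rw [hGF x hx]
    exact intervalIntegral.integral_nonneg hx (fun l hl => hF0 l hl.1)
  constructor
  · -- divergence implies I ≤ 1 : contrapositive
    intro htop
    by_contra h1
    push_neg at h1
    -- find a with H a > 1
    set μ' : Measure ℝ := volume.withDensity (fun u => ENNReal.ofReal (φ u)) with hμ'
    have hμ'app : ∀ s : Set ℝ, MeasurableSet s →
        μ' s = ∫⁻ u in s, ENNReal.ofReal (φ u) := fun s hs =>
      withDensity_apply _ hs
    have hunion : (⋃ n : ℕ, Ioc (0:ℝ) (n:ℝ)) = Ioi (0:ℝ) := by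
      ext x
      simp only [mem_iUnion, mem_Ioc, mem_Ioi]
      constructor
      · rintro ⟨n, hn, _⟩; exact hn
      · intro hx
        obtain ⟨n, hn⟩ := exists_nat_ge x
        exact ⟨n, hx, hn⟩
    have hdir : Directed (· ⊆ ·) (fun n : ℕ => Ioc (0:ℝ) (n:ℝ)) := by
      intro m n
      exact ⟨max m n, Ioc_subset_Ioc le_rfl (by exact_mod_cast le_max_left m n),
        Ioc_subset_Ioc le_rfl (by exact_mod_cast le_max_right m n)⟩
    have hsup : μ' (Ioi (0:ℝ)) = ⨆ n : ℕ, μ' (Ioc (0:ℝ) (n:ℝ)) := by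
      rw [← hunion]
      exact hdir.measure_iUnion
    have h1' : 1 < ⨆ n : ℕ, μ' (Ioc (0:ℝ) (n:ℝ)) := by
      rw [← hsup, hμ'app _ measurableSet_Ioi]; exact h1
    obtain ⟨n, hn⟩ := lt_iSup_iff.mp h1'
    rw [hμ'app _ measurableSet_Ioc, ← hHlin (n:ℝ) (Nat.cast_nonneg n)] at hn
    have hcgt : 1 < H (n:ℝ) := by
      by_contra hc
      push_neg at hc
      exact absurd hn (not_lt.mpr (ENNReal.ofReal_le_one.mpr hc))
    set a : ℝ := (n:ℝ) with hadef
    have ha1 : (1:ℝ) ≤ a := by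
      by_contra hna
      push_neg at hna
      have : H a ≤ M * a := hHle a (Nat.cast_nonneg n)
      have han : n = 0 := by
        by_contra h0
        have : (1:ℝ) ≤ (n:ℝ) := by exact_mod_cast Nat.one_le_iff_ne_zero.mpr h0
        exact absurd this (not_le.mpr hna)
      rw [hadef, han] at hcgt
      simp [hH00] at hcgt
      linarith
    have ha0 : (0:ℝ) < a := lt_of_lt_of_le one_pos ha1
    set c : ℝ := H a with hcdef
    -- lower bound for G
    have hGlb : ∀ x : ℝ, a ≤ x → c * (Real.log x - Real.log a) ≤ G x := by
      intro x hx
      have hx0 : (0:ℝ) ≤ x := le_trans (le_of_lt ha0) hx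
      have hIa : IntervalIntegrable F volume 0 a := hFint a (le_of_lt ha0)
      have hIax : IntervalIntegrable F volume a x :=
        (hFint x hx0).mono_set (by
          rw [uIcc_of_le hx0, uIcc_of_le hx]
          exact Icc_subset_Icc (le_of_lt ha0) le_rfl)
      have hsplit : G x = (∫ l in (0:ℝ)..a, F l) + ∫ l in a..x, F l := by
        rw [hGF x hx0, ← intervalIntegral.integral_add_adjacent_intervals hIa hIax]
      have hp1 : 0 ≤ ∫ l in (0:ℝ)..a, F l :=
        intervalIntegral.integral_nonneg (le_of_lt ha0) (fun l hl => hF0 l hl.1)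
      have hcl : IntervalIntegrable (fun l => c / l) volume a x := by
        refine ContinuousOn.intervalIntegrable ?_
        refine ContinuousOn.div continuousOn_const continuousOn_id ?_
        intro l hl
        rw [uIcc_of_le hx] at hl
        exact ne_of_gt (lt_of_lt_of_le ha0 hl.1)
      have hp2 : (∫ l in a..x, c / l) ≤ ∫ l in a..x, F l := by
        refine intervalIntegral.integral_mono_on hx hcl hIax (fun l hl => ?_)
        have hl0 : 0 < l := lt_of_lt_of_le ha0 hl.1
        rw [hFdef]
        exact (div_le_div_iff_of_pos_right hl0).mpr (hHmono hl.1)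
      have hval : (∫ l in a..x, c / l) = c * (Real.log x - Real.log a) := by
        have : (∫ l in a..x, c / l) = c * ∫ l in a..x, 1 / l := by
          rw [← intervalIntegral.integral_const_mul]
          congr 1; ext l; ring
        rw [this, integral_one_div]
        · rw [Real.log_div (ne_of_gt (lt_of_lt_of_le ha0 hx)) (ne_of_gt ha0)]
        · intro hmem
          rw [uIcc_of_le hx] at hmem
          exact absurd hmem.1 (not_le.mpr ha0)
      linarith [hp2, hval ▸ hp2]
    -- finiteness
    have hc1 : 1 < c := hcgt
    have hfin : (∫⁻ x in Ioi (0:ℝ), ENNReal.ofReal (Real.exp (-(G x)))) < ⊤ := by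
      rw [← Ioc_union_Ioi_eq_Ioi (le_of_lt ha0),
        lintegral_union measurableSet_Ioi (Ioc_disjoint_Ioi le_rfl)]
      have hpiece1 : (∫⁻ x in Ioc (0:ℝ) a, ENNReal.ofReal (Real.exp (-(G x)))) < ⊤ := by
        calc (∫⁻ x in Ioc (0:ℝ) a, ENNReal.ofReal (Real.exp (-(G x))))
            ≤ ∫⁻ _ in Ioc (0:ℝ) a, 1 := by
              refine setLIntegral_mono' measurableSet_Ioc (fun x hx => ?_)
              rw [ENNReal.ofReal_le_one]
              exact Real.exp_le_one_iff.mpr (neg_nonpos.mpr (hGnn x (le_of_lt hx.1)))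
          _ = volume (Ioc (0:ℝ) a) := by rw [setLIntegral_const, one_mul]
          _ < ⊤ := measure_Ioc_lt_top
      have hpiece2 : (∫⁻ x in Ioi a, ENNReal.ofReal (Real.exp (-(G x)))) < ⊤ := by
        have hbound : ∀ x ∈ Ioi a,
            Real.exp (-(G x)) ≤ Real.exp (c * Real.log a) * x ^ (-c) := by
          intro x hx
          have hx' : a ≤ x := le_of_lt hx
          have hx0 : 0 < x := lt_of_lt_of_le ha0 hx'
          have := hGlb x hx'
          calc Real.exp (-(G x)) ≤ Real.exp (-(c * (Real.log x - Real.log a))) :=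
                Real.exp_le_exp.mpr (by linarith)
            _ = Real.exp (c * Real.log a) * Real.exp (Real.log x * (-c)) := by
                rw [← Real.exp_add]; ring_nf
            _ = Real.exp (c * Real.log a) * x ^ (-c) := by
                rw [Real.rpow_def_of_pos hx0]
        have hintrpow : IntegrableOn (fun x : ℝ => Real.exp (c * Real.log a) * x ^ (-c))
            (Ioi a) volume := by
          refine Integrable.const_mul ?_ _
          exact (integrableOn_Ioi_rpow_iff ha0).mpr (by linarith)
        calc (∫⁻ x in Ioi a, ENNReal.ofReal (Real.exp (-(G x))))
            ≤ ∫⁻ x in Ioi a, ENNReal.ofReal (Real.exp (c * Real.log a) * x ^ (-c)) := by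
              refine setLIntegral_mono' measurableSet_Ioi (fun x hx => ?_)
              exact ENNReal.ofReal_le_ofReal (hbound x hx)
          _ < ⊤ := hintrpow.lintegral_lt_top
      exact ENNReal.add_lt_top.mpr ⟨hpiece1, hpiece2⟩
    exact absurd htop (ne_of_lt hfin)
  · -- I ≤ 1 implies divergence
    intro hI
    have hH1 : ∀ l : ℝ, 0 ≤ l → H l ≤ 1 := by
      intro l hl
      rw [← ENNReal.ofReal_le_one, hHlin l hl]
      exact le_trans (lintegral_mono_set Ioc_subset_Ioi_self) hI
    -- upper bound for G on x ≥ 1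
    have hGub : ∀ x : ℝ, 1 ≤ x → G x ≤ M + Real.log x := by
      intro x hx
      have hx0 : (0:ℝ) ≤ x := le_trans zero_le_one hx
      have hI1 : IntervalIntegrable F volume 0 1 := hFint 1 zero_le_one
      have hI1x : IntervalIntegrable F volume 1 x :=
        (hFint x hx0).mono_set (by
          rw [uIcc_of_le hx0, uIcc_of_le hx]
          exact Icc_subset_Icc zero_le_one le_rfl)
      have hsplit : G x = (∫ l in (0:ℝ)..1, F l) + ∫ l in (1:ℝ)..x, F l := by
        rw [hGF x hx0, ← intervalIntegral.integral_add_adjacent_intervals hI1 hI1x]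
      have hp1 : (∫ l in (0:ℝ)..1, F l) ≤ M := by
        have : (∫ l in (0:ℝ)..1, F l) ≤ ∫ _ in (0:ℝ)..1, M :=
          intervalIntegral.integral_mono_on zero_le_one hI1 intervalIntegrable_const
            (fun l hl => hFleM l hl.1)
        simpa using this
      have hil : IntervalIntegrable (fun l => 1 / l) volume 1 x := by
        refine ContinuousOn.intervalIntegrable ?_
        refine ContinuousOn.div continuousOn_const continuousOn_id ?_
        intro l hl
        rw [uIcc_of_le hx] at hl
        exact ne_of_gt (lt_of_lt_of_le one_pos hl.1)
      have hp2 : (∫ l in (1:ℝ)..x, F l) ≤ Real.log x := by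
        have hle : (∫ l in (1:ℝ)..x, F l) ≤ ∫ l in (1:ℝ)..x, 1 / l := by
          refine intervalIntegral.integral_mono_on hx hI1x hil (fun l hl => ?_)
          have hl0 : 0 < l := lt_of_lt_of_le one_pos hl.1
          rw [hFdef]
          exact (div_le_div_iff_of_pos_right hl0).mpr (hH1 l (le_of_lt hl0))
        have hval : (∫ l in (1:ℝ)..x, 1 / l) = Real.log x := by
          rw [integral_one_div]
          · rw [div_one]
          · intro hmem
            rw [uIcc_of_le hx] at hmem
            exact absurd hmem.1 (not_le.mpr one_pos)
        linarith [hval ▸ hle]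
      linarith
    -- conclude divergence
    rw [← top_le_iff]
    calc (⊤ : ENNReal) = ENNReal.ofReal (Real.exp (-M)) * ∫⁻ x in Ioi (1:ℝ), ENNReal.ofReal x⁻¹ := by
          rw [aux_inv_top, ENNReal.mul_top]
          exact ne_of_gt (ENNReal.ofReal_pos.mpr (Real.exp_pos _))
      _ = ∫⁻ x in Ioi (1:ℝ), ENNReal.ofReal (Real.exp (-M)) * ENNReal.ofReal x⁻¹ := by
          exact (lintegral_const_mul _ (ENNReal.measurable_ofReal.comp measurable_inv)).symm
      _ ≤ ∫⁻ x in Ioi (1:ℝ), ENNReal.ofReal (Real.exp (-(G x))) := by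
          refine setLIntegral_mono' measurableSet_Ioi (fun x hx => ?_)
          have hx1 : (1:ℝ) < x := hx
          have hx0 : (0:ℝ) < x := lt_trans one_pos hx1
          rw [← ENNReal.ofReal_mul (le_of_lt (Real.exp_pos _))]
          refine ENNReal.ofReal_le_ofReal ?_
          have : Real.exp (-M) * x⁻¹ = Real.exp (-(M + Real.log x)) := by
            rw [neg_add, Real.exp_add, Real.exp_neg (Real.log x), Real.exp_log hx0]
          rw [this]
          exact Real.exp_le_exp.mpr (neg_le_neg (hGub x (le_of_lt hx1)))
      _ ≤ ∫⁻ x in Ioi (0:ℝ), ENNReal.ofReal (Real.exp (-(G x))) :=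
          lintegral_mono_set (Ioi_subset_Ioi zero_le_one)
end

section
/- Suppose in addition that φ is nonnegative. Then ∫_0^∞ x·exp(−G(x)) dx < +∞ if and only if ∫_0^∞ φ(u) du > 2 (the integral of φ being taken in [0,∞]). (This is the analytic content of the positive-speed criterion C_2^+ < ∞ for nonnegative excitation.) -/
open MeasureTheory Set ENNReal

/-- For bounded measurable nonnegative `φ`, with `h l = ∫_0^l φ`, `G x = ∫_0^x h(l)/l dl`:
`∫_0^∞ x·exp(-G(x)) dx < +∞` iff `∫_0^∞ φ(u) du > 2` (integral taken in `[0,∞]`). -/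
theorem stmt_3 (φ h G : ℝ → ℝ)
    (hφm : Measurable φ)
    (hφb : ∃ C : ℝ, ∀ u, 0 ≤ u → |φ u| ≤ C)
    (hφ0 : ∀ u, 0 ≤ u → 0 ≤ φ u)
    (hh : ∀ l, h l = ∫ u in (0:ℝ)..l, φ u)
    (hG : ∀ x, G x = ∫ l in (0:ℝ)..x, h l / l) :
    (∫⁻ x in Ioi (0:ℝ), ENNReal.ofReal (x * Real.exp (-(G x)))) < ⊤ ↔
      (2 : ℝ≥0∞) < ∫⁻ u in Ioi (0:ℝ), ENNReal.ofReal (φ u) := by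
  classical
  obtain ⟨C₀, hC₀⟩ := hφb
  set C : ℝ := max C₀ 0 with hCdef
  have hC0 : 0 ≤ C := le_max_right _ _
  -- the modified excitation, nonnegative and bounded everywhere
  set ψ : ℝ → ℝ := fun u => if 0 ≤ u then φ u else 0 with hψdef
  have hψm : Measurable ψ := Measurable.ite measurableSet_Ici hφm measurable_const
  have hψ0 : ∀ u, 0 ≤ ψ u := by
    intro u; by_cases hu : 0 ≤ u <;> simp [hψdef, hu, hφ0 u]
  have hψC : ∀ u, ψ u ≤ C := by
    intro u; by_cases hu : 0 ≤ u
    · simp only [hψdef, hu, if_true]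
      exact le_trans (le_abs_self _) (le_trans (hC₀ u hu) (le_max_left _ _))
    · simp [hψdef, hu, hC0]
  have hψint : ∀ a b : ℝ, IntervalIntegrable ψ volume a b := by
    intro a b
    refine (intervalIntegrable_const (c := C)).mono_fun' hψm.aestronglyMeasurable ?_
    filter_upwards with u
    rw [Real.norm_eq_abs, abs_of_nonneg (hψ0 u)]
    exact hψC u
  -- the primitive of ψ
  set H : ℝ → ℝ := fun l => ∫ u in (0:ℝ)..l, ψ u with hHdef
  have hHadd : ∀ a b : ℝ, H b = H a + ∫ u in a..b, ψ u := by
    intro a b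
    rw [hHdef]
    simp only
    rw [← intervalIntegral.integral_add_adjacent_intervals (hψint 0 a) (hψint a b)]
  have hHmono : Monotone H := by
    intro a b hab
    rw [hHadd a b]
    have : 0 ≤ ∫ u in a..b, ψ u :=
      intervalIntegral.integral_nonneg hab fun u _ => hψ0 u
    linarith
  have hHm : Measurable H := hHmono.measurable
  have hH0 : H 0 = 0 := intervalIntegral.integral_same
  have hHnn : ∀ l : ℝ, 0 ≤ l → 0 ≤ H l := fun l hl => hH0 ▸ hHmono hl
  have hHeqh : ∀ l : ℝ, 0 ≤ l → h l = H l := by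
    intro l hl
    rw [hh l, hHdef]
    refine intervalIntegral.integral_congr fun u hu => ?_
    rw [uIcc_of_le hl] at hu
    simp [hψdef, hu.1]
  -- H l ≤ C * l for l ≥ 0
  have hHle : ∀ l : ℝ, 0 ≤ l → H l ≤ C * l := by
    intro l hl
    have : H l ≤ ∫ _ in (0:ℝ)..l, C := by
      refine intervalIntegral.integral_mono_on hl (hψint 0 l) intervalIntegrable_const
        fun u _ => hψC u
    simpa [mul_comm] using this
  -- the density g
  set g : ℝ → ℝ := fun l => H l / l with hgdef
  have hgnn : ∀ l : ℝ, 0 ≤ l → 0 ≤ g l := by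
    intro l hl
    exact div_nonneg (hHnn l hl) hl
  have hgbound : ∀ l : ℝ, 0 ≤ l → |g l| ≤ C := by
    intro l hl
    rcases eq_or_lt_of_le hl with rfl | hl'
    · simp [hgdef, hC0]
    · rw [abs_of_nonneg (hgnn l hl)]
      rw [hgdef]
      simp only
      rw [div_le_iff₀ hl']
      exact hHle l hl
  have hgm : Measurable g := hHm.div measurable_id
  have hgint : ∀ a b : ℝ, 0 ≤ a → 0 ≤ b → IntervalIntegrable g volume a b := by
    intro a b ha hb
    refine (intervalIntegrable_const (c := C)).mono_fun' hgm.aestronglyMeasurable ?_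
    filter_upwards [ae_restrict_mem measurableSet_uIoc] with u hu
    have hu0 : 0 ≤ u := le_of_lt (lt_of_le_of_lt (le_min ha hb) hu.1)
    rw [Real.norm_eq_abs]
    exact hgbound u hu0
  -- identification of G with the primitive of g on [0, ∞)
  have hGeq : ∀ x : ℝ, 0 ≤ x → G x = ∫ l in (0:ℝ)..x, g l := by
    intro x hx
    rw [hG x]
    refine intervalIntegral.integral_congr fun l hl => ?_
    rw [uIcc_of_le hx] at hl
    show h l / l = H l / l
    rw [hHeqh l hl.1]
  have hGadd : ∀ a b : ℝ, 0 ≤ a → 0 ≤ b → G b = G a + ∫ l in a..b, g l := by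
    intro a b ha hb
    rw [hGeq a ha, hGeq b hb,
      ← intervalIntegral.integral_add_adjacent_intervals (hgint 0 a le_rfl ha) (hgint a b ha hb)]
  have hGnn : ∀ x : ℝ, 0 ≤ x → 0 ≤ G x := by
    intro x hx
    rw [hGeq x hx]
    exact intervalIntegral.integral_nonneg hx fun l hl => hgnn l hl.1
  -- link between H and the lintegral of φ
  have hkey : ∀ l : ℝ, 0 ≤ l →
      ENNReal.ofReal (H l) = ∫⁻ u in Ioc (0:ℝ) l, ENNReal.ofReal (φ u) := by
    intro l hl
    have hint : IntegrableOn ψ (Ioc (0:ℝ) l) := (hψint 0 l).1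
    rw [hHdef]
    simp only
    rw [intervalIntegral.integral_of_le hl,
      ofReal_integral_eq_lintegral_ofReal hint (Filter.Eventually.of_forall fun u => hψ0 u)]
    refine setLIntegral_congr_fun measurableSet_Ioc
      (fun u hu => ?_)
    simp [hψdef, hu.1.le]
  -- the total integral of φ as a supremum
  have hsup : (∫⁻ u in Ioi (0:ℝ), ENNReal.ofReal (φ u)) =
      ⨆ n : ℕ, ∫⁻ u in Ioc (0:ℝ) (n:ℝ), ENNReal.ofReal (φ u) := by
    have hU : (⋃ n : ℕ, Ioc (0:ℝ) (n:ℝ)) = Ioi (0:ℝ) := by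
      ext x
      simp only [mem_iUnion, mem_Ioc, mem_Ioi]
      constructor
      · rintro ⟨n, hn1, _⟩; exact hn1
      · intro hx
        obtain ⟨n, hn⟩ := exists_nat_ge x
        exact ⟨n, hx, hn⟩
    rw [← hU, setLIntegral_iUnion_of_directed _
      (Monotone.directed_le fun m n hmn => Ioc_subset_Ioc_right (by exact_mod_cast hmn))]
  constructor
  · -- finite integral ⇒ total excitation > 2
    intro hfin
    by_contra hle2
    push_neg at hle2
    have hH2 : ∀ l : ℝ, 0 ≤ l → H l ≤ 2 := by
      intro l hl
      have h1 : ENNReal.ofReal (H l) ≤ 2 := by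
        rw [hkey l hl]
        exact le_trans (lintegral_mono_set Ioc_subset_Ioi_self) hle2
      have h2 : ENNReal.ofReal (H l) ≤ ENNReal.ofReal 2 := by
        rwa [ENNReal.ofReal_ofNat]
      exact (ENNReal.ofReal_le_ofReal_iff (by norm_num)).mp h2
    have hGub : ∀ x : ℝ, 1 ≤ x → G x ≤ G 1 + 2 * Real.log x := by
      intro x hx
      have h0x : (0:ℝ) < 1 := one_pos
      rw [hGadd 1 x zero_le_one (zero_le_one.trans hx)]
      have hii : IntervalIntegrable (fun l : ℝ => 2 / l) volume 1 x := by
        apply ContinuousOn.intervalIntegrable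
        apply ContinuousOn.div continuousOn_const continuousOn_id
        intro l hl
        rw [uIcc_of_le hx] at hl
        exact ne_of_gt (lt_of_lt_of_le one_pos hl.1)
      have hmono : ∫ l in (1:ℝ)..x, g l ≤ ∫ l in (1:ℝ)..x, 2 / l := by
        refine intervalIntegral.integral_mono_on hx
          (hgint 1 x zero_le_one (zero_le_one.trans hx)) hii fun l hl => ?_
        have hl0 : 0 < l := lt_of_lt_of_le one_pos hl.1
        show H l / l ≤ 2 / l
        gcongr
        exact hH2 l hl0.le
      have hval : ∫ l in (1:ℝ)..x, 2 / l = 2 * Real.log x := by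
        have : ∀ l : ℝ, 2 / l = 2 * (1 / l) := fun l => by ring
        simp_rw [this]
        rw [intervalIntegral.integral_const_mul, integral_one_div]
        · rw [div_one]
        · intro hmem
          rw [uIcc_of_le hx] at hmem
          exact absurd hmem.1 (by norm_num)
      linarith
    -- lower bound on the integrand for x ≥ 1
    have hlow : ∀ x : ℝ, 1 ≤ x →
        Real.exp (-(G 1)) * x⁻¹ ≤ x * Real.exp (-(G x)) := by
      intro x hx
      have hx0 : (0:ℝ) < x := lt_of_lt_of_le one_pos hx
      have h1 : Real.exp (-(G x)) ≥ Real.exp (-(G 1) - 2 * Real.log x) := by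
        apply Real.exp_le_exp.mpr
        have := hGub x hx
        linarith
      have h2 : Real.exp (-(G 1) - 2 * Real.log x) =
          Real.exp (-(G 1)) / (x ^ (2:ℕ)) := by
        rw [Real.exp_sub]
        congr 1
        rw [mul_comm, ← Real.rpow_natCast x 2, Real.rpow_def_of_pos hx0]
        norm_num
      calc Real.exp (-(G 1)) * x⁻¹
          = x * (Real.exp (-(G 1)) / (x ^ (2:ℕ))) := by
            field_simp
        _ ≤ x * Real.exp (-(G x)) := by
            rw [← h2]
            exact mul_le_mul_of_nonneg_left h1 hx0.le
    -- hence the lintegral over Ioi 1 of c/x is finite, contradiction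
    have hfin1 : (∫⁻ x in Ioi (1:ℝ),
        ENNReal.ofReal (Real.exp (-(G 1)) * x⁻¹)) < ⊤ := by
      refine lt_of_le_of_lt ?_ (lt_of_le_of_lt
        (lintegral_mono_set (Ioi_subset_Ioi zero_le_one)) hfin)
      refine lintegral_mono_ae ?_
      filter_upwards [ae_restrict_mem measurableSet_Ioi] with x hx
      exact ENNReal.ofReal_le_ofReal (hlow x (le_of_lt hx))
    have hint1 : IntegrableOn (fun x : ℝ => Real.exp (-(G 1)) * x⁻¹) (Ioi (1:ℝ)) := by
      constructor
      · exact (measurable_const.mul measurable_inv).aestronglyMeasurable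
      · rw [hasFiniteIntegral_iff_ofReal]
        · exact hfin1
        · filter_upwards [ae_restrict_mem measurableSet_Ioi] with x hx
          have hx0 : (0:ℝ) < x := lt_trans one_pos hx
          positivity
    have hint2 : IntegrableOn (fun x : ℝ => x ^ (-1:ℝ)) (Ioi (1:ℝ)) := by
      have h3 : IntegrableOn
          (fun x : ℝ => (Real.exp (-(G 1)))⁻¹ * (Real.exp (-(G 1)) * x⁻¹))
          (Ioi (1:ℝ)) := hint1.const_mul _
      refine h3.congr_fun (fun x hx => ?_) measurableSet_Ioi
      have hx0 : (0:ℝ) < x := lt_trans one_pos hx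
      rw [Real.rpow_neg_one]
      field_simp
    rw [integrableOn_Ioi_rpow_iff one_pos] at hint2
    norm_num at hint2
  · -- total excitation > 2 ⇒ finite integral
    intro h2
    rw [hsup, lt_iSup_iff] at h2
    obtain ⟨n, hn⟩ := h2
    have hn0 : n ≠ 0 := by
      rintro rfl
      simp at hn
    set L : ℝ := (n : ℝ) with hLdef
    have hL1 : (1:ℝ) ≤ L := by
      rw [hLdef]
      exact_mod_cast Nat.one_le_iff_ne_zero.mpr hn0
    have hL0 : (0:ℝ) < L := lt_of_lt_of_le one_pos hL1
    have ha2 : 2 < H L := by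
      have h1 : (2:ℝ≥0∞) < ENNReal.ofReal (H L) := by
        rw [hkey L hL0.le]; exact hn
      have h2' : ENNReal.ofReal 2 < ENNReal.ofReal (H L) := by
        rwa [ENNReal.ofReal_ofNat]
      exact (ENNReal.ofReal_lt_ofReal_iff_of_nonneg (by norm_num)).mp h2'
    set a : ℝ := H L with hadef
    have ha0 : 0 < a := lt_trans two_pos ha2
    -- lower bound on G on [L, ∞)
    have hGlb : ∀ x : ℝ, L ≤ x → a * (Real.log x - Real.log L) ≤ G x := by
      intro x hx
      have hx0 : (0:ℝ) < x := lt_of_lt_of_le hL0 hx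
      rw [hGadd L x hL0.le hx0.le]
      have hii : IntervalIntegrable (fun l : ℝ => a / l) volume L x := by
        apply ContinuousOn.intervalIntegrable
        apply ContinuousOn.div continuousOn_const continuousOn_id
        intro l hl
        rw [uIcc_of_le hx] at hl
        exact ne_of_gt (lt_of_lt_of_le hL0 hl.1)
      have hmono : ∫ l in L..x, a / l ≤ ∫ l in L..x, g l := by
        refine intervalIntegral.integral_mono_on hx hii
          (hgint L x hL0.le hx0.le) fun l hl => ?_
        have hl0 : 0 < l := lt_of_lt_of_le hL0 hl.1
        show a / l ≤ H l / l
        gcongr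
        exact hHmono hl.1
      have hval : ∫ l in L..x, a / l = a * (Real.log x - Real.log L) := by
        have : ∀ l : ℝ, a / l = a * (1 / l) := fun l => by ring
        simp_rw [this]
        rw [intervalIntegral.integral_const_mul, integral_one_div]
        · rw [Real.log_div (ne_of_gt hx0) (ne_of_gt hL0)]
        · intro hmem
          rw [uIcc_of_le hx] at hmem
          exact absurd hmem.1 (not_le.mpr hL0)
      have hGL : 0 ≤ G L := hGnn L hL0.le
      linarith
    -- upper bound on the integrand for x > L
    have hbound : ∀ x : ℝ, L < x → x * Real.exp (-(G x)) ≤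
        Real.exp (a * Real.log L) * x ^ (1 - a) := by
      intro x hx
      have hx0 : (0:ℝ) < x := lt_trans hL0 hx
      have h1 : Real.exp (-(G x)) ≤
          Real.exp (a * Real.log L) * Real.exp (-(a * Real.log x)) := by
        rw [← Real.exp_add]
        apply Real.exp_le_exp.mpr
        have := hGlb x hx.le
        nlinarith
      have h2 : Real.exp (-(a * Real.log x)) = x ^ (-a : ℝ) := by
        rw [Real.rpow_def_of_pos hx0]
        ring_nf
      have h3 : x * x ^ (-a : ℝ) = x ^ (1 - a : ℝ) := by
        rw [show (1 - a : ℝ) = 1 + (-a) by ring, Real.rpow_add hx0,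
          Real.rpow_one]
      calc x * Real.exp (-(G x))
          ≤ x * (Real.exp (a * Real.log L) * Real.exp (-(a * Real.log x))) :=
            mul_le_mul_of_nonneg_left h1 hx0.le
        _ = Real.exp (a * Real.log L) * (x * x ^ (-a : ℝ)) := by rw [h2]; ring
        _ = Real.exp (a * Real.log L) * x ^ (1 - a : ℝ) := by rw [h3]
    -- split the integral
    rw [← Ioc_union_Ioi_eq_Ioi hL0.le,
      lintegral_union measurableSet_Ioi (Ioc_disjoint_Ioi le_rfl)]
    refine ENNReal.add_lt_top.mpr ⟨?_, ?_⟩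
    · -- bounded part
      have hb : ∀ x ∈ Ioc (0:ℝ) L, x * Real.exp (-(G x)) ≤ L := by
        intro x hx
        have hGx : 0 ≤ G x := hGnn x hx.1.le
        have : Real.exp (-(G x)) ≤ 1 := Real.exp_le_one_iff.mpr (by linarith)
        calc x * Real.exp (-(G x)) ≤ x * 1 :=
              mul_le_mul_of_nonneg_left this hx.1.le
          _ ≤ L := by rw [mul_one]; exact hx.2
      calc ∫⁻ x in Ioc (0:ℝ) L, ENNReal.ofReal (x * Real.exp (-(G x)))
          ≤ ∫⁻ _ in Ioc (0:ℝ) L, ENNReal.ofReal L := by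
            refine lintegral_mono_ae ?_
            filter_upwards [ae_restrict_mem measurableSet_Ioc] with x hx
            exact ENNReal.ofReal_le_ofReal (hb x hx)
        _ = ENNReal.ofReal L * volume (Ioc (0:ℝ) L) := setLIntegral_const _ _
        _ < ⊤ := by
            rw [Real.volume_Ioc]
            exact ENNReal.mul_lt_top ENNReal.ofReal_lt_top ENNReal.ofReal_lt_top
    · -- tail part: comparison with an integrable power
      have hpint : IntegrableOn (fun x : ℝ => x ^ (1 - a : ℝ)) (Ioi L) :=
        (integrableOn_Ioi_rpow_iff hL0).mpr (by linarith)
      have hKint : IntegrableOn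
          (fun x : ℝ => Real.exp (a * Real.log L) * x ^ (1 - a : ℝ)) (Ioi L) :=
        hpint.const_mul _
      calc ∫⁻ x in Ioi L, ENNReal.ofReal (x * Real.exp (-(G x)))
          ≤ ∫⁻ x in Ioi L,
              ENNReal.ofReal (Real.exp (a * Real.log L) * x ^ (1 - a : ℝ)) := by
            refine lintegral_mono_ae ?_
            filter_upwards [ae_restrict_mem measurableSet_Ioi] with x hx
            exact ENNReal.ofReal_le_ofReal (hbound x hx)
        _ < ⊤ := hKint.lintegral_lt_top
end

section
/- Suppose in addition that there is M > 0 with φ(u) = 0 for all u ≥ M, and set δ = ∫_0^∞ φ(u) du. Then ∫_0^∞ x·exp(−G(x)) dx < +∞ if and only if δ > 2, and ∫_0^∞ x·exp(+G(x)) dx < +∞ if and only if δ < −2. (This is the analytic content of the nonzero-speed criterion: C_2^+ or C_2^- is finite exactly when δ ∉ [−2,2].) -/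
open MeasureTheory Set

/-- A measurable function bounded everywhere is interval integrable. -/
lemma aux_intervalIntegrable {f : ℝ → ℝ} (hf : Measurable f) {C : ℝ}
    (hC : ∀ x, |f x| ≤ C) (a b : ℝ) : IntervalIntegrable f volume a b := by
  rw [intervalIntegrable_iff]
  have hconst : IntegrableOn (fun _ : ℝ => C) (Set.uIoc a b) volume := by
    refine integrableOn_const ?_
    exact measure_Ioc_lt_top.ne
  exact hconst.mono' hf.aestronglyMeasurable.restrict
    (Filter.Eventually.of_forall fun x => by simpa [Real.norm_eq_abs] using hC x)

/-- Key analytic lemma: for continuous `F` equal to `A + β log x` for `x ≥ M`,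
finiteness of `∫_0^∞ x e^{F x} dx` is equivalent to `β < -2`. -/
lemma aux_key {F : ℝ → ℝ} (hF : Continuous F) {M A β : ℝ} (hM : 0 < M)
    (hFx : ∀ x, M ≤ x → F x = A + β * Real.log x) :
    (∫⁻ x in Ioi (0:ℝ), ENNReal.ofReal (x * Real.exp (F x))) < ⊤ ↔ β < -2 := by
  have hsplit : Ioc (0:ℝ) M ∪ Ioi M = Ioi 0 := Ioc_union_Ioi_eq_Ioi hM.le
  have hdisj : Disjoint (Ioc (0:ℝ) M) (Ioi M) := Ioc_disjoint_Ioi le_rfl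
  have hcontf : Continuous fun x : ℝ => x * Real.exp (F x) :=
    continuous_id.mul (Real.continuous_exp.comp hF)
  rw [← hsplit, lintegral_union measurableSet_Ioi hdisj]
  -- first part is finite
  obtain ⟨K, hK⟩ := (isCompact_Icc (a := (0:ℝ)) (b := M)).exists_bound_of_continuousOn
    hcontf.continuousOn
  have h1 : (∫⁻ x in Ioc (0:ℝ) M, ENNReal.ofReal (x * Real.exp (F x))) < ⊤ := by
    have hmono : (∫⁻ x in Ioc (0:ℝ) M, ENNReal.ofReal (x * Real.exp (F x)))
        ≤ ∫⁻ _ in Ioc (0:ℝ) M, ENNReal.ofReal K := by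
      refine setLIntegral_mono measurable_const fun x hx => ?_
      refine ENNReal.ofReal_le_ofReal ?_
      exact le_trans (le_abs_self _)
        (by rw [← Real.norm_eq_abs]; exact hK x (Ioc_subset_Icc_self hx))
    refine lt_of_le_of_lt hmono ?_
    rw [setLIntegral_const]
    exact ENNReal.mul_lt_top ENNReal.ofReal_lt_top measure_Ioc_lt_top
  rw [ENNReal.add_lt_top]
  have hMne : M ≠ 0 := ne_of_gt hM
  -- rewrite the integrand on `Ioi M`
  have heq : (∫⁻ x in Ioi M, ENNReal.ofReal (x * Real.exp (F x)))
      = ∫⁻ x in Ioi M, ENNReal.ofReal (Real.exp A * x ^ (β + 1)) := by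
    refine setLIntegral_congr_fun measurableSet_Ioi
      (fun x hx => ?_)
    have hx0 : (0:ℝ) < x := lt_trans hM hx
    rw [hFx x hx.le, Real.exp_add, Real.rpow_add_one hx0.ne',
      Real.rpow_def_of_pos hx0]
    ring_nf
  constructor
  · rintro ⟨-, h2⟩
    rw [heq] at h2
    have hmeas : AEStronglyMeasurable (fun x : ℝ => Real.exp A * x ^ (β + 1))
        (volume.restrict (Ioi M)) := by
      refine ContinuousOn.aestronglyMeasurable ?_ measurableSet_Ioi
      intro x hx
      exact (continuousAt_const.mul (Real.continuousAt_rpow_const x _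
        (Or.inl (ne_of_gt (lt_trans hM hx))))).continuousWithinAt
    have hpos : 0 ≤ᵐ[volume.restrict (Ioi M)] fun x : ℝ => Real.exp A * x ^ (β + 1) := by
      refine (ae_restrict_iff' measurableSet_Ioi).2 (Filter.Eventually.of_forall fun x hx => ?_)
      exact mul_nonneg (Real.exp_pos A).le (Real.rpow_nonneg (le_of_lt (lt_trans hM hx)) _)
    have hint : IntegrableOn (fun x : ℝ => Real.exp A * x ^ (β + 1)) (Ioi M) volume :=
      (lintegral_ofReal_ne_top_iff_integrable hmeas hpos).1 h2.ne
    have : IntegrableOn (fun x : ℝ => x ^ (β + 1)) (Ioi M) volume := by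
      have := (integrable_smul_iff (c := Real.exp A) (Real.exp_ne_zero A)
        (fun x : ℝ => x ^ (β + 1))).1 (by exact hint)
      exact this
    have := (integrableOn_Ioi_rpow_iff hM).1 this
    linarith
  · intro hβ
    refine ⟨h1, ?_⟩
    rw [heq]
    have hint : IntegrableOn (fun x : ℝ => x ^ (β + 1)) (Ioi M) volume :=
      (integrableOn_Ioi_rpow_iff hM).2 (by linarith)
    have hint2 : IntegrableOn (fun x : ℝ => Real.exp A * x ^ (β + 1)) (Ioi M) volume :=
      hint.const_mul _
    have hmeas : AEStronglyMeasurable (fun x : ℝ => Real.exp A * x ^ (β + 1))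
        (volume.restrict (Ioi M)) := by
      refine ContinuousOn.aestronglyMeasurable ?_ measurableSet_Ioi
      intro x hx
      exact (continuousAt_const.mul (Real.continuousAt_rpow_const x _
        (Or.inl (ne_of_gt (lt_trans hM hx))))).continuousWithinAt
    have hpos : 0 ≤ᵐ[volume.restrict (Ioi M)] fun x : ℝ => Real.exp A * x ^ (β + 1) := by
      refine (ae_restrict_iff' measurableSet_Ioi).2 (Filter.Eventually.of_forall fun x hx => ?_)
      exact mul_nonneg (Real.exp_pos A).le (Real.rpow_nonneg (le_of_lt (lt_trans hM hx)) _)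
    exact lt_top_iff_ne_top.2 ((lintegral_ofReal_ne_top_iff_integrable hmeas hpos).2 hint2)

/-- For bounded measurable `φ` vanishing beyond `M`, with `δ = ∫_0^∞ φ(u) du`,
`h l = ∫_0^l φ`, `G x = ∫_0^x h(l)/l dl`:
`∫_0^∞ x·exp(-G(x)) dx < +∞` iff `δ > 2`, and `∫_0^∞ x·exp(+G(x)) dx < +∞` iff `δ < -2`. -/
theorem stmt_4 (φ h G : ℝ → ℝ)
    (hφm : Measurable φ)
    (hφb : ∃ C : ℝ, ∀ u, 0 ≤ u → |φ u| ≤ C)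
    (M : ℝ) (hM : 0 < M) (hφM : ∀ u, M ≤ u → φ u = 0)
    (δ : ℝ) (hδ : δ = ∫ u in Ioi (0:ℝ), φ u)
    (hh : ∀ l, h l = ∫ u in (0:ℝ)..l, φ u)
    (hG : ∀ x, G x = ∫ l in (0:ℝ)..x, h l / l) :
    ((∫⁻ x in Ioi (0:ℝ), ENNReal.ofReal (x * Real.exp (-(G x)))) < ⊤ ↔ 2 < δ) ∧
    ((∫⁻ x in Ioi (0:ℝ), ENNReal.ofReal (x * Real.exp (G x))) < ⊤ ↔ δ < -2) := by
  obtain ⟨C, hC⟩ := hφb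
  have hC0 : 0 ≤ C := le_trans (abs_nonneg _) (hC 0 le_rfl)
  set ψ : ℝ → ℝ := (Ici (0:ℝ)).indicator φ with hψdef
  have hψm : Measurable ψ := hφm.indicator measurableSet_Ici
  have hψb : ∀ u, |ψ u| ≤ C := by
    intro u
    by_cases hu : u ∈ Ici (0:ℝ)
    · rw [hψdef, indicator_of_mem hu]; exact hC u hu
    · rw [hψdef, indicator_of_notMem hu]; simpa using hC0
  have hψint : ∀ a b, IntervalIntegrable ψ volume a b :=
    aux_intervalIntegrable hψm hψb
  set H : ℝ → ℝ := fun l => ∫ u in (0:ℝ)..l, ψ u with hHdef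
  have hHcont : Continuous H := intervalIntegral.continuous_primitive hψint 0
  have hHh : ∀ l, 0 ≤ l → H l = h l := by
    intro l hl
    rw [hHdef, hh]
    refine intervalIntegral.integral_congr fun u hu => ?_
    rw [uIcc_of_le hl] at hu
    exact indicator_of_mem hu.1 φ
  -- `δ = H M`
  have hδM : δ = H M := by
    have h1 : (∫ u in Ioi (0:ℝ), φ u) = ∫ u in Ioi (0:ℝ), (Ioc (0:ℝ) M).indicator φ u := by
      refine setIntegral_congr_fun measurableSet_Ioi fun u hu => ?_
      by_cases huM : u ≤ M
      · rw [indicator_of_mem (mem_Ioc.2 ⟨hu, huM⟩)]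
      · rw [indicator_of_notMem (fun hmem => huM hmem.2), hφM u (le_of_not_ge huM)]
    have h2 : (∫ u in Ioi (0:ℝ), (Ioc (0:ℝ) M).indicator φ u) = ∫ u in Ioc (0:ℝ) M, φ u := by
      rw [setIntegral_indicator measurableSet_Ioc]
      congr 1
      rw [inter_eq_self_of_subset_right Ioc_subset_Ioi_self]
    rw [hδ, h1, h2, hHh M hM.le, hh, intervalIntegral.integral_of_le hM.le]
  -- `H` is constant `δ` beyond `M`
  have hHM : ∀ l, M ≤ l → H l = δ := by
    intro l hl
    have hadd : H M + (∫ u in M..l, ψ u) = H l :=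
      intervalIntegral.integral_add_adjacent_intervals (hψint 0 M) (hψint M l)
    have hzero : (∫ u in M..l, ψ u) = 0 := by
      rw [intervalIntegral.integral_congr (g := fun _ => (0:ℝ)) ?_,
        intervalIntegral.integral_zero]
      intro u hu
      rw [uIcc_of_le hl] at hu
      have hu0 : (0:ℝ) ≤ u := le_trans hM.le hu.1
      rw [hψdef]
      simp only [indicator_of_mem (mem_Ici.2 hu0)]
      exact hφM u hu.1
    rw [← hadd, hzero, add_zero, hδM]
  -- the integrand of `G`
  set g : ℝ → ℝ := fun l => H l / l with hgdef
  have hgm : Measurable g := hHcont.measurable.div measurable_id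
  have hHb : ∀ l, |H l| ≤ C * |l| := by
    intro l
    have := intervalIntegral.norm_integral_le_of_norm_le_const
      (f := ψ) (a := 0) (b := l) (C := C) fun u _ => by simpa [Real.norm_eq_abs] using hψb u
    simpa [Real.norm_eq_abs] using this
  have hgb : ∀ l, |g l| ≤ C := by
    intro l
    rcases eq_or_ne l 0 with rfl | hl
    · simp [hgdef, hC0]
    · rw [hgdef]
      simp only [abs_div]
      rw [div_le_iff₀ (abs_pos.2 hl)]
      exact hHb l
  have hgint : ∀ a b, IntervalIntegrable g volume a b := aux_intervalIntegrable hgm hgb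
  set G₁ : ℝ → ℝ := fun x => ∫ l in (0:ℝ)..x, g l with hG₁def
  have hG₁cont : Continuous G₁ := intervalIntegral.continuous_primitive hgint 0
  have hGG₁ : ∀ x, 0 ≤ x → G₁ x = G x := by
    intro x hx
    rw [hG₁def, hG x]
    refine intervalIntegral.integral_congr fun l hl => ?_
    rw [uIcc_of_le hx] at hl
    rw [hgdef]
    simp only
    rw [hHh l hl.1]
  -- formula for `G₁` beyond `M`
  set A : ℝ := G₁ M - δ * Real.log M with hAdef
  have hform : ∀ x, M ≤ x → G₁ x = A + δ * Real.log x := by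
    intro x hx
    have hadd : G₁ M + (∫ l in M..x, g l) = G₁ x :=
      intervalIntegral.integral_add_adjacent_intervals (hgint 0 M) (hgint M x)
    have hcongr : (∫ l in M..x, g l) = ∫ l in M..x, δ * l⁻¹ := by
      refine intervalIntegral.integral_congr fun l hl => ?_
      rw [uIcc_of_le hx] at hl
      rw [hgdef]
      simp only
      rw [hHM l hl.1, div_eq_mul_inv]
    have hnotmem : (0:ℝ) ∉ Set.uIcc M x := by
      rw [uIcc_of_le hx]
      intro hmem
      exact absurd hmem.1 (not_le.2 hM)
    have hinv : (∫ l in M..x, l⁻¹) = Real.log (x / M) := integral_inv hnotmem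
    have hx0 : (0:ℝ) < x := lt_of_lt_of_le hM hx
    rw [← hadd, hcongr, intervalIntegral.integral_const_mul, hinv,
      Real.log_div hx0.ne' hM.ne', hAdef]
    ring
  constructor
  · have hcongr : (∫⁻ x in Ioi (0:ℝ), ENNReal.ofReal (x * Real.exp (-(G x))))
        = ∫⁻ x in Ioi (0:ℝ), ENNReal.ofReal (x * Real.exp (-(G₁ x))) := by
      refine setLIntegral_congr_fun measurableSet_Ioi
        (fun x hx => ?_)
      rw [hGG₁ x (le_of_lt hx)]
    rw [hcongr]
    have hkey := aux_key (F := fun x => -(G₁ x)) hG₁cont.neg (M := M) (A := -A) (β := -δ) hM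
      (fun x hx => by rw [hform x hx]; ring)
    rw [hkey]
    constructor <;> intro <;> linarith
  · have hcongr : (∫⁻ x in Ioi (0:ℝ), ENNReal.ofReal (x * Real.exp (G x)))
        = ∫⁻ x in Ioi (0:ℝ), ENNReal.ofReal (x * Real.exp (G₁ x)) := by
      refine setLIntegral_congr_fun measurableSet_Ioi
        (fun x hx => ?_)
      rw [hGG₁ x (le_of_lt hx)]
    rw [hcongr]
    exact aux_key (F := G₁) hG₁cont (M := M) (A := A) (β := δ) hM hform
end

section
/- If ∫_0^∞ x·exp(−G(x)) dx < +∞, then ∫_1^∞ x^{-1}·exp(G(x)) dx = +∞. (Equivalently: if the invariant density π(x) = c·exp(−G(x)) is a probability density with finite mean, then the scale function s satisfies lim_{x→∞} s(x) = +∞.) -/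
open MeasureTheory Set

/-- For bounded measurable `φ`, with `h l = ∫_0^l φ`, `G x = ∫_0^x h(l)/l dl`:
if `∫_0^∞ x·exp(-G(x)) dx < +∞` then `∫_1^∞ x⁻¹·exp(G(x)) dx = +∞`. -/
theorem stmt_6 (φ h G : ℝ → ℝ)
    (hφm : Measurable φ)
    (hφb : ∃ C : ℝ, ∀ u, 0 ≤ u → |φ u| ≤ C)
    (hh : ∀ l, h l = ∫ u in (0:ℝ)..l, φ u)
    (hG : ∀ x, G x = ∫ l in (0:ℝ)..x, h l / l)
    (hfin : (∫⁻ x in Ioi (0:ℝ), ENNReal.ofReal (x * Real.exp (-(G x)))) < ⊤) :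
    (∫⁻ x in Ioi (1:ℝ), ENNReal.ofReal (x⁻¹ * Real.exp (G x))) = ⊤ := by
  obtain ⟨C, hC⟩ := hφb
  have hC0 : 0 ≤ C := le_trans (abs_nonneg _) (hC 0 le_rfl)
  -- truncated φ
  set φ' : ℝ → ℝ := fun u => if 0 ≤ u then φ u else 0 with hφ'def
  have hφ'm : Measurable φ' := Measurable.ite measurableSet_Ici hφm measurable_const
  have hφ'b : ∀ u, |φ' u| ≤ C := by
    intro u
    by_cases hu : 0 ≤ u
    · simp only [hφ'def, if_pos hu]; exact hC u hu
    · simp only [hφ'def, if_neg hu, abs_zero]; exact hC0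
  have hφ'int : ∀ a b : ℝ, IntervalIntegrable φ' volume a b := by
    intro a b
    rw [intervalIntegrable_iff]
    apply Measure.integrableOn_of_bounded (M := C) measure_Ioc_lt_top.ne
      hφ'm.aestronglyMeasurable
    filter_upwards with u
    simpa [Real.norm_eq_abs] using hφ'b u
  set h' : ℝ → ℝ := fun l => ∫ u in (0:ℝ)..l, φ' u with hh'def
  have hh'cont : Continuous h' := intervalIntegral.continuous_primitive hφ'int 0
  have hh'eq : ∀ l : ℝ, 0 ≤ l → h l = h' l := by
    intro l hl
    rw [hh l, hh'def]
    apply intervalIntegral.integral_congr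
    intro u hu
    rw [uIcc_of_le hl] at hu
    simp only [hφ'def, if_pos hu.1]
  have hh'bnd : ∀ l : ℝ, |h' l| ≤ C * |l| := by
    intro l
    have := intervalIntegral.norm_integral_le_of_norm_le_const
      (f := φ') (a := 0) (b := l) (C := C) ?_
    · simpa [Real.norm_eq_abs] using this
    · intro u _; simpa [Real.norm_eq_abs] using hφ'b u
  set k : ℝ → ℝ := fun l => h' l / l with hkdef
  have hkm : Measurable k := hh'cont.measurable.div measurable_id
  have hkb : ∀ l, |k l| ≤ C := by
    intro l
    by_cases hl : l = 0
    · simp [hkdef, hl, hC0]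
    · rw [hkdef]
      rw [abs_div]
      rw [div_le_iff₀ (abs_pos.mpr hl)]
      exact hh'bnd l
  have hkint : ∀ a b : ℝ, IntervalIntegrable k volume a b := by
    intro a b
    rw [intervalIntegrable_iff]
    apply Measure.integrableOn_of_bounded (M := C) measure_Ioc_lt_top.ne
      hkm.aestronglyMeasurable
    filter_upwards with u
    simpa [Real.norm_eq_abs] using hkb u
  set G' : ℝ → ℝ := fun x => ∫ l in (0:ℝ)..x, k l with hG'def
  have hG'cont : Continuous G' := intervalIntegral.continuous_primitive hkint 0
  have hGeq : ∀ x : ℝ, 0 ≤ x → G x = G' x := by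
    intro x hx
    rw [hG x, hG'def]
    apply intervalIntegral.integral_congr
    intro l hl
    rw [uIcc_of_le hx] at hl
    show h l / l = h' l / l
    rw [hh'eq l hl.1]
  -- the two lintegrands
  set f : ℝ → ENNReal := fun x => ENNReal.ofReal (x * Real.exp (-(G x))) with hfdef
  set g : ℝ → ENNReal := fun x => ENNReal.ofReal (x⁻¹ * Real.exp (G x)) with hgdef
  have hfae : f =ᵐ[volume.restrict (Ioi (1:ℝ))]
      (fun x => ENNReal.ofReal (x * Real.exp (-(G' x)))) := by
    filter_upwards [ae_restrict_mem measurableSet_Ioi] with x hx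
    rw [hfdef]; simp only; rw [hGeq x (le_of_lt (lt_trans one_pos hx))]
  have hfm : AEMeasurable f (volume.restrict (Ioi (1:ℝ))) := by
    refine AEMeasurable.congr ?_ hfae.symm
    exact (ENNReal.measurable_ofReal.comp
      ((measurable_id.mul ((hG'cont.neg.measurable).exp)))).aemeasurable
  by_contra hne
  have hglt : (∫⁻ x in Ioi (1:ℝ), g x) < ⊤ := lt_top_iff_ne_top.mpr hne
  have hflt : (∫⁻ x in Ioi (1:ℝ), f x) < ⊤ :=
    lt_of_le_of_lt (lintegral_mono_set (show Ioi (1:ℝ) ⊆ Ioi (0:ℝ) from fun x hx => mem_Ioi.mpr (lt_trans one_pos (mem_Ioi.mp hx)))) hfin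
  have key : ∀ᵐ x ∂(volume.restrict (Ioi (1:ℝ))), (2 : ENNReal) ≤ f x + g x := by
    filter_upwards [ae_restrict_mem measurableSet_Ioi] with x hx
    have hx0 : (0:ℝ) < x := lt_trans one_pos hx
    set a : ℝ := x * Real.exp (-(G x)) with hadef
    set b : ℝ := x⁻¹ * Real.exp (G x) with hbdef
    have ha : 0 < a := mul_pos hx0 (Real.exp_pos _)
    have hb : 0 < b := mul_pos (inv_pos.mpr hx0) (Real.exp_pos _)
    have hab : a * b = 1 := by
      rw [hadef, hbdef]
      rw [show x * Real.exp (-(G x)) * (x⁻¹ * Real.exp (G x))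
        = (x * x⁻¹) * (Real.exp (-(G x)) * Real.exp (G x)) by ring]
      rw [mul_inv_cancel₀ (ne_of_gt hx0), ← Real.exp_add]
      simp
    have h2 : (2:ℝ) ≤ a + b := by nlinarith [sq_nonneg (a - b)]
    calc (2 : ENNReal) = ENNReal.ofReal 2 := by simp
      _ ≤ ENNReal.ofReal (a + b) := ENNReal.ofReal_le_ofReal h2
      _ = ENNReal.ofReal a + ENNReal.ofReal b := ENNReal.ofReal_add ha.le hb.le
      _ = f x + g x := rfl
  have hbot : (⊤ : ENNReal) ≤ ∫⁻ x in Ioi (1:ℝ), (f x + g x) := by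
    calc (⊤ : ENNReal) = ∫⁻ _x in Ioi (1:ℝ), (2 : ENNReal) := by
          rw [lintegral_const, Measure.restrict_apply_univ, Real.volume_Ioi]
          simp
      _ ≤ _ := lintegral_mono_ae key
  have hadd : (∫⁻ x in Ioi (1:ℝ), (f x + g x))
      = (∫⁻ x in Ioi (1:ℝ), f x) + (∫⁻ x in Ioi (1:ℝ), g x) :=
    lintegral_add_left' hfm g
  rw [hadd] at hbot
  exact absurd hbot (by simp [lt_top_iff_ne_top.mp (ENNReal.add_lt_top.mpr ⟨hflt, hglt⟩)])
end

section
/- Suppose h(l) converges to a finite limit h_∞ as l → ∞ and h_∞ > 4. Then I_1 := ∫_1^∞ ∫_1^∞ (min(|s(x)|, |s(y)|)) / (s'(x)·s'(y)) dx dy < +∞. (First part of the finiteness criterion for the variance constant σ in the central limit theorem.) -/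
open MeasureTheory Set Filter

/-- If `h(l) → h∞ > 4` as `l → ∞`, then
`I₁ = ∫_1^∞ ∫_1^∞ (min(|s(x)|,|s(y)|))/(s'(x)s'(y)) dx dy < +∞`. -/
theorem stmt_10 (φ h G s' s : ℝ → ℝ)
    (hφm : Measurable φ)
    (hφb : ∃ C : ℝ, ∀ u, 0 ≤ u → |φ u| ≤ C)
    (hh : ∀ l, h l = ∫ u in (0:ℝ)..l, φ u)
    (hG : ∀ x, G x = ∫ l in (0:ℝ)..x, h l / l)
    (hs' : ∀ x, 0 < x → s' x = x⁻¹ * Real.exp (G x))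
    (hs : ∀ x, 0 < x → s x = ∫ u in (1:ℝ)..x, s' u)
    (hinfty : ℝ) (hlim : Tendsto h atTop (nhds hinfty)) (h4 : 4 < hinfty) :
    (∫⁻ x in Ioi (1:ℝ), ∫⁻ y in Ioi (1:ℝ),
      ENNReal.ofReal (min |s x| |s y| / (s' x * s' y))) < ⊤ := by
  classical
  obtain ⟨C, hC⟩ := hφb
  have hC0 : 0 ≤ C := le_trans (abs_nonneg _) (hC 0 le_rfl)
  -- a nice version of φ
  set φ' : ℝ → ℝ := fun u => if 0 ≤ u then φ u else 0 with hφ'def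
  have hφ'm : Measurable φ' := Measurable.ite measurableSet_Ici hφm measurable_const
  have hφ'b : ∀ u, |φ' u| ≤ C := by
    intro u
    by_cases hu : 0 ≤ u
    · simpa [hφ'def, hu] using hC u hu
    · simpa [hφ'def, hu] using hC0
  have hφ'int : ∀ p q : ℝ, IntervalIntegrable φ' volume p q := by
    intro p q
    rw [intervalIntegrable_iff]
    exact Measure.integrableOn_of_bounded measure_Ioc_lt_top.ne
      hφ'm.aestronglyMeasurable (ae_of_all _ fun u => by simpa using hφ'b u)
  set hn : ℝ → ℝ := fun l => ∫ u in (0:ℝ)..l, φ' u with hhn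
  have hncont : Continuous hn := intervalIntegral.continuous_primitive hφ'int 0
  have hheq : ∀ l, 0 ≤ l → h l = hn l := by
    intro l hl
    rw [hh l]
    refine intervalIntegral.integral_congr fun u hu => ?_
    rw [Set.uIcc_of_le hl] at hu
    simp [hφ'def, hu.1]
  have hnb : ∀ l, |hn l| ≤ C * |l| := by
    intro l
    simpa using intervalIntegral.norm_integral_le_of_norm_le_const
      (a := 0) (b := l) (C := C) (f := φ') (fun u _ => by simpa using hφ'b u)
  set g : ℝ → ℝ := fun l => hn l / l with hgdef
  have hgm : Measurable g := hncont.measurable.div measurable_id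
  have hgb : ∀ l, |g l| ≤ C := by
    intro l
    rcases eq_or_ne l 0 with rfl | hl
    · simp [hgdef, hC0]
    · have h1 : |g l| = |hn l| / |l| := by rw [hgdef]; simp [abs_div]
      rw [h1, div_le_iff₀ (abs_pos.2 hl)]
      exact hnb l
  have hgint : ∀ p q : ℝ, IntervalIntegrable g volume p q := by
    intro p q
    rw [intervalIntegrable_iff]
    exact Measure.integrableOn_of_bounded measure_Ioc_lt_top.ne
      hgm.aestronglyMeasurable (ae_of_all _ fun u => by simpa using hgb u)
  set Γ : ℝ → ℝ := fun x => ∫ l in (0:ℝ)..x, g l with hΓdef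
  have hΓcont : Continuous Γ := intervalIntegral.continuous_primitive hgint 0
  have hGeq : ∀ x, 0 ≤ x → G x = Γ x := by
    intro x hx
    rw [hG x]
    refine intervalIntegral.integral_congr fun l hl => ?_
    rw [Set.uIcc_of_le hx] at hl
    rw [hgdef]
    simp only
    rw [hheq l hl.1]
  have hΓb : ∀ x, |Γ x| ≤ C * |x| := by
    intro x
    simpa using intervalIntegral.norm_integral_le_of_norm_le_const
      (a := 0) (b := x) (C := C) (f := g) (fun u _ => by simpa using hgb u)
  set σ : ℝ → ℝ := fun x => x⁻¹ * Real.exp (Γ x) with hσdef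
  have hσpos : ∀ x, 0 < x → 0 < σ x := fun x hx => mul_pos (inv_pos.2 hx) (Real.exp_pos _)
  have hs'eq : ∀ x, 0 < x → s' x = σ x := fun x hx => by
    rw [hs' x hx, hGeq x hx.le]
  have hσcont : ContinuousOn σ (Ici 1) := by
    apply ContinuousOn.mul
    · apply continuousOn_inv₀.mono
      intro x hx
      exact ne_of_gt (lt_of_lt_of_le one_pos hx)
    · exact (Real.continuous_exp.comp hΓcont).continuousOn
  have hσint : ∀ p q, 1 ≤ p → 1 ≤ q → IntervalIntegrable σ volume p q := by
    intro p q hp hq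
    apply (hσcont.mono ?_).intervalIntegrable
    intro u hu
    exact le_trans (le_min hp hq) hu.1
  have hseq : ∀ x, 1 ≤ x → s x = ∫ u in (1:ℝ)..x, σ u := by
    intro x hx
    rw [hs x (lt_of_lt_of_le one_pos hx)]
    refine intervalIntegral.integral_congr fun u hu => ?_
    rw [Set.uIcc_of_le hx] at hu
    exact hs'eq u (lt_of_lt_of_le one_pos hu.1)
  have hs_nonneg : ∀ x, 1 ≤ x → 0 ≤ s x := by
    intro x hx
    rw [hseq x hx]
    exact intervalIntegral.integral_nonneg hx
      (fun u hu => (hσpos u (lt_of_lt_of_le one_pos hu.1)).le)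
  -- choose ε, a, b, L
  set ε := (hinfty - 4) / 4 with hεdef
  have hε : 0 < ε := by rw [hεdef]; linarith
  set a := hinfty - ε with hadef
  set b := hinfty + ε with hbdef
  have ha4 : 4 < a := by rw [hadef, hεdef]; linarith
  have hb4 : 4 < b := by rw [hbdef]; linarith
  have ha0 : 0 < a := by linarith
  have hb0 : 0 < b := by linarith
  obtain ⟨L₀, hL₀⟩ := Metric.tendsto_atTop.mp hlim ε hε
  set L := max L₀ 1 with hLdef
  have hL1 : (1:ℝ) ≤ L := le_max_right _ _
  have hL0 : (0:ℝ) < L := lt_of_lt_of_le one_pos hL1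
  have hhab : ∀ l, L ≤ l → a ≤ h l ∧ h l ≤ b := by
    intro l hl
    have h1 := hL₀ l (le_trans (le_max_left _ _) hl)
    rw [Real.dist_eq] at h1
    have h2 := abs_lt.mp h1
    exact ⟨by rw [hadef]; linarith [h2.1], by rw [hbdef]; linarith [h2.2]⟩
  have hgval : ∀ l, 0 ≤ l → g l = h l / l := by
    intro l hl
    rw [hgdef]
    simp only
    rw [hheq l hl]
  have hΓsplit : ∀ x, Γ x = Γ L + ∫ l in L..x, g l := by
    intro x
    rw [hΓdef]
    simp only
    rw [← intervalIntegral.integral_add_adjacent_intervals (hgint 0 L) (hgint L x)]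
  have hinvint : ∀ (x c : ℝ), L ≤ x → IntervalIntegrable (fun l => c * l⁻¹) volume L x := by
    intro x c hx
    apply ContinuousOn.intervalIntegrable
    apply continuousOn_const.mul
    apply continuousOn_inv₀.mono
    intro u hu
    rw [Set.uIcc_of_le hx] at hu
    exact ne_of_gt (lt_of_lt_of_le hL0 hu.1)
  have hlogint : ∀ x, L ≤ x → ∀ c : ℝ,
      (∫ l in L..x, c * l⁻¹) = c * (Real.log x - Real.log L) := by
    intro x hx c
    rw [intervalIntegral.integral_const_mul, integral_inv_of_pos hL0 (lt_of_lt_of_le hL0 hx),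
      Real.log_div (ne_of_gt (lt_of_lt_of_le hL0 hx)) (ne_of_gt hL0)]
  have hgl : ∀ x, L ≤ x →
      a * (Real.log x - Real.log L) ≤ (∫ l in L..x, g l) ∧
      (∫ l in L..x, g l) ≤ b * (Real.log x - Real.log L) := by
    intro x hx
    constructor
    · rw [← hlogint x hx a]
      refine intervalIntegral.integral_mono_on hx (hinvint x a hx) (hgint L x) fun l hl => ?_
      have hl0 : 0 < l := lt_of_lt_of_le hL0 hl.1
      rw [hgval l hl0.le, ← div_eq_mul_inv]
      exact (div_le_div_iff_of_pos_right hl0).mpr (hhab l hl.1).1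
    · rw [← hlogint x hx b]
      refine intervalIntegral.integral_mono_on hx (hgint L x) (hinvint x b hx) fun l hl => ?_
      have hl0 : 0 < l := lt_of_lt_of_le hL0 hl.1
      rw [hgval l hl0.le, ← div_eq_mul_inv]
      exact (div_le_div_iff_of_pos_right hl0).mpr (hhab l hl.1).2
  have hexp : ∀ x c : ℝ, 0 < x →
      x⁻¹ * Real.exp (Γ L + c * (Real.log x - Real.log L)) =
        (Real.exp (Γ L) * L ^ (-c)) * x ^ (c - 1) := by
    intro x c hx
    have h1 : x⁻¹ = Real.exp (-Real.log x) := by rw [Real.exp_neg, Real.exp_log hx]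
    rw [h1, Real.rpow_def_of_pos hL0, Real.rpow_def_of_pos hx, ← Real.exp_add, ← Real.exp_add,
      ← Real.exp_add]
    congr 1
    ring
  set c₁ := Real.exp (Γ L) * L ^ (-a) with hc₁def
  set c₂ := Real.exp (Γ L) * L ^ (-b) with hc₂def
  have hc₁0 : 0 < c₁ := mul_pos (Real.exp_pos _) (Real.rpow_pos_of_pos hL0 _)
  have hc₂0 : 0 < c₂ := mul_pos (Real.exp_pos _) (Real.rpow_pos_of_pos hL0 _)
  have hσlow : ∀ x, L ≤ x → c₁ * x ^ (a - 1) ≤ σ x := by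
    intro x hx
    have hx0 : 0 < x := lt_of_lt_of_le hL0 hx
    calc c₁ * x ^ (a - 1) = x⁻¹ * Real.exp (Γ L + a * (Real.log x - Real.log L)) :=
          (hexp x a hx0).symm
      _ ≤ x⁻¹ * Real.exp (Γ x) := by
          refine mul_le_mul_of_nonneg_left (Real.exp_le_exp.mpr ?_) (inv_nonneg.2 hx0.le)
          rw [hΓsplit x]
          linarith [(hgl x hx).1]
      _ = σ x := rfl
  have hσhigh : ∀ x, L ≤ x → σ x ≤ c₂ * x ^ (b - 1) := by
    intro x hx
    have hx0 : 0 < x := lt_of_lt_of_le hL0 hx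
    calc σ x = x⁻¹ * Real.exp (Γ x) := rfl
      _ ≤ x⁻¹ * Real.exp (Γ L + b * (Real.log x - Real.log L)) := by
          refine mul_le_mul_of_nonneg_left (Real.exp_le_exp.mpr ?_) (inv_nonneg.2 hx0.le)
          rw [hΓsplit x]
          linarith [(hgl x hx).2]
      _ = c₂ * x ^ (b - 1) := hexp x b hx0
  -- bounds on [1, L]
  set M₁ := (L - 1) * Real.exp (C * L) with hM₁def
  have hM₁0 : 0 ≤ M₁ := mul_nonneg (by linarith) (Real.exp_pos _).le
  have hΓub : ∀ u, 0 ≤ u → u ≤ L → Γ u ≤ C * L ∧ -(C * L) ≤ Γ u := by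
    intro u h0 h2
    have h3 := abs_le.mp (hΓb u)
    rw [abs_of_nonneg h0] at h3
    have h4 : C * u ≤ C * L := mul_le_mul_of_nonneg_left h2 hC0
    exact ⟨le_trans h3.2 h4, by linarith [h3.1]⟩
  have hσub : ∀ u, 1 ≤ u → u ≤ L → σ u ≤ Real.exp (C * L) := by
    intro u h1 h2
    have hu0 : (0:ℝ) < u := lt_of_lt_of_le one_pos h1
    calc σ u = u⁻¹ * Real.exp (Γ u) := rfl
      _ ≤ 1 * Real.exp (C * L) :=
          mul_le_mul (inv_le_one_of_one_le₀ h1) (Real.exp_le_exp.2 (hΓub u hu0.le h2).1)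
            (Real.exp_pos _).le one_pos.le
      _ = Real.exp (C * L) := one_mul _
  set m := L⁻¹ * Real.exp (-(C * L)) with hmdef
  have hm0 : 0 < m := mul_pos (inv_pos.2 hL0) (Real.exp_pos _)
  have hσlb : ∀ u, 1 ≤ u → u ≤ L → m ≤ σ u := by
    intro u h1 h2
    have hu0 : (0:ℝ) < u := lt_of_lt_of_le one_pos h1
    exact mul_le_mul (inv_anti₀ hu0 h2)
      (Real.exp_le_exp.2 (hΓub u hu0.le h2).2) (Real.exp_pos _).le (inv_nonneg.2 hu0.le)
  have hsub : ∀ x, 1 ≤ x → x ≤ L → s x ≤ M₁ := by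
    intro x h1 h2
    rw [hseq x h1]
    have hb' : ∀ u ∈ Set.uIoc (1:ℝ) x, ‖σ u‖ ≤ Real.exp (C * L) := by
      intro u hu
      rw [Set.uIoc_of_le h1] at hu
      rw [Real.norm_eq_abs, abs_of_nonneg (hσpos u (lt_trans one_pos hu.1)).le]
      exact hσub u hu.1.le (le_trans hu.2 h2)
    have h3 := intervalIntegral.norm_integral_le_of_norm_le_const hb'
    rw [Real.norm_eq_abs, abs_of_nonneg (by linarith : (0:ℝ) ≤ x - 1)] at h3
    have h4 := (abs_le.mp h3).2
    have h5 : Real.exp (C * L) * (x - 1) ≤ Real.exp (C * L) * (L - 1) :=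
      mul_le_mul_of_nonneg_left (by linarith) (Real.exp_pos _).le
    rw [hM₁def]
    linarith
  -- tail bound for s
  have hrpowint : ∀ x, L ≤ x → IntervalIntegrable (fun u : ℝ => c₂ * u ^ (b - 1)) volume L x := by
    intro x hx
    apply ContinuousOn.intervalIntegrable
    apply continuousOn_const.mul
    exact ContinuousOn.rpow_const continuousOn_id fun u _ => Or.inr (by linarith)
  set K₂ := M₁ + c₂ / b with hK₂def
  have hK₂0 : 0 ≤ K₂ := by
    have := div_pos hc₂0 hb0
    rw [hK₂def]; linarith
  have hstail : ∀ x, L ≤ x → s x ≤ K₂ * x ^ b := by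
    intro x hx
    have hx1 : (1:ℝ) ≤ x := le_trans hL1 hx
    have hx0 : (0:ℝ) < x := lt_of_lt_of_le one_pos hx1
    have hsplit : s x = s L + ∫ u in L..x, σ u := by
      rw [hseq x hx1, hseq L hL1,
        ← intervalIntegral.integral_add_adjacent_intervals (hσint 1 L le_rfl hL1)
          (hσint L x hL1 hx1)]
    have hint : (∫ u in L..x, σ u) ≤ ∫ u in L..x, c₂ * u ^ (b - 1) :=
      intervalIntegral.integral_mono_on hx (hσint L x hL1 hx1) (hrpowint x hx)
        (fun u hu => hσhigh u hu.1)
    have hval : (∫ u in L..x, c₂ * u ^ (b - 1)) = c₂ / b * (x ^ b - L ^ b) := by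
      rw [intervalIntegral.integral_const_mul, integral_rpow (Or.inl (by linarith : (-1:ℝ) < b - 1))]
      have hb1 : b - 1 + 1 = b := by ring
      rw [hb1]
      ring
    have hxb1 : (1:ℝ) ≤ x ^ b := Real.one_le_rpow hx1 hb0.le
    have hLb : (0:ℝ) ≤ L ^ b := (Real.rpow_pos_of_pos hL0 b).le
    have hsL : s L ≤ M₁ := hsub L hL1 le_rfl
    have hd0 : 0 < c₂ / b := div_pos hc₂0 hb0
    have h6 : c₂ / b * (x ^ b - L ^ b) ≤ c₂ / b * x ^ b :=
      mul_le_mul_of_nonneg_left (by linarith) hd0.le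
    have h7 : M₁ ≤ M₁ * x ^ b := le_mul_of_one_le_right hM₁0 hxb1
    rw [hK₂def]
    calc s x = s L + ∫ u in L..x, σ u := hsplit
      _ ≤ M₁ + c₂ / b * (x ^ b - L ^ b) := by rw [← hval]; linarith
      _ ≤ M₁ * x ^ b + c₂ / b * x ^ b := by linarith
      _ = (M₁ + c₂ / b) * x ^ b := by ring
  -- the one-variable ratio
  set f : ℝ → ℝ := fun x => Real.sqrt (s x) / σ x with hfdef
  have hf0 : ∀ x, 0 < x → 0 ≤ f x := fun x hx =>
    div_nonneg (Real.sqrt_nonneg _) (hσpos x hx).le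
  set p := a - 1 - b / 2 with hpdef
  have hp1 : 1 < p := by rw [hpdef, hadef, hbdef, hεdef]; linarith
  set K₃ := Real.sqrt K₂ / c₁ with hK₃def
  have hftail : ∀ x, L ≤ x → f x ≤ K₃ * x ^ (-p) := by
    intro x hx
    have hx1 : (1:ℝ) ≤ x := le_trans hL1 hx
    have hx0 : (0:ℝ) < x := lt_of_lt_of_le one_pos hx1
    have h1 : Real.sqrt (s x) ≤ Real.sqrt K₂ * x ^ (b / 2) := by
      calc Real.sqrt (s x) ≤ Real.sqrt (K₂ * x ^ b) := Real.sqrt_le_sqrt (hstail x hx)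
        _ = Real.sqrt K₂ * Real.sqrt (x ^ b) := Real.sqrt_mul hK₂0 _
        _ = Real.sqrt K₂ * x ^ (b / 2) := by
            rw [Real.sqrt_eq_rpow (x ^ b), ← Real.rpow_mul hx0.le,
              show b * (1 / 2 : ℝ) = b / 2 by ring]
    have h2 := hσlow x hx
    have hxp1 : (0:ℝ) < x ^ (a - 1) := Real.rpow_pos_of_pos hx0 _
    have hxp2 : (0:ℝ) ≤ x ^ (b / 2) := (Real.rpow_pos_of_pos hx0 _).le
    have hd : f x ≤ Real.sqrt K₂ * x ^ (b / 2) / (c₁ * x ^ (a - 1)) :=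
      div_le_div₀ (mul_nonneg (Real.sqrt_nonneg _) hxp2) h1 (mul_pos hc₁0 hxp1) h2
    calc f x ≤ Real.sqrt K₂ * x ^ (b / 2) / (c₁ * x ^ (a - 1)) := hd
      _ = K₃ * (x ^ (b / 2) / x ^ (a - 1)) := by rw [hK₃def, mul_div_mul_comm]
      _ = K₃ * x ^ (-p) := by
          rw [← Real.rpow_sub hx0]
          congr 1
          rw [hpdef]
          ring
  have hfmid : ∀ x, 1 ≤ x → x ≤ L → f x ≤ Real.sqrt M₁ / m := fun x h1 h2 =>
    div_le_div₀ (Real.sqrt_nonneg _) (Real.sqrt_le_sqrt (hsub x h1 h2)) hm0 (hσlb x h1 h2)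
  set F := fun x => ENNReal.ofReal (f x) with hFdef
  have hJ1fin : (∫⁻ x in Ioc (1:ℝ) L, F x) < ⊤ := by
    have step : (∫⁻ x in Ioc (1:ℝ) L, F x) ≤
        ∫⁻ _ in Ioc (1:ℝ) L, ENNReal.ofReal (Real.sqrt M₁ / m) := by
      refine lintegral_mono_ae ((ae_restrict_iff' measurableSet_Ioc).2 (ae_of_all _ ?_))
      intro x hx
      exact ENNReal.ofReal_le_ofReal (hfmid x hx.1.le hx.2)
    refine lt_of_le_of_lt step ?_
    rw [setLIntegral_const]
    exact ENNReal.mul_lt_top ENNReal.ofReal_lt_top measure_Ioc_lt_top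
  have hmaj : IntegrableOn (fun x => K₃ * x ^ (-p)) (Ioi L) :=
    (integrableOn_Ioi_rpow_of_lt (by linarith : -p < -1) hL0).const_mul K₃
  have hJ2fin : (∫⁻ x in Ioi L, F x) < ⊤ := by
    have step : (∫⁻ x in Ioi L, F x) ≤ ∫⁻ x in Ioi L, ENNReal.ofReal (K₃ * x ^ (-p)) := by
      refine lintegral_mono_ae ((ae_restrict_iff' measurableSet_Ioi).2 (ae_of_all _ ?_))
      intro x hx
      exact ENNReal.ofReal_le_ofReal (hftail x hx.le)
    exact lt_of_le_of_lt step hmaj.lintegral_lt_top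
  have hJfin : (∫⁻ x in Ioi (1:ℝ), F x) < ⊤ := by
    rw [← Ioc_union_Ioi_eq_Ioi hL1,
      lintegral_union measurableSet_Ioi (Ioc_disjoint_Ioi le_rfl)]
    exact ENNReal.add_lt_top.mpr ⟨hJ1fin, hJ2fin⟩
  -- pointwise bound for the double integrand
  have hmin : ∀ x y : ℝ, 1 < x → 1 < y →
      ENNReal.ofReal (min |s x| |s y| / (s' x * s' y)) ≤ F x * F y := by
    intro x y hx hy
    have hx0 : (0:ℝ) < x := lt_trans one_pos hx
    have hy0 : (0:ℝ) < y := lt_trans one_pos hy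
    have hσx := hσpos x hx0
    have hσy := hσpos y hy0
    rw [hs'eq x hx0, hs'eq y hy0, abs_of_nonneg (hs_nonneg x hx.le),
      abs_of_nonneg (hs_nonneg y hy.le)]
    have hmin' : min (s x) (s y) ≤ Real.sqrt (s x) * Real.sqrt (s y) := by
      rcases le_total (s x) (s y) with hle | hle
      · rw [min_eq_left hle]
        calc s x = Real.sqrt (s x) * Real.sqrt (s x) := (Real.mul_self_sqrt (hs_nonneg x hx.le)).symm
          _ ≤ Real.sqrt (s x) * Real.sqrt (s y) :=
              mul_le_mul_of_nonneg_left (Real.sqrt_le_sqrt hle) (Real.sqrt_nonneg _)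
      · rw [min_eq_right hle]
        calc s y = Real.sqrt (s y) * Real.sqrt (s y) := (Real.mul_self_sqrt (hs_nonneg y hy.le)).symm
          _ ≤ Real.sqrt (s x) * Real.sqrt (s y) :=
              mul_le_mul_of_nonneg_right (Real.sqrt_le_sqrt hle) (Real.sqrt_nonneg _)
    have hstep : min (s x) (s y) / (σ x * σ y) ≤ f x * f y := by
      have : f x * f y = Real.sqrt (s x) * Real.sqrt (s y) / (σ x * σ y) := by
        rw [hfdef]
        simp only
        rw [div_mul_div_comm]
      rw [this]
      exact (div_le_div_iff_of_pos_right (mul_pos hσx hσy)).mpr hmin'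
    calc ENNReal.ofReal (min (s x) (s y) / (σ x * σ y)) ≤ ENNReal.ofReal (f x * f y) :=
          ENNReal.ofReal_le_ofReal hstep
      _ = F x * F y := ENNReal.ofReal_mul (hf0 x hx0)
  have hinner : ∀ x ∈ Ioi (1:ℝ),
      (∫⁻ y in Ioi (1:ℝ), ENNReal.ofReal (min |s x| |s y| / (s' x * s' y))) ≤
        F x * ∫⁻ x in Ioi (1:ℝ), F x := by
    intro x hx
    calc (∫⁻ y in Ioi (1:ℝ), ENNReal.ofReal (min |s x| |s y| / (s' x * s' y)))
        ≤ ∫⁻ y in Ioi (1:ℝ), F x * F y := by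
          refine lintegral_mono_ae ((ae_restrict_iff' measurableSet_Ioi).2 (ae_of_all _ ?_))
          intro y hy
          exact hmin x y hx hy
      _ = F x * ∫⁻ x in Ioi (1:ℝ), F x := lintegral_const_mul' _ _ ENNReal.ofReal_ne_top
  calc (∫⁻ x in Ioi (1:ℝ), ∫⁻ y in Ioi (1:ℝ),
      ENNReal.ofReal (min |s x| |s y| / (s' x * s' y)))
      ≤ ∫⁻ x in Ioi (1:ℝ), F x * ∫⁻ x in Ioi (1:ℝ), F x := by
        refine lintegral_mono_ae ((ae_restrict_iff' measurableSet_Ioi).2 (ae_of_all _ ?_))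
        exact hinner
    _ = (∫⁻ x in Ioi (1:ℝ), F x) * ∫⁻ x in Ioi (1:ℝ), F x :=
        lintegral_mul_const' _ _ hJfin.ne
    _ < ⊤ := ENNReal.mul_lt_top hJfin hJfin
end

section
/- Suppose h(l) converges to a finite limit h_∞ as l → ∞ and 0 < h_∞ < 4. Then I_1 := ∫_1^∞ ∫_1^∞ (min(|s(x)|, |s(y)|)) / (s'(x)·s'(y)) dx dy = +∞. (Second part of the finiteness criterion for the variance constant σ in the central limit theorem.) -/
open MeasureTheory Set Filter

set_option maxHeartbeats 1000000 in
/-- If `h(l) → h∞` as `l → ∞` with `0 < h∞ < 4`, then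
`I₁ = ∫_1^∞ ∫_1^∞ (min(|s(x)|,|s(y)|))/(s'(x)s'(y)) dx dy = +∞`. -/
theorem stmt_11 (φ h G s' s : ℝ → ℝ)
    (hφm : Measurable φ)
    (hφb : ∃ C : ℝ, ∀ u, 0 ≤ u → |φ u| ≤ C)
    (hh : ∀ l, h l = ∫ u in (0:ℝ)..l, φ u)
    (hG : ∀ x, G x = ∫ l in (0:ℝ)..x, h l / l)
    (hs' : ∀ x, 0 < x → s' x = x⁻¹ * Real.exp (G x))
    (hs : ∀ x, 0 < x → s x = ∫ u in (1:ℝ)..x, s' u)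
    (hinfty : ℝ) (hlim : Tendsto h atTop (nhds hinfty))
    (hpos : 0 < hinfty) (h4 : hinfty < 4) :
    (∫⁻ x in Ioi (1:ℝ), ∫⁻ y in Ioi (1:ℝ),
      ENNReal.ofReal (min |s x| |s y| / (s' x * s' y))) = ⊤ := by
  classical
  obtain ⟨C, hC⟩ := hφb
  have hC0 : 0 ≤ C := (abs_nonneg _).trans (hC 0 le_rfl)
  -- bound |h l| ≤ C * l for l ≥ 0
  have hhb : ∀ l : ℝ, 0 ≤ l → |h l| ≤ C * l := by
    intro l hl
    rw [hh l]
    have hb : ∀ u ∈ Set.uIoc (0:ℝ) l, ‖φ u‖ ≤ C := by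
      intro u hu
      rw [uIoc_of_le hl] at hu
      simpa [Real.norm_eq_abs] using hC u hu.1.le
    have := intervalIntegral.norm_integral_le_of_norm_le_const hb
    simpa [Real.norm_eq_abs, abs_of_nonneg hl] using this
  -- φ is integrable on [0,R]
  have hφint : ∀ R : ℝ, IntegrableOn φ (Icc 0 R) := by
    intro R
    refine Integrable.mono' (g := fun _ => C)
      (integrableOn_const measure_Icc_lt_top.ne enorm_ne_top)
      hφm.aestronglyMeasurable.restrict ?_
    filter_upwards [ae_restrict_mem measurableSet_Icc] with u hu
    simpa [Real.norm_eq_abs] using hC u hu.1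
  -- h is continuous on [0,R]
  have hhcont : ∀ R : ℝ, ContinuousOn h (Icc 0 R) := by
    intro R
    refine (intervalIntegral.continuousOn_primitive (f := φ) (μ := volume)
      (a := 0) (b := R) (hφint R)).congr ?_
    intro x hx
    rw [hh x, intervalIntegral.integral_of_le hx.1]
  -- q = h l / l is integrable on [0,R]
  have hqint : ∀ R : ℝ, IntegrableOn (fun l => h l / l) (Icc 0 R) := by
    intro R
    have hm : AEStronglyMeasurable (fun l => h l / l) (volume.restrict (Icc 0 R)) := by
      have h1 : AEStronglyMeasurable h (volume.restrict (Icc 0 R)) :=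
        (hhcont R).aestronglyMeasurable measurableSet_Icc
      have h2 : AEStronglyMeasurable (fun l : ℝ => l⁻¹) (volume.restrict (Icc 0 R)) :=
        (measurable_inv : Measurable fun x : ℝ => x⁻¹).aestronglyMeasurable
      simpa only [div_eq_mul_inv, Pi.mul_def] using h1.mul h2
    refine Integrable.mono' (g := fun _ => C)
      (integrableOn_const measure_Icc_lt_top.ne enorm_ne_top) hm ?_
    filter_upwards [ae_restrict_mem measurableSet_Icc] with l hl
    rcases eq_or_lt_of_le hl.1 with h0 | h0
    · simp [← h0, hC0]
    · rw [Real.norm_eq_abs, abs_div, abs_of_pos h0, div_le_iff₀ h0]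
      exact hhb l hl.1
  have hqii : ∀ x1 x2 : ℝ, 0 ≤ x1 → x1 ≤ x2 →
      IntervalIntegrable (fun l => h l / l) volume x1 x2 := by
    intro x1 x2 h1 h2
    refine IntegrableOn.intervalIntegrable ?_
    rw [uIcc_of_le h2]
    exact (hqint x2).mono_set (Icc_subset_Icc h1 le_rfl)
  -- additivity of G
  have hGadd : ∀ a b : ℝ, 0 ≤ a → a ≤ b → G b = G a + ∫ l in a..b, h l / l := by
    intro a b ha hab
    rw [hG, hG,
      ← intervalIntegral.integral_add_adjacent_intervals (hqii 0 a le_rfl ha)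
        (hqii a b ha hab)]
  -- continuity of G
  have hGcont : ∀ R : ℝ, ContinuousOn G (Icc 0 R) := by
    intro R
    refine (intervalIntegral.continuousOn_primitive (f := fun l => h l / l)
      (μ := volume) (a := 0) (b := R) (hqint R)).congr ?_
    intro x hx
    rw [hG x, intervalIntegral.integral_of_le hx.1]
  -- s' is positive, continuous, integrable
  have hs'pos : ∀ x : ℝ, 0 < x → 0 < s' x := by
    intro x hx
    rw [hs' x hx]
    positivity
  have hs'cont : ∀ a b : ℝ, 0 < a → ContinuousOn s' (Icc a b) := by
    intro a b ha
    have h1 : ContinuousOn (fun u : ℝ => u⁻¹ * Real.exp (G u)) (Icc a b) := by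
      refine ContinuousOn.mul (ContinuousOn.inv₀ continuousOn_id ?_) ?_
      · intro x hx; exact (lt_of_lt_of_le ha hx.1).ne'
      · exact Real.continuous_exp.comp_continuousOn
          ((hGcont b).mono (Icc_subset_Icc ha.le le_rfl))
    refine h1.congr ?_
    intro x hx
    exact hs' x (lt_of_lt_of_le ha hx.1)
  have hs'ii : ∀ a b : ℝ, 0 < a → a ≤ b → IntervalIntegrable s' volume a b := by
    intro a b ha hab
    exact (hs'cont a b ha).intervalIntegrable_of_Icc hab
  -- additivity and monotonicity of s
  have hsadd : ∀ a b : ℝ, 1 ≤ a → a ≤ b → s b = s a + ∫ u in a..b, s' u := by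
    intro a b ha hab
    rw [hs b (by linarith), hs a (by linarith),
      ← intervalIntegral.integral_add_adjacent_intervals (hs'ii 1 a one_pos ha)
        (hs'ii a b (by linarith) hab)]
  have hsmono : ∀ a b : ℝ, 1 ≤ a → a ≤ b → s a ≤ s b := by
    intro a b ha hab
    rw [hsadd a b ha hab]
    have : 0 ≤ ∫ u in a..b, s' u :=
      intervalIntegral.integral_nonneg hab
        (fun u hu => (hs'pos u (by linarith [hu.1])).le)
    linarith
  -- choose ε
  set ε : ℝ := min hinfty (4 - hinfty) / 4 with hεdef
  have hε0 : 0 < ε := by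
    have h1 : 0 < min hinfty (4 - hinfty) := lt_min hpos (by linarith)
    positivity
  have hεa : ε ≤ hinfty / 4 := by
    have := min_le_left hinfty (4 - hinfty)
    rw [hεdef]; linarith
  have hεb : ε ≤ (4 - hinfty) / 4 := by
    have := min_le_right hinfty (4 - hinfty)
    rw [hεdef]; linarith
  set α : ℝ := hinfty - ε with hαdef
  set β : ℝ := hinfty + ε with hβdef
  set δ : ℝ := 4 - hinfty - 3 * ε with hδdef
  have hα0 : 0 < α := by rw [hαdef]; linarith
  have hβ0 : 0 < β := by rw [hβdef]; linarith
  have hδ0 : 0 < δ := by rw [hδdef]; linarith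
  -- choose L
  obtain ⟨N, hN⟩ := (Metric.tendsto_atTop.1 hlim) ε hε0
  set L : ℝ := max N 1 with hLdef
  have hL1 : (1:ℝ) ≤ L := le_max_right _ _
  have hL0 : (0:ℝ) < L := lt_of_lt_of_le one_pos hL1
  have hLh : ∀ l : ℝ, L ≤ l → |h l - hinfty| ≤ ε := by
    intro l hl
    have := hN l ((le_max_left _ _).trans hl)
    rw [Real.dist_eq] at this
    exact this.le
  -- bounds on G for x ≥ L
  have hGub : ∀ x : ℝ, L ≤ x → G x ≤ G L + β * Real.log (x / L) := by
    intro x hx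
    rw [hGadd L x hL0.le hx]
    have hmono : (∫ l in L..x, h l / l) ≤ ∫ l in L..x, β * l⁻¹ := by
      refine intervalIntegral.integral_mono_on hx (hqii L x hL0.le hx)
        ((intervalIntegral.intervalIntegrable_inv ?_
          (continuousOn_id)).const_mul β) ?_
      · intro u hu
        rw [uIcc_of_le hx] at hu
        exact (lt_of_lt_of_le hL0 hu.1).ne'
      · intro l hl
        have hl0 : 0 < l := lt_of_lt_of_le hL0 hl.1
        have : h l ≤ β := by
          have := abs_le.1 (hLh l hl.1)
          rw [hβdef]; linarith [this.2]
        rw [div_eq_mul_inv]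
        exact mul_le_mul_of_nonneg_right this (inv_nonneg.2 hl0.le)
    rw [intervalIntegral.integral_const_mul, integral_inv_of_pos hL0
      (lt_of_lt_of_le hL0 hx)] at hmono
    linarith
  have hGlb : ∀ x : ℝ, L ≤ x → G L + α * Real.log (x / L) ≤ G x := by
    intro x hx
    rw [hGadd L x hL0.le hx]
    have hmono : (∫ l in L..x, α * l⁻¹) ≤ ∫ l in L..x, h l / l := by
      refine intervalIntegral.integral_mono_on hx
        ((intervalIntegral.intervalIntegrable_inv ?_
          (continuousOn_id)).const_mul α) (hqii L x hL0.le hx) ?_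
      · intro u hu
        rw [uIcc_of_le hx] at hu
        exact (lt_of_lt_of_le hL0 hu.1).ne'
      · intro l hl
        have hl0 : 0 < l := lt_of_lt_of_le hL0 hl.1
        have : α ≤ h l := by
          have := abs_le.1 (hLh l hl.1)
          rw [hαdef]; linarith [this.1]
        rw [div_eq_mul_inv]
        exact mul_le_mul_of_nonneg_right this (inv_nonneg.2 hl0.le)
    rw [intervalIntegral.integral_const_mul, integral_inv_of_pos hL0
      (lt_of_lt_of_le hL0 hx)] at hmono
    linarith
  -- power bounds on s'
  set A : ℝ := Real.exp (G L) / L ^ β with hAdef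
  set a : ℝ := Real.exp (G L) / L ^ α with hadef
  have hA0 : 0 < A := by rw [hAdef]; positivity
  have ha0 : 0 < a := by rw [hadef]; positivity
  have hs'ub : ∀ x : ℝ, L ≤ x → s' x ≤ A * x ^ (β - 1) := by
    intro x hx
    have hx0 : 0 < x := lt_of_lt_of_le hL0 hx
    rw [hs' x hx0]
    have h1 : Real.exp (G x) ≤ Real.exp (G L) * (x / L) ^ β := by
      have he : Real.exp (G L) * (x / L) ^ β = Real.exp (G L + β * Real.log (x / L)) := by
        rw [Real.exp_add, Real.rpow_def_of_pos (div_pos hx0 hL0),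
          mul_comm β (Real.log (x / L))]
      rw [he]
      exact Real.exp_le_exp.2 (hGub x hx)
    calc x⁻¹ * Real.exp (G x) ≤ x⁻¹ * (Real.exp (G L) * (x / L) ^ β) := by
          exact mul_le_mul_of_nonneg_left h1 (inv_nonneg.2 hx0.le)
      _ = A * x ^ (β - 1) := by
          rw [Real.div_rpow hx0.le hL0.le, Real.rpow_sub_one hx0.ne', hAdef]
          field_simp
  have hs'lb : ∀ x : ℝ, L ≤ x → a * x ^ (α - 1) ≤ s' x := by
    intro x hx
    have hx0 : 0 < x := lt_of_lt_of_le hL0 hx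
    rw [hs' x hx0]
    have h1 : Real.exp (G L) * (x / L) ^ α ≤ Real.exp (G x) := by
      have he : Real.exp (G L) * (x / L) ^ α = Real.exp (G L + α * Real.log (x / L)) := by
        rw [Real.exp_add, Real.rpow_def_of_pos (div_pos hx0 hL0),
          mul_comm α (Real.log (x / L))]
      rw [he]
      exact Real.exp_le_exp.2 (hGlb x hx)
    calc a * x ^ (α - 1) = x⁻¹ * (Real.exp (G L) * (x / L) ^ α) := by
          rw [Real.div_rpow hx0.le hL0.le, Real.rpow_sub_one hx0.ne', hadef]
          field_simp
      _ ≤ x⁻¹ * Real.exp (G x) := mul_le_mul_of_nonneg_left h1 (inv_nonneg.2 hx0.le)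
  -- lower bound on s T
  set T1 : ℝ := max L ((2:ℝ) ^ α⁻¹ * L) with hT1def
  have hT1L : L ≤ T1 := le_max_left _ _
  have hslb : ∀ T : ℝ, T1 ≤ T → a / (2 * α) * T ^ α ≤ s T := by
    intro T hT
    have hTL : L ≤ T := hT1L.trans hT
    have hT0 : 0 < T := lt_of_lt_of_le hL0 hTL
    have hpow_ii : IntervalIntegrable (fun u : ℝ => a * u ^ (α - 1)) volume L T := by
      refine (intervalIntegral.intervalIntegrable_rpow (Or.inr ?_)).const_mul a
      rw [uIcc_of_le hTL]
      intro hmem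
      exact absurd hmem.1 (by linarith)
    have hint : (∫ u in L..T, a * u ^ (α - 1)) ≤ ∫ u in L..T, s' u := by
      refine intervalIntegral.integral_mono_on hTL hpow_ii
        (hs'ii L T hL0 hTL) ?_
      intro u hu
      exact hs'lb u hu.1
    rw [intervalIntegral.integral_const_mul, integral_rpow (Or.inl (by linarith)),
      sub_add_cancel] at hint
    have hsL : 0 ≤ s L := by
      rw [hs L hL0]
      exact intervalIntegral.integral_nonneg hL1
        (fun u hu => (hs'pos u (by linarith [hu.1])).le)
    have hsT : s T = s L + ∫ u in L..T, s' u := hsadd L T hL1 hTL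
    -- T^α ≥ 2 * L^α
    have hTα : 2 * L ^ α ≤ T ^ α := by
      have h2 : (2:ℝ) ^ α⁻¹ * L ≤ T := (le_max_right _ _).trans hT
      calc 2 * L ^ α = ((2:ℝ) ^ α⁻¹ * L) ^ α := by
            rw [Real.mul_rpow (by positivity) hL0.le, ← Real.rpow_mul (by norm_num),
              inv_mul_cancel₀ hα0.ne', Real.rpow_one]
        _ ≤ T ^ α := Real.rpow_le_rpow (by positivity) h2 hα0.le
    have : a / (2 * α) * T ^ α ≤ a * ((T ^ α - L ^ α) / α) := by
      rw [div_mul_eq_mul_div, mul_div_assoc]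
      refine mul_le_mul_of_nonneg_left ?_ ha0.le
      rw [div_le_div_iff₀ (by positivity) hα0]
      nlinarith [mul_nonneg hα0.le (sub_nonneg.2 hTα)]
    linarith
  -- upper bound for s' on [T, 2T]
  have hs'ub2 : ∀ T x : ℝ, L ≤ T → T ≤ x → x ≤ 2 * T →
      s' x ≤ A * 2 ^ β * T ^ (β - 1) := by
    intro T x hLT hTx hx2T
    have hT0 : 0 < T := lt_of_lt_of_le hL0 hLT
    have hx0 : 0 < x := lt_of_lt_of_le hT0 hTx
    refine (hs'ub x (hLT.trans hTx)).trans ?_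
    rw [mul_assoc]
    refine mul_le_mul_of_nonneg_left ?_ hA0.le
    rcases le_or_gt 1 β with hβ1 | hβ1
    · calc x ^ (β - 1) ≤ (2 * T) ^ (β - 1) :=
            Real.rpow_le_rpow hx0.le hx2T (by linarith)
        _ = 2 ^ (β - 1) * T ^ (β - 1) := Real.mul_rpow (by norm_num) hT0.le
        _ ≤ 2 ^ β * T ^ (β - 1) := by
            refine mul_le_mul_of_nonneg_right
              (Real.rpow_le_rpow_of_exponent_le one_le_two (by linarith))
              (Real.rpow_nonneg hT0.le _)
    · calc x ^ (β - 1) ≤ T ^ (β - 1) :=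
            Real.rpow_le_rpow_of_nonpos hT0 hTx (by linarith)
        _ ≤ 2 ^ β * T ^ (β - 1) := by
            refine le_mul_of_one_le_left (Real.rpow_nonneg hT0.le _) ?_
            exact Real.one_le_rpow one_le_two hβ0.le
  -- the key lower bound on the double integral
  set I := ∫⁻ x in Ioi (1:ℝ), ∫⁻ y in Ioi (1:ℝ),
      ENNReal.ofReal (min |s x| |s y| / (s' x * s' y)) with hIdef
  set c : ℝ := (a / (2 * α)) / (A * 2 ^ β) ^ 2 with hcdef
  have hc0 : 0 < c := by rw [hcdef]; positivity
  have key : ∀ r : ℝ, ENNReal.ofReal r ≤ I := by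
    intro r
    -- choose T
    have htend : Tendsto (fun T : ℝ => c * T ^ δ) atTop atTop :=
      (tendsto_rpow_atTop hδ0).const_mul_atTop hc0
    obtain ⟨T, hTr, hTT1⟩ :=
      ((htend.eventually_ge_atTop r).and (eventually_ge_atTop T1)).exists
    have hTL : L ≤ T := hT1L.trans hTT1
    have hT0 : 0 < T := lt_of_lt_of_le hL0 hTL
    have hT1' : (1:ℝ) ≤ T := hL1.trans hTL
    set M : ℝ := A * 2 ^ β * T ^ (β - 1) with hMdef
    have hM0 : 0 < M := by rw [hMdef]; positivity
    set k : ℝ := s T / (M * M) with hkdef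
    have hsTlb : a / (2 * α) * T ^ α ≤ s T := hslb T hTT1
    have hsT0 : 0 < s T := lt_of_lt_of_le (by positivity) hsTlb
    have hk0 : 0 ≤ k := by rw [hkdef]; positivity
    -- pointwise bound on the square
    have hpt : ∀ x ∈ Ioc T (2 * T), ∀ y ∈ Ioc T (2 * T),
        ENNReal.ofReal k ≤ ENNReal.ofReal (min |s x| |s y| / (s' x * s' y)) := by
      intro x hx y hy
      have hx0 : 0 < x := lt_trans hT0 hx.1
      have hy0 : 0 < y := lt_trans hT0 hy.1
      have hsx : s T ≤ s x := hsmono T x hT1' hx.1.le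
      have hsy : s T ≤ s y := hsmono T y hT1' hy.1.le
      have habsx : s T ≤ |s x| := hsx.trans (le_abs_self _)
      have habsy : s T ≤ |s y| := hsy.trans (le_abs_self _)
      have hmin : s T ≤ min |s x| |s y| := le_min habsx habsy
      have hs'x : s' x ≤ M := hs'ub2 T x hTL hx.1.le hx.2
      have hs'y : s' y ≤ M := hs'ub2 T y hTL hy.1.le hy.2
      have hs'x0 : 0 < s' x := hs'pos x hx0
      have hs'y0 : 0 < s' y := hs'pos y hy0
      refine ENNReal.ofReal_le_ofReal ?_
      rw [hkdef]
      refine div_le_div₀ (le_trans hsT0.le hmin) hmin (mul_pos hs'x0 hs'y0) ?_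
      exact mul_le_mul hs'x hs'y hs'y0.le hM0.le
    -- inner integral bound
    have hsub : Ioc T (2 * T) ⊆ Ioi (1:ℝ) := fun z hz => lt_of_le_of_lt hT1' hz.1
    have hvol : (volume.restrict (Ioi (1:ℝ))) (Ioc T (2 * T)) = ENNReal.ofReal T := by
      rw [Measure.restrict_apply measurableSet_Ioc, inter_eq_left.2 hsub,
        Real.volume_Ioc]
      congr 1
      ring
    have step1 : ∀ x ∈ Ioc T (2 * T),
        ENNReal.ofReal k * ENNReal.ofReal T ≤
          ∫⁻ y in Ioi (1:ℝ), ENNReal.ofReal (min |s x| |s y| / (s' x * s' y)) := by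
      intro x hx
      calc ENNReal.ofReal k * ENNReal.ofReal T
          = ∫⁻ y, (Ioc T (2 * T)).indicator (fun _ => ENNReal.ofReal k) y
              ∂(volume.restrict (Ioi (1:ℝ))) := by
            rw [lintegral_indicator_const measurableSet_Ioc, hvol]
        _ ≤ ∫⁻ y in Ioi (1:ℝ), ENNReal.ofReal (min |s x| |s y| / (s' x * s' y)) := by
            refine lintegral_mono fun y => ?_
            by_cases hy : y ∈ Ioc T (2 * T)
            · rw [indicator_of_mem hy]
              exact hpt x hx y hy
            · rw [indicator_of_notMem hy]
              exact zero_le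
    -- outer integral bound
    have step2 : ENNReal.ofReal k * ENNReal.ofReal T * ENNReal.ofReal T ≤ I := by
      calc ENNReal.ofReal k * ENNReal.ofReal T * ENNReal.ofReal T
          = ∫⁻ x, (Ioc T (2 * T)).indicator
              (fun _ => ENNReal.ofReal k * ENNReal.ofReal T) x
              ∂(volume.restrict (Ioi (1:ℝ))) := by
            rw [lintegral_indicator_const measurableSet_Ioc, hvol]
        _ ≤ I := by
            rw [hIdef]
            refine lintegral_mono fun x => ?_
            by_cases hx : x ∈ Ioc T (2 * T)
            · rw [indicator_of_mem hx]
              exact step1 x hx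
            · rw [indicator_of_notMem hx]
              exact zero_le
    -- arithmetic: r ≤ k * T * T
    have hrk : r ≤ k * T * T := by
      refine hTr.trans ?_
      have hTpow : T ^ δ = T ^ α * T ^ (1:ℝ) * T ^ (1:ℝ) / (T ^ (β-1) * T ^ (β-1)) := by
        rw [← Real.rpow_add hT0, ← Real.rpow_add hT0, ← Real.rpow_add hT0,
          ← Real.rpow_sub hT0]
        congr 1
        rw [hδdef, hαdef, hβdef]
        ring
      have hc_eq : c * T ^ δ = (a / (2 * α) * T ^ α) / (M * M) * T * T := by
        rw [hTpow, Real.rpow_one, hcdef, hMdef]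
        have h1 : (0:ℝ) < T ^ (β - 1) := Real.rpow_pos_of_pos hT0 _
        field_simp
      rw [hc_eq, hkdef]
      have hdd : a / (2 * α) * T ^ α / (M * M) ≤ s T / (M * M) :=
        div_le_div_of_nonneg_right hsTlb (by positivity)
      have := mul_le_mul_of_nonneg_right
        (mul_le_mul_of_nonneg_right hdd hT0.le) hT0.le
      linarith
    calc ENNReal.ofReal r ≤ ENNReal.ofReal (k * T * T) := ENNReal.ofReal_le_ofReal hrk
      _ = ENNReal.ofReal k * ENNReal.ofReal T * ENNReal.ofReal T := by
          rw [ENNReal.ofReal_mul (by positivity), ENNReal.ofReal_mul hk0]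
      _ ≤ I := step2
  -- conclude
  by_contra hne
  have h1 := key (I.toReal + 1)
  have h2 : I ≤ ENNReal.ofReal I.toReal := le_of_eq (ENNReal.ofReal_toReal hne).symm
  have h4 := (ENNReal.ofReal_le_ofReal_iff ENNReal.toReal_nonneg).1 (h1.trans h2)
  linarith
end

section
/- The integral I_2 := ∫_0^1 ∫_0^1 (min(|s(x)|, |s(y)|)) / (s'(x)·s'(y)) dx dy is always finite (since s'(x) ~ 1/x as x → 0, so |s(x)| grows only logarithmically and 1/s'(x) vanishes linearly at 0). -/
open MeasureTheory Set Filter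

/-- The integral `I₂ = ∫_0^1 ∫_0^1 (min(|s(x)|,|s(y)|))/(s'(x)s'(y)) dx dy` is always
finite, where `s'(x) = x⁻¹·exp(G(x))` and `s(x) = ∫_1^x s'(u) du`. -/
theorem stmt_12 (φ h G s' s : ℝ → ℝ)
    (hφm : Measurable φ)
    (hφb : ∃ C : ℝ, ∀ u, 0 ≤ u → |φ u| ≤ C)
    (hh : ∀ l, h l = ∫ u in (0:ℝ)..l, φ u)
    (hG : ∀ x, G x = ∫ l in (0:ℝ)..x, h l / l)
    (hs' : ∀ x, 0 < x → s' x = x⁻¹ * Real.exp (G x))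
    (hs : ∀ x, 0 < x → s x = ∫ u in (1:ℝ)..x, s' u) :
    (∫⁻ x in Ioo (0:ℝ) 1, ∫⁻ y in Ioo (0:ℝ) 1,
      ENNReal.ofReal (min |s x| |s y| / (s' x * s' y))) < ⊤ := by
  obtain ⟨C, hC⟩ := hφb
  set C' : ℝ := max C 0 with hC'def
  have hC'0 : 0 ≤ C' := le_max_right _ _
  set K : ℝ := Real.exp C' with hKdef
  have hK1 : 1 ≤ K := Real.one_le_exp hC'0
  have hK0 : 0 < K := lt_of_lt_of_le one_pos hK1
  -- |h l| ≤ C' * l for l ≥ 0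
  have hhb : ∀ l : ℝ, 0 ≤ l → |h l| ≤ C' * l := by
    intro l hl
    rw [hh l]
    have key := intervalIntegral.norm_integral_le_of_norm_le_const
      (a := 0) (b := l) (C := C') (f := φ) (by
        intro u hu
        rw [Set.uIoc_of_le hl] at hu
        exact le_trans (hC u hu.1.le) (le_max_left _ _))
    simpa [abs_of_nonneg hl] using key
  -- |G x| ≤ C' for x ∈ (0,1]
  have hGb : ∀ x : ℝ, 0 < x → x ≤ 1 → |G x| ≤ C' := by
    intro x hx hx1
    rw [hG x]
    have key := intervalIntegral.norm_integral_le_of_norm_le_const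
      (a := 0) (b := x) (C := C') (f := fun l => h l / l) (by
        intro l hl
        rw [Set.uIoc_of_le hx.le] at hl
        have hl0 : 0 < l := hl.1
        have : |h l / l| = |h l| / l := by rw [abs_div, abs_of_pos hl0]
        rw [Real.norm_eq_abs, this, div_le_iff₀ hl0]
        exact hhb l hl0.le)
    calc ‖∫ l in (0:ℝ)..x, h l / l‖ ≤ C' * |x - 0| := key
      _ = C' * x := by rw [sub_zero, abs_of_pos hx]
      _ ≤ C' * 1 := by nlinarith
      _ = C' := mul_one _
  -- bounds on s' on (0,1]
  have hs'lb : ∀ u : ℝ, 0 < u → u ≤ 1 → u⁻¹ * K⁻¹ ≤ s' u := by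
    intro u hu hu1
    rw [hs' u hu]
    have : Real.exp (-C') ≤ Real.exp (G u) :=
      Real.exp_le_exp.2 (neg_le_of_abs_le (hGb u hu hu1))
    rw [← Real.exp_neg] at *
    exact mul_le_mul_of_nonneg_left this (inv_nonneg.2 hu.le)
  have hs'ub : ∀ u : ℝ, 0 < u → u ≤ 1 → s' u ≤ u⁻¹ * K := by
    intro u hu hu1
    rw [hs' u hu]
    have : Real.exp (G u) ≤ K := Real.exp_le_exp.2 (le_of_abs_le (hGb u hu hu1))
    exact mul_le_mul_of_nonneg_left this (inv_nonneg.2 hu.le)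
  have hs'pos : ∀ u : ℝ, 0 < u → u ≤ 1 → 0 < s' u := by
    intro u hu hu1
    refine lt_of_lt_of_le ?_ (hs'lb u hu hu1)
    positivity
  -- bound on |s x| on (0,1)
  have hsb : ∀ x : ℝ, 0 < x → x < 1 → |s x| ≤ x⁻¹ * K := by
    intro x hx hx1
    rw [hs x hx]
    have key := intervalIntegral.norm_integral_le_of_norm_le_const
      (a := 1) (b := x) (C := x⁻¹ * K) (f := s') (by
        intro u hu
        rw [Set.uIoc_comm, Set.uIoc_of_le hx1.le] at hu
        have hu0 : 0 < u := lt_trans hx hu.1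
        have h1 : s' u ≤ u⁻¹ * K := hs'ub u hu0 hu.2
        have h2 : u⁻¹ ≤ x⁻¹ := inv_anti₀ hx hu.1.le
        rw [Real.norm_eq_abs, abs_of_pos (hs'pos u hu0 hu.2)]
        nlinarith)
    calc ‖∫ u in (1:ℝ)..x, s' u‖ ≤ x⁻¹ * K * |x - 1| := key
      _ ≤ x⁻¹ * K * 1 := by
          have habs : |x - 1| ≤ 1 := by rw [abs_le]; constructor <;> nlinarith
          exact mul_le_mul_of_nonneg_left habs
            (mul_nonneg (inv_nonneg.2 hx.le) hK0.le)
      _ = x⁻¹ * K := mul_one _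
  -- pointwise bound of the integrand
  have key : ∀ x ∈ Ioo (0:ℝ) 1, ∀ y ∈ Ioo (0:ℝ) 1,
      min |s x| |s y| / (s' x * s' y) ≤ K ^ 3 := by
    intro x hx y hy
    have hsx := hs'pos x hx.1 hx.2.le
    have hsy := hs'pos y hy.1 hy.2.le
    rw [div_le_iff₀ (mul_pos hsx hsy)]
    have hKi : 0 < K⁻¹ := inv_pos.2 hK0
    have h1 : x⁻¹ * K⁻¹ * (y⁻¹ * K⁻¹) ≤ s' x * s' y :=
      mul_le_mul (hs'lb x hx.1 hx.2.le) (hs'lb y hy.1 hy.2.le)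
        (mul_nonneg (inv_nonneg.2 hy.1.le) hKi.le) hsx.le
    have h2 : K ^ 3 * (x⁻¹ * K⁻¹ * (y⁻¹ * K⁻¹)) = K * x⁻¹ * y⁻¹ := by
      have hc : K * K⁻¹ = 1 := mul_inv_cancel₀ hK0.ne'
      linear_combination (K * (K * K⁻¹ + 1) * (x⁻¹ * y⁻¹)) * hc
    have h3 : min |s x| |s y| ≤ K * x⁻¹ * y⁻¹ := by
      have hy1 : 1 ≤ y⁻¹ := by
        nlinarith [inv_pos.2 hy.1, mul_inv_cancel₀ hy.1.ne', hy.1, hy.2]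
      calc min |s x| |s y| ≤ |s x| := min_le_left _ _
        _ ≤ x⁻¹ * K := hsb x hx.1 hx.2
        _ = K * x⁻¹ * 1 := by ring
        _ ≤ K * x⁻¹ * y⁻¹ :=
            mul_le_mul_of_nonneg_left hy1
              (mul_nonneg hK0.le (inv_nonneg.2 hx.1.le))
    calc min |s x| |s y| ≤ K * x⁻¹ * y⁻¹ := h3
      _ = K ^ 3 * (x⁻¹ * K⁻¹ * (y⁻¹ * K⁻¹)) := h2.symm
      _ ≤ K ^ 3 * (s' x * s' y) :=
          mul_le_mul_of_nonneg_left h1 (pow_nonneg hK0.le 3)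
  -- conclude
  have step1 : (∫⁻ x in Ioo (0:ℝ) 1, ∫⁻ y in Ioo (0:ℝ) 1,
      ENNReal.ofReal (min |s x| |s y| / (s' x * s' y)))
      ≤ ∫⁻ _x in Ioo (0:ℝ) 1, ENNReal.ofReal (K ^ 3) := by
    apply setLIntegral_mono measurable_const
    intro x hx
    calc (∫⁻ y in Ioo (0:ℝ) 1, ENNReal.ofReal (min |s x| |s y| / (s' x * s' y)))
        ≤ ∫⁻ _y in Ioo (0:ℝ) 1, ENNReal.ofReal (K ^ 3) := by
          apply setLIntegral_mono measurable_const
          intro y hy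
          exact ENNReal.ofReal_le_ofReal (key x hx y hy)
      _ = ENNReal.ofReal (K ^ 3) * volume (Ioo (0:ℝ) 1) := setLIntegral_const _ _
      _ ≤ ENNReal.ofReal (K ^ 3) := by
          rw [Real.volume_Ioo]
          simp
  refine lt_of_le_of_lt step1 ?_
  calc (∫⁻ _x in Ioo (0:ℝ) 1, ENNReal.ofReal (K ^ 3))
      = ENNReal.ofReal (K ^ 3) * volume (Ioo (0:ℝ) 1) := setLIntegral_const _ _
    _ ≤ ENNReal.ofReal (K ^ 3) := by rw [Real.volume_Ioo]; simp
    _ < ⊤ := ENNReal.ofReal_lt_top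
end

section
/- Suppose that (h(l) − 1)·ln(l) converges to a finite limit α as l → ∞. If α < 1 then ∫_0^∞ exp(−G(x)) dx = +∞, while if α > 1 then ∫_0^∞ exp(−G(x)) dx < +∞. (This shows that in the critical case h_∞ = 1 both the recurrent and the transient regimes can occur.) -/
open MeasureTheory Set Filter

lemma auxD_deriv (β y : ℝ) (hy : 1 < y) :
    HasDerivAt (fun z => Real.log z + β * Real.log (Real.log z))
      (1/y + β * (1/(y * Real.log y))) y := by
  have hy0 : y ≠ 0 := by positivity
  have hlog : 0 < Real.log y := Real.log_pos hy
  have h1 : HasDerivAt Real.log y⁻¹ y := Real.hasDerivAt_log hy0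
  have h2 : HasDerivAt (fun z => Real.log (Real.log z)) ((Real.log y)⁻¹ * y⁻¹) y :=
    (Real.hasDerivAt_log hlog.ne').comp y h1
  have := h1.add (h2.const_mul β)
  refine this.congr_deriv ?_
  rw [one_div, one_div, mul_inv]
  ring

lemma auxexp_eq (β y : ℝ) (hy : 1 < y) :
    Real.exp (-(Real.log y + β * Real.log (Real.log y))) = y⁻¹ * (Real.log y) ^ (-β) := by
  have hy0 : 0 < y := by linarith
  have hlog : 0 < Real.log y := Real.log_pos hy
  rw [Real.rpow_def_of_pos hlog, neg_add, Real.exp_add, Real.exp_neg, Real.exp_log hy0]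
  ring_nf

lemma auxw_deriv (β : ℝ) (hβ : β ≠ 1) {y : ℝ} (hy : 1 < y) :
    HasDerivAt (fun z => (Real.log z) ^ (1-β) / (1-β))
      (Real.exp (-(Real.log y + β * Real.log (Real.log y)))) y := by
  have hy0 : y ≠ 0 := by positivity
  have hlog : 0 < Real.log y := Real.log_pos hy
  have h1 : HasDerivAt Real.log y⁻¹ y := Real.hasDerivAt_log hy0
  have h2 := (Real.hasDerivAt_rpow_const (x := Real.log y) (p := 1-β)
    (Or.inl hlog.ne')).comp y h1
  have h3 := h2.div_const (1-β)
  refine h3.congr_deriv ?_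
  have hne : (1:ℝ) - β ≠ 0 := sub_ne_zero.2 (fun hh => hβ hh.symm)
  rw [auxexp_eq β y hy, show (1:ℝ) - β - 1 = -β by ring]
  field_simp

lemma auxftc (β l₀ x : ℝ) (h1 : 1 < l₀) (hx : l₀ ≤ x) :
    ∫ l in l₀..x, (1/l + β * (1/(l * Real.log l)))
      = (Real.log x + β * Real.log (Real.log x)) - (Real.log l₀ + β * Real.log (Real.log l₀)) := by
  apply intervalIntegral.integral_eq_sub_of_hasDerivAt
  · intro t ht
    rw [uIcc_of_le hx] at ht
    exact auxD_deriv β t (lt_of_lt_of_le h1 ht.1)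
  · apply ContinuousOn.intervalIntegrable
    intro t ht
    rw [uIcc_of_le hx] at ht
    have ht1 : 1 < t := lt_of_lt_of_le h1 ht.1
    have ht0 : t ≠ 0 := by positivity
    have hlog : 0 < Real.log t := Real.log_pos ht1
    exact (((continuousAt_const.div continuousAt_id ht0).add (continuousAt_const.mul
      (continuousAt_const.div (continuousAt_id.mul (Real.continuousAt_log ht0))
        (mul_pos (show (0:ℝ) < t by linarith) hlog).ne'))).continuousWithinAt)

lemma auxftc2 (β l₀ x : ℝ) (hβ : β ≠ 1) (h1 : 1 < l₀) (hx : l₀ ≤ x) :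
    ∫ y in l₀..x, Real.exp (-(Real.log y + β * Real.log (Real.log y)))
      = (Real.log x) ^ (1-β) / (1-β) - (Real.log l₀) ^ (1-β) / (1-β) := by
  apply intervalIntegral.integral_eq_sub_of_hasDerivAt
  · intro t ht
    rw [uIcc_of_le hx] at ht
    exact auxw_deriv β hβ (lt_of_lt_of_le h1 ht.1)
  · apply ContinuousOn.intervalIntegrable
    intro t ht
    rw [uIcc_of_le hx] at ht
    have ht1 : 1 < t := lt_of_lt_of_le h1 ht.1
    exact (Real.continuous_exp.continuousAt.comp
      ((auxD_deriv β t ht1).differentiableAt.continuousAt.neg)).continuousWithinAt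

/-- If `(h(l) - 1)·ln(l) → α` as `l → ∞`, then `∫_0^∞ exp(-G(x)) dx = +∞` when `α < 1`
and `∫_0^∞ exp(-G(x)) dx < +∞` when `α > 1`. -/
theorem stmt_13 (φ h G : ℝ → ℝ)
    (hφm : Measurable φ)
    (hφb : ∃ C : ℝ, ∀ u, 0 ≤ u → |φ u| ≤ C)
    (hh : ∀ l, h l = ∫ u in (0:ℝ)..l, φ u)
    (hG : ∀ x, G x = ∫ l in (0:ℝ)..x, h l / l)
    (α : ℝ) (hlim : Tendsto (fun l => (h l - 1) * Real.log l) atTop (nhds α)) :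
    (α < 1 → (∫⁻ x in Ioi (0:ℝ), ENNReal.ofReal (Real.exp (-(G x)))) = ⊤) ∧
    (1 < α → (∫⁻ x in Ioi (0:ℝ), ENNReal.ofReal (Real.exp (-(G x)))) < ⊤) := by
  obtain ⟨C, hC⟩ := hφb
  have hC0 : 0 ≤ C := (abs_nonneg _).trans (hC 0 le_rfl)
  set ψ : ℝ → ℝ := fun u => if 0 ≤ u then φ u else 0 with hψdef
  have hψm : Measurable ψ := Measurable.ite measurableSet_Ici hφm measurable_const
  have hψb : ∀ u, |ψ u| ≤ C := by
    intro u
    by_cases hu : 0 ≤ u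
    · simpa [hψdef, hu] using hC u hu
    · simp [hψdef, hu, hC0]
  have hψint : ∀ a b : ℝ, IntervalIntegrable ψ volume a b := by
    intro a b
    refine (intervalIntegrable_const (c := C)).mono_fun hψm.aestronglyMeasurable
      (ae_of_all _ ?_)
    intro u
    simpa [Real.norm_eq_abs, abs_of_nonneg hC0] using hψb u
  set H : ℝ → ℝ := fun x => ∫ u in (0:ℝ)..x, ψ u with hHdef
  have hHcont : Continuous H := intervalIntegral.continuous_primitive hψint 0
  have hhH : ∀ l, 0 ≤ l → h l = H l := by
    intro l hl
    rw [hh l, hHdef]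
    apply intervalIntegral.integral_congr
    intro u hu
    rw [uIcc_of_le hl] at hu
    simp [hψdef, hu.1]
  have hHbd : ∀ l, 0 ≤ l → |H l| ≤ C * l := by
    intro l hl
    have := intervalIntegral.norm_integral_le_of_norm_le_const (a := 0) (b := l) (C := C)
      (f := ψ) (fun u _ => by rw [Real.norm_eq_abs]; exact hψb u)
    simpa [Real.norm_eq_abs, abs_of_nonneg hl] using this
  set g : ℝ → ℝ := fun l => if 0 < l then H l / l else 0 with hgdef
  have hgm : Measurable g :=
    Measurable.ite measurableSet_Ioi (hHcont.measurable.div measurable_id) measurable_const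
  have hgb : ∀ l, |g l| ≤ C := by
    intro l
    by_cases hl : 0 < l
    · simp only [hgdef, if_pos hl]
      rw [abs_div, abs_of_pos hl, div_le_iff₀ hl]
      exact hHbd l hl.le
    · simp [hgdef, hl, hC0]
  have hgint : ∀ a b : ℝ, IntervalIntegrable g volume a b := by
    intro a b
    refine (intervalIntegrable_const (c := C)).mono_fun hgm.aestronglyMeasurable
      (ae_of_all _ ?_)
    intro u
    simpa [Real.norm_eq_abs, abs_of_nonneg hC0] using hgb u
  have hGg : ∀ x : ℝ, 0 ≤ x → G x = ∫ l in (0:ℝ)..x, g l := by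
    intro x hx
    rw [hG x]
    apply intervalIntegral.integral_congr
    intro l hl
    rw [uIcc_of_le hx] at hl
    rcases eq_or_lt_of_le hl.1 with hl0 | hl0
    · simp [hgdef, ← hl0]
    · rw [hgdef]
      simp only [if_pos hl0]
      rw [hhH l hl0.le]
  have hGadd : ∀ a x : ℝ, 0 ≤ a → a ≤ x → G x = G a + ∫ l in a..x, g l := by
    intro a x ha hax
    rw [hGg a ha, hGg x (ha.trans hax)]
    exact (intervalIntegral.integral_add_adjacent_intervals (hgint 0 a) (hgint a x)).symm
  have hGbd : ∀ x : ℝ, 0 ≤ x → |G x| ≤ C * x := by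
    intro x hx
    rw [hGg x hx]
    have := intervalIntegral.norm_integral_le_of_norm_le_const (a := 0) (b := x) (C := C)
      (f := g) (fun u _ => by rw [Real.norm_eq_abs]; exact hgb u)
    simpa [Real.norm_eq_abs, abs_of_nonneg hx] using this
  -- continuity of the upper/lower comparison integrand
  have hcontbd : ∀ (β l₀ x : ℝ), 1 < l₀ → l₀ ≤ x →
      IntervalIntegrable (fun l => 1/l + β * (1/(l * Real.log l))) volume l₀ x := by
    intro β l₀ x h1 hx
    apply ContinuousOn.intervalIntegrable
    intro t ht
    rw [uIcc_of_le hx] at ht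
    have ht1 : 1 < t := lt_of_lt_of_le h1 ht.1
    have ht0 : t ≠ 0 := by positivity
    have hlogt : 0 < Real.log t := Real.log_pos ht1
    exact ((continuousAt_const.div continuousAt_id ht0).add (continuousAt_const.mul
      (continuousAt_const.div (continuousAt_id.mul (Real.continuousAt_log ht0))
        (mul_pos (show (0:ℝ) < t by linarith) hlogt).ne'))).continuousWithinAt
  constructor
  · -- α < 1 : divergence
    intro hα
    set β := (α+1)/2 with hβdef
    have hαβ : α < β := by rw [hβdef]; linarith
    have hβ1 : β < 1 := by rw [hβdef]; linarith
    obtain ⟨l₁, hl₁⟩ := eventually_atTop.1 (hlim.eventually_le_const hαβ)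
    set l₀ := max l₁ 3 with hl₀def
    have hl₀3 : (3:ℝ) ≤ l₀ := le_max_right _ _
    have hl₀1 : (1:ℝ) < l₀ := by linarith
    have hl₀0 : (0:ℝ) < l₀ := by linarith
    set D : ℝ → ℝ := fun y => Real.log y + β * Real.log (Real.log y) with hDdef
    set K := Real.exp (D l₀ - G l₀) with hKdef
    have hKpos : 0 < K := Real.exp_pos _
    have key : ∀ x : ℝ, l₀ ≤ x → G x ≤ G l₀ + (D x - D l₀) := by
      intro x hx
      rw [hGadd l₀ x hl₀0.le hx]
      have hmono : (∫ l in l₀..x, g l)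
          ≤ ∫ l in l₀..x, (1/l + β * (1/(l * Real.log l))) := by
        apply intervalIntegral.integral_mono_on hx (hgint l₀ x) (hcontbd β l₀ x hl₀1 hx)
        intro l hl
        have hl1 : 1 < l := lt_of_lt_of_le hl₀1 hl.1
        have hl0 : 0 < l := by linarith
        have hlog : 0 < Real.log l := Real.log_pos hl1
        have hhl : (h l - 1) * Real.log l ≤ β := hl₁ l (le_trans (le_max_left _ _) hl.1)
        have hhl2 : h l - 1 ≤ β / Real.log l := (le_div_iff₀ hlog).2 hhl
        rw [hgdef]
        simp only [if_pos hl0]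
        rw [← hhH l hl0.le]
        calc h l / l ≤ (1 + β / Real.log l) / l :=
              (div_le_div_iff_of_pos_right hl0).2 (by linarith)
          _ = 1/l + β * (1/(l * Real.log l)) := by
              field_simp
      rw [auxftc β l₀ x hl₀1 hx] at hmono
      simp only [hDdef]
      linarith
    have main : ∀ X : ℝ, l₀ ≤ X →
        ENNReal.ofReal (K * ((Real.log X)^(1-β)/(1-β) - (Real.log l₀)^(1-β)/(1-β)))
          ≤ ∫⁻ x in Ioi (0:ℝ), ENNReal.ofReal (Real.exp (-(G x))) := by
      intro X hX
      have hsub : Ioc l₀ X ⊆ Ioi (0:ℝ) := fun t ht => lt_trans hl₀0 ht.1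
      refine le_trans ?_ (lintegral_mono_set hsub)
      have hint : IntegrableOn (fun x => K * Real.exp (-(D x))) (Ioc l₀ X) := by
        apply (ContinuousOn.integrableOn_Icc ?_).mono_set Ioc_subset_Icc_self
        intro t ht
        have ht1 : 1 < t := lt_of_lt_of_le hl₀1 ht.1
        exact (continuousAt_const.mul (Real.continuous_exp.continuousAt.comp
          ((auxD_deriv β t ht1).differentiableAt.continuousAt.neg))).continuousWithinAt
      calc ENNReal.ofReal (K * ((Real.log X)^(1-β)/(1-β) - (Real.log l₀)^(1-β)/(1-β)))
          = ENNReal.ofReal (∫ x in Ioc l₀ X, K * Real.exp (-(D x))) := by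
            rw [← intervalIntegral.integral_of_le hX, intervalIntegral.integral_const_mul]
            congr 1
            rw [hDdef]
            rw [auxftc2 β l₀ X hβ1.ne hl₀1 hX]
        _ = ∫⁻ x in Ioc l₀ X, ENNReal.ofReal (K * Real.exp (-(D x))) :=
            ofReal_integral_eq_lintegral_ofReal hint (ae_of_all _ fun x => by positivity)
        _ ≤ ∫⁻ x in Ioc l₀ X, ENNReal.ofReal (Real.exp (-(G x))) := by
            apply setLIntegral_mono' measurableSet_Ioc
            intro x hx
            apply ENNReal.ofReal_le_ofReal
            have hk := key x hx.1.le
            rw [hKdef, ← Real.exp_add]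
            apply Real.exp_le_exp.2
            linarith
    by_contra hne
    have hItop : (∫⁻ x in Ioi (0:ℝ), ENNReal.ofReal (Real.exp (-(G x)))) ≠ ⊤ := hne
    set I := ∫⁻ x in Ioi (0:ℝ), ENNReal.ofReal (Real.exp (-(G x))) with hIdef
    have h1β : 0 < 1 - β := by linarith
    have hA : Tendsto (fun X : ℝ => (Real.log X)^(1-β)/(1-β)) atTop atTop :=
      ((tendsto_rpow_atTop h1β).comp Real.tendsto_log_atTop).atTop_div_const h1β
    have htend : Tendsto
        (fun X : ℝ => K * ((Real.log X)^(1-β)/(1-β) - (Real.log l₀)^(1-β)/(1-β)))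
        atTop atTop := by
      apply Tendsto.const_mul_atTop hKpos
      have := tendsto_atTop_add_const_right atTop (-((Real.log l₀)^(1-β)/(1-β))) hA
      simpa [sub_eq_add_neg] using this
    obtain ⟨X, hX2, hX1⟩ :=
      ((htend.eventually_ge_atTop (I.toReal + 1)).and (eventually_ge_atTop l₀)).exists
    have hmain := main X hX1
    have hle := ENNReal.toReal_mono hItop hmain
    rw [ENNReal.toReal_ofReal (by linarith [ENNReal.toReal_nonneg (a := I)])] at hle
    linarith [ENNReal.toReal_nonneg (a := I)]
  · -- α > 1 : convergence
    intro hα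
    set β := (α+1)/2 with hβdef
    have hβα : β < α := by rw [hβdef]; linarith
    have hβ1 : 1 < β := by rw [hβdef]; linarith
    obtain ⟨l₁, hl₁⟩ := eventually_atTop.1 (hlim.eventually_const_lt hβα)
    set l₀ := max l₁ 3 with hl₀def
    have hl₀3 : (3:ℝ) ≤ l₀ := le_max_right _ _
    have hl₀1 : (1:ℝ) < l₀ := by linarith
    have hl₀0 : (0:ℝ) < l₀ := by linarith
    set D : ℝ → ℝ := fun y => Real.log y + β * Real.log (Real.log y) with hDdef
    set K := Real.exp (D l₀ - G l₀) with hKdef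
    have key : ∀ x : ℝ, l₀ ≤ x → G l₀ + (D x - D l₀) ≤ G x := by
      intro x hx
      rw [hGadd l₀ x hl₀0.le hx]
      have hmono : (∫ l in l₀..x, (1/l + β * (1/(l * Real.log l))))
          ≤ ∫ l in l₀..x, g l := by
        apply intervalIntegral.integral_mono_on hx (hcontbd β l₀ x hl₀1 hx) (hgint l₀ x)
        intro l hl
        have hl1 : 1 < l := lt_of_lt_of_le hl₀1 hl.1
        have hl0 : 0 < l := by linarith
        have hlog : 0 < Real.log l := Real.log_pos hl1
        have hhl : β ≤ (h l - 1) * Real.log l :=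
          (hl₁ l (le_trans (le_max_left _ _) hl.1)).le
        have hhl2 : β / Real.log l ≤ h l - 1 := (div_le_iff₀ hlog).2 hhl
        rw [hgdef]
        simp only [if_pos hl0]
        rw [← hhH l hl0.le]
        calc 1/l + β * (1/(l * Real.log l)) = (1 + β / Real.log l) / l := by
              field_simp
          _ ≤ h l / l :=
              (div_le_div_iff_of_pos_right hl0).2 (by linarith)
      rw [auxftc β l₀ x hl₀1 hx] at hmono
      simp only [hDdef]
      linarith
    have hIOI : IntegrableOn (fun x => Real.exp (-(D x))) (Ioi l₀) := by
      apply integrableOn_Ioi_deriv_of_nonneg'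
        (g := fun z => (Real.log z)^(1-β)/(1-β)) (l := 0)
        (fun x hx => auxw_deriv β hβ1.ne' (lt_of_lt_of_le hl₀1 hx))
        (fun x _ => (Real.exp_pos _).le)
      have h1β : 0 < β - 1 := by linarith
      have h2 := ((tendsto_rpow_neg_atTop h1β).comp Real.tendsto_log_atTop).div_const (1-β)
      simpa [show -(β-1) = 1-β by ring] using h2
    rw [show Ioi (0:ℝ) = Ioc 0 l₀ ∪ Ioi l₀ from (Ioc_union_Ioi_eq_Ioi hl₀0.le).symm]
    apply lt_of_le_of_lt (lintegral_union_le _ _ _)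
    apply ENNReal.add_lt_top.2
    constructor
    · calc ∫⁻ x in Ioc (0:ℝ) l₀, ENNReal.ofReal (Real.exp (-(G x)))
          ≤ ∫⁻ _x in Ioc (0:ℝ) l₀, ENNReal.ofReal (Real.exp (C * l₀)) := by
            apply setLIntegral_mono' measurableSet_Ioc
            intro x hx
            apply ENNReal.ofReal_le_ofReal
            apply Real.exp_le_exp.2
            have h2 : C * x ≤ C * l₀ := mul_le_mul_of_nonneg_left hx.2 hC0
            linarith [(abs_le.1 (hGbd x hx.1.le)).1]
        _ = ENNReal.ofReal (Real.exp (C * l₀)) * volume (Ioc (0:ℝ) l₀) :=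
            setLIntegral_const _ _
        _ < ⊤ := by
            rw [Real.volume_Ioc]
            exact ENNReal.mul_lt_top ENNReal.ofReal_lt_top ENNReal.ofReal_lt_top
    · calc ∫⁻ x in Ioi l₀, ENNReal.ofReal (Real.exp (-(G x)))
          ≤ ∫⁻ x in Ioi l₀, ENNReal.ofReal (K * Real.exp (-(D x))) := by
            apply setLIntegral_mono' measurableSet_Ioi
            intro x hx
            apply ENNReal.ofReal_le_ofReal
            rw [hKdef, ← Real.exp_add]
            exact Real.exp_le_exp.2 (by linarith [key x (le_of_lt hx)])
        _ < ⊤ := by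
            have hint2 : Integrable (fun x => K * Real.exp (-(D x)))
                (volume.restrict (Ioi l₀)) := hIOI.const_mul K
            exact (hasFiniteIntegral_iff_ofReal
              (ae_of_all _ fun x => by positivity)).1 hint2.hasFiniteIntegral
end

section
/- Suppose h(l) converges to a finite limit h_∞ as l → ∞ and h_∞ > 0. Then for every ε > 0 there exists Y ≥ 1 such that for all y ≥ Y one has y^{3 − h_∞ − ε} ≤ (1/s'(y))·∫_1^y (s(x)/s'(x)) dx ≤ y^{3 − h_∞ + ε}. -/
open MeasureTheory Set Filter

/-- A function with a Lipschitz-type bound on a set is continuous on it. -/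
lemma lipCont {f : ℝ → ℝ} {t : Set ℝ} {C : ℝ} (hC : 0 ≤ C)
    (hf : ∀ x ∈ t, ∀ y ∈ t, |f x - f y| ≤ C * |x - y|) : ContinuousOn f t := by
  have : LipschitzOnWith (Real.toNNReal C) f t := by
    apply LipschitzOnWith.of_dist_le_mul
    intro x hx y hy
    simpa [Real.dist_eq, Real.coe_toNNReal C hC] using hf x hx y hy
  exact this.continuousOn

set_option maxHeartbeats 2000000 in
/-- If `h(l) → h∞ > 0` as `l → ∞`, then for every `ε > 0`, for all large `y`,
`y^(3-h∞-ε) ≤ (1/s'(y))·∫_1^y s(x)/s'(x) dx ≤ y^(3-h∞+ε)`. -/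
theorem stmt_15 (φ h G s' s : ℝ → ℝ)
    (hφm : Measurable φ)
    (hφb : ∃ C : ℝ, ∀ u, 0 ≤ u → |φ u| ≤ C)
    (hh : ∀ l, h l = ∫ u in (0:ℝ)..l, φ u)
    (hG : ∀ x, G x = ∫ l in (0:ℝ)..x, h l / l)
    (hs' : ∀ x, 0 < x → s' x = x⁻¹ * Real.exp (G x))
    (hs : ∀ x, 0 < x → s x = ∫ u in (1:ℝ)..x, s' u)
    (hinfty : ℝ) (hlim : Tendsto h atTop (nhds hinfty)) (hpos : 0 < hinfty) :
    ∀ ε : ℝ, 0 < ε → ∃ Y : ℝ, 1 ≤ Y ∧ ∀ y, Y ≤ y →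
      y ^ (3 - hinfty - ε) ≤ (1 / s' y) * ∫ x in (1:ℝ)..y, s x / s' x ∧
      (1 / s' y) * ∫ x in (1:ℝ)..y, s x / s' x ≤ y ^ (3 - hinfty + ε) := by
  intro ε hε
  obtain ⟨C₀, hC₀⟩ := hφb
  set C : ℝ := max C₀ 1 with hCdef
  have hC1 : (1:ℝ) ≤ C := le_max_right _ _
  have hC0 : (0:ℝ) < C := lt_of_lt_of_le one_pos hC1
  have hCb : ∀ u, 0 ≤ u → |φ u| ≤ C := fun u hu => (hC₀ u hu).trans (le_max_left _ _)
  -- φ interval integrable on nonneg intervals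
  have hφint : ∀ a b : ℝ, 0 ≤ a → 0 ≤ b → IntervalIntegrable φ volume a b := by
    intro a b ha hb
    rw [intervalIntegrable_iff]
    apply Measure.integrableOn_of_bounded (M := C) measure_Ioc_lt_top.ne
      hφm.aestronglyMeasurable
    filter_upwards [ae_restrict_mem measurableSet_uIoc] with u hu
    have h0u : 0 ≤ u := le_of_lt (lt_of_le_of_lt (le_min ha hb) hu.1)
    simpa [Real.norm_eq_abs] using hCb u h0u
  -- difference of h
  have hhsub : ∀ a b : ℝ, 0 ≤ a → 0 ≤ b → h b - h a = ∫ u in a..b, φ u := by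
    intro a b ha hb
    rw [hh, hh]
    exact intervalIntegral.integral_interval_sub_left (hφint 0 b le_rfl hb)
      (hφint 0 a le_rfl ha)
  have h0 : h 0 = 0 := by simp [hh]
  have hhb : ∀ l, 0 ≤ l → |h l| ≤ C * l := by
    intro l hl
    rw [hh]
    have := intervalIntegral.norm_integral_le_of_norm_le_const
      (a := (0:ℝ)) (b := l) (C := C) (f := φ) ?_
    · simpa [Real.norm_eq_abs, abs_of_nonneg hl] using this
    · intro x hx
      rw [uIoc_of_le hl] at hx
      exact (by simpa [Real.norm_eq_abs] using hCb x hx.1.le)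
  have hhcont : ContinuousOn h (Ici 0) := by
    apply lipCont hC0.le
    intro x hx y hy
    have := intervalIntegral.norm_integral_le_of_norm_le_const
      (a := y) (b := x) (C := C) (f := φ) ?_
    · rw [← hhsub y x hy hx] at this
      simpa [Real.norm_eq_abs] using this
    · intro u hu
      have : 0 ≤ u := le_of_lt (lt_of_le_of_lt (le_min hy hx) hu.1)
      simpa [Real.norm_eq_abs] using hCb u this
  -- ψ
  set ψ : ℝ → ℝ := fun l => h l / l with hψdef
  have hψb : ∀ l, 0 ≤ l → |ψ l| ≤ C := by
    intro l hl
    rcases eq_or_lt_of_le hl with rfl | hl'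
    · simp [hψdef, h0, hC0.le]
    · rw [hψdef, abs_div, div_le_iff₀ (abs_pos.2 (ne_of_gt hl'))]
      calc |h l| ≤ C * l := hhb l hl
      _ = C * |l| := by rw [abs_of_pos hl']
  have hψcont : ContinuousOn ψ (Ioi 0) := by
    apply ContinuousOn.div (hhcont.mono (Ioi_subset_Ici le_rfl)) continuousOn_id
    exact fun x hx => ne_of_gt hx
  have hψint : ∀ a b : ℝ, 0 ≤ a → 0 ≤ b → IntervalIntegrable ψ volume a b := by
    intro a b ha hb
    rw [intervalIntegrable_iff]
    refine ⟨ContinuousOn.aestronglyMeasurable (hψcont.mono ?_) measurableSet_uIoc,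
      MeasureTheory.HasFiniteIntegral.restrict_of_bounded (C := C) measure_Ioc_lt_top ?_⟩
    · intro u hu
      exact lt_of_le_of_lt (le_min ha hb) hu.1
    · filter_upwards [ae_restrict_mem measurableSet_uIoc] with u hu
      have h0u : 0 ≤ u := le_of_lt (lt_of_le_of_lt (le_min ha hb) hu.1)
      simpa [Real.norm_eq_abs] using hψb u h0u
  have hGsub : ∀ a b : ℝ, 0 ≤ a → 0 ≤ b → G b - G a = ∫ u in a..b, ψ u := by
    intro a b ha hb
    rw [hG, hG]
    exact intervalIntegral.integral_interval_sub_left (hψint 0 b le_rfl hb)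
      (hψint 0 a le_rfl ha)
  have hGcont : ContinuousOn G (Ici 0) := by
    apply lipCont hC0.le
    intro x hx y hy
    have := intervalIntegral.norm_integral_le_of_norm_le_const
      (a := y) (b := x) (C := C) (f := ψ) ?_
    · rw [← hGsub y x hy hx] at this
      simpa [Real.norm_eq_abs] using this
    · intro u hu
      have : 0 ≤ u := le_of_lt (lt_of_le_of_lt (le_min hy hx) hu.1)
      simpa [Real.norm_eq_abs] using hψb u this
  -- s'
  have hs'pos : ∀ x : ℝ, 0 < x → 0 < s' x := by
    intro x hx
    rw [hs' x hx]
    positivity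
  have hs'cont : ContinuousOn s' (Ioi 0) := by
    apply ContinuousOn.congr (f := fun x => x⁻¹ * Real.exp (G x))
    · exact ContinuousOn.mul (continuousOn_inv₀.mono (by intro x hx; exact ne_of_gt hx))
        (Real.continuous_exp.comp_continuousOn (hGcont.mono (Ioi_subset_Ici le_rfl)))
    · intro x hx
      exact hs' x hx
  have hs'int : ∀ a b : ℝ, 0 < a → 0 < b → IntervalIntegrable s' volume a b := by
    intro a b ha hb
    apply ContinuousOn.intervalIntegrable
    apply hs'cont.mono
    intro u hu
    exact lt_of_lt_of_le (lt_min ha hb) (by rw [uIcc] at hu; exact hu.1)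
  have hssub : ∀ a b : ℝ, 0 < a → 0 < b → s b - s a = ∫ u in a..b, s' u := by
    intro a b ha hb
    rw [hs a ha, hs b hb]
    exact intervalIntegral.integral_interval_sub_left (hs'int 1 b one_pos hb)
      (hs'int 1 a one_pos ha)
  have hsnonneg : ∀ x : ℝ, 1 ≤ x → 0 ≤ s x := by
    intro x hx
    rw [hs x (lt_of_lt_of_le one_pos hx)]
    apply intervalIntegral.integral_nonneg hx
    intro u hu
    exact (hs'pos u (lt_of_lt_of_le one_pos hu.1)).le
  have hscont : ContinuousOn s (Ioi 0) := by
    intro x hx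
    apply ContinuousAt.continuousWithinAt
    have hcpt : IsCompact (Icc (x/2) (x+1)) := isCompact_Icc
    have hsub : Icc (x/2) (x+1) ⊆ Ioi 0 := by
      intro u hu
      exact lt_of_lt_of_le (by linarith [hx.out]) hu.1
    obtain ⟨M, hM⟩ := hcpt.exists_bound_of_continuousOn (hs'cont.mono hsub)
    have : ContinuousOn s (Icc (x/2) (x+1)) := by
      apply lipCont (C := M) ?_ ?_
      · rcases hM x (by constructor <;> linarith [hx.out]) with hb
        exact le_trans (norm_nonneg _) hb
      · intro p hp q hq
        have hpq := intervalIntegral.norm_integral_le_of_norm_le_const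
          (a := q) (b := p) (C := M) (f := s') ?_
        · rw [← hssub q p (hsub hq) (hsub hp)] at hpq
          simpa [Real.norm_eq_abs] using hpq
        · intro u hu
          apply hM
          rw [uIoc] at hu
          constructor
          · exact le_trans (le_min hq.1 hp.1) hu.1.le
          · exact le_trans hu.2 (max_le hq.2 hp.2)
    apply this.continuousAt
    apply Icc_mem_nhds <;> linarith [hx.out]
  -- choose δ and threshold X
  set δ : ℝ := min (min (ε/8) (hinfty/2)) (1/2) with hδdef
  have hδpos : 0 < δ := by
    apply lt_min (lt_min (by linarith) (by linarith)) (by norm_num)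
  have hδε : δ ≤ ε/8 := le_trans (min_le_left _ _) (min_le_left _ _)
  have hδh : δ ≤ hinfty/2 := le_trans (min_le_left _ _) (min_le_right _ _)
  have hδhalf : δ ≤ 1/2 := min_le_right _ _
  obtain ⟨X₀, hX₀⟩ := Metric.tendsto_atTop.mp hlim δ hδpos
  set X : ℝ := max X₀ 1 with hXdef
  have hX1 : 1 ≤ X := le_max_right _ _
  have hX0 : 0 < X := lt_of_lt_of_le one_pos hX1
  set av : ℝ := hinfty - δ with havdef
  set bv : ℝ := hinfty + δ with hbvdef
  have hav : 0 < av := by rw [havdef]; linarith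
  have hbv : 0 < bv := by rw [hbvdef]; linarith
  have hhl : ∀ l, X ≤ l → av ≤ h l ∧ h l ≤ bv := by
    intro l hl
    have hd := hX₀ l (le_trans (le_max_left _ _) hl)
    rw [Real.dist_eq] at hd
    obtain ⟨h1, h2⟩ := abs_lt.mp hd
    exact ⟨by rw [havdef]; linarith, by rw [hbvdef]; linarith⟩
  -- bound the increment of G
  have hIbound : ∀ x, X ≤ x → av * (Real.log x - Real.log X) ≤ (∫ u in X..x, ψ u) ∧
      (∫ u in X..x, ψ u) ≤ bv * (Real.log x - Real.log X) := by
    intro x hx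
    have hx0 : 0 < x := lt_of_lt_of_le hX0 hx
    have hIoi : uIcc X x ⊆ Ioi 0 := by
      rw [uIcc_of_le hx]
      intro u hu
      exact lt_of_lt_of_le hX0 hu.1
    have hinv : ContinuousOn (fun u : ℝ => u⁻¹) (uIcc X x) :=
      continuousOn_inv₀.mono (fun u hu => ne_of_gt (hIoi hu))
    have hint1 : IntervalIntegrable (fun u => av * u⁻¹) volume X x :=
      (continuousOn_const.mul hinv).intervalIntegrable
    have hint2 : IntervalIntegrable (fun u => bv * u⁻¹) volume X x :=
      (continuousOn_const.mul hinv).intervalIntegrable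
    have hψi : IntervalIntegrable ψ volume X x := hψint X x hX0.le hx0.le
    have hvalinv : (∫ u in X..x, u⁻¹) = Real.log x - Real.log X := by
      rw [integral_inv (fun hmem => lt_irrefl 0 (mem_Ioi.mp (hIoi hmem))),
        Real.log_div (ne_of_gt hx0) (ne_of_gt hX0)]
    constructor
    · have hmono : (∫ u in X..x, av * u⁻¹) ≤ ∫ u in X..x, ψ u := by
        apply intervalIntegral.integral_mono_on hx hint1 hψi
        intro u hu
        have hu0 : 0 < u := lt_of_lt_of_le hX0 hu.1
        have := (hhl u hu.1).1
        simp only [hψdef]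
        rw [div_eq_mul_inv]
        exact mul_le_mul_of_nonneg_right this (inv_nonneg.mpr hu0.le)
      rwa [intervalIntegral.integral_const_mul, hvalinv] at hmono
    · have hmono : (∫ u in X..x, ψ u) ≤ ∫ u in X..x, bv * u⁻¹ := by
        apply intervalIntegral.integral_mono_on hx hψi hint2
        intro u hu
        have hu0 : 0 < u := lt_of_lt_of_le hX0 hu.1
        have := (hhl u hu.1).2
        simp only [hψdef]
        rw [div_eq_mul_inv]
        exact mul_le_mul_of_nonneg_right this (inv_nonneg.mpr hu0.le)
      rwa [intervalIntegral.integral_const_mul, hvalinv] at hmono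
  -- bounds on s'
  set c₁ : ℝ := Real.exp (G X) * X ^ (-av) with hc₁def
  set c₂ : ℝ := Real.exp (G X) * X ^ (-bv) with hc₂def
  have hc₁0 : 0 < c₁ := by
    rw [hc₁def]; positivity
  have hc₂0 : 0 < c₂ := by
    rw [hc₂def]; positivity
  have hexpform : ∀ x : ℝ, 0 < x → ∀ p : ℝ,
      Real.exp (p * (Real.log x - Real.log X)) = x ^ p * X ^ (-p) := by
    intro x hx0 p
    rw [mul_sub, Real.exp_sub, Real.rpow_neg hX0.le, Real.rpow_def_of_pos hx0,
      Real.rpow_def_of_pos hX0, mul_comm (Real.log x), mul_comm (Real.log X),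
      div_eq_mul_inv]
  have hGX : ∀ x, X ≤ x → G x = G X + ∫ u in X..x, ψ u := by
    intro x hx
    have hx0 : 0 < x := lt_of_lt_of_le hX0 hx
    have := hGsub X x hX0.le hx0.le
    linarith
  have hs'lb : ∀ x, X ≤ x → c₁ * x ^ (av - 1) ≤ s' x := by
    intro x hx
    have hx0 : 0 < x := lt_of_lt_of_le hX0 hx
    rw [hs' x hx0, hGX x hx, Real.exp_add]
    have h1 : Real.exp (av * (Real.log x - Real.log X)) ≤ Real.exp (∫ u in X..x, ψ u) :=
      Real.exp_le_exp.mpr (hIbound x hx).1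
    rw [hexpform x hx0 av] at h1
    have key : c₁ * x ^ (av - 1) = x⁻¹ * (Real.exp (G X) * (x ^ av * X ^ (-av))) := by
      rw [hc₁def, Real.rpow_sub hx0, Real.rpow_one]
      ring
    rw [key]
    apply mul_le_mul_of_nonneg_left _ (inv_nonneg.mpr hx0.le)
    exact mul_le_mul_of_nonneg_left h1 (Real.exp_nonneg _)
  have hs'ub : ∀ x, X ≤ x → s' x ≤ c₂ * x ^ (bv - 1) := by
    intro x hx
    have hx0 : 0 < x := lt_of_lt_of_le hX0 hx
    rw [hs' x hx0, hGX x hx, Real.exp_add]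
    have h1 : Real.exp (∫ u in X..x, ψ u) ≤ Real.exp (bv * (Real.log x - Real.log X)) :=
      Real.exp_le_exp.mpr (hIbound x hx).2
    rw [hexpform x hx0 bv] at h1
    have key : c₂ * x ^ (bv - 1) = x⁻¹ * (Real.exp (G X) * (x ^ bv * X ^ (-bv))) := by
      rw [hc₂def, Real.rpow_sub hx0, Real.rpow_one]
      ring
    rw [key]
    apply mul_le_mul_of_nonneg_left _ (inv_nonneg.mpr hx0.le)
    exact mul_le_mul_of_nonneg_left h1 (Real.exp_nonneg _)
  -- threshold X₁ and bounds on s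
  set X₁ : ℝ := (2:ℝ) ^ (av⁻¹) * X with hX₁def
  have h2pow : (1:ℝ) ≤ (2:ℝ) ^ (av⁻¹) := by
    have := Real.rpow_le_rpow_of_exponent_le (x := 2) (by norm_num)
      (inv_nonneg.mpr hav.le : (0:ℝ) ≤ av⁻¹)
    simpa using this
  have hX₁X : X ≤ X₁ := by
    rw [hX₁def]
    exact le_mul_of_one_le_left hX0.le h2pow
  have hX₁1 : 1 ≤ X₁ := le_trans hX1 hX₁X
  have hX₁0 : 0 < X₁ := lt_of_lt_of_le one_pos hX₁1
  have hX₁a : X₁ ^ av = 2 * X ^ av := by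
    rw [hX₁def, Real.mul_rpow (by positivity) hX0.le, ← Real.rpow_mul (by norm_num),
      inv_mul_cancel₀ (ne_of_gt hav), Real.rpow_one]
  -- integral of s' comparisons
  have hintlow : ∀ x, X ≤ x → c₁ * ((x ^ av - X ^ av) / av) ≤ ∫ u in X..x, s' u := by
    intro x hx
    have hx0 : 0 < x := lt_of_lt_of_le hX0 hx
    have hint1 : IntervalIntegrable (fun u => c₁ * u ^ (av - 1)) volume X x :=
      (intervalIntegral.intervalIntegrable_rpow' (by linarith)).const_mul c₁
    have hmono : (∫ u in X..x, c₁ * u ^ (av - 1)) ≤ ∫ u in X..x, s' u := by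
      apply intervalIntegral.integral_mono_on hx hint1 (hs'int X x hX0 hx0)
      intro u hu
      exact hs'lb u hu.1
    rw [intervalIntegral.integral_const_mul, integral_rpow (Or.inl (by linarith))] at hmono
    have : av - 1 + 1 = av := by ring
    rwa [this] at hmono
  have hintup : ∀ x, X ≤ x → (∫ u in X..x, s' u) ≤ c₂ * ((x ^ bv - X ^ bv) / bv) := by
    intro x hx
    have hx0 : 0 < x := lt_of_lt_of_le hX0 hx
    have hint2 : IntervalIntegrable (fun u => c₂ * u ^ (bv - 1)) volume X x :=
      (intervalIntegral.intervalIntegrable_rpow' (by linarith)).const_mul c₂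
    have hmono : (∫ u in X..x, s' u) ≤ ∫ u in X..x, c₂ * u ^ (bv - 1) := by
      apply intervalIntegral.integral_mono_on hx (hs'int X x hX0 hx0) hint2
      intro u hu
      exact hs'ub u hu.1
    rw [intervalIntegral.integral_const_mul, integral_rpow (Or.inl (by linarith))] at hmono
    have : bv - 1 + 1 = bv := by ring
    rwa [this] at hmono
  set d₁ : ℝ := c₁ / (2 * av) with hd₁def
  set d₂ : ℝ := s X + c₂ / bv with hd₂def
  have hd₁0 : 0 < d₁ := by rw [hd₁def]; positivity
  have hd₂0 : 0 < d₂ := by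
    rw [hd₂def]
    have := hsnonneg X hX1
    positivity
  have hslb : ∀ x, X₁ ≤ x → d₁ * x ^ av ≤ s x := by
    intro x hx
    have hxX : X ≤ x := le_trans hX₁X hx
    have hx0 : 0 < x := lt_of_lt_of_le hX0 hxX
    have hsplit : s x = s X + ∫ u in X..x, s' u := by
      have := hssub X x hX0 hx0
      linarith
    have hXa : X ^ av ≤ x ^ av / 2 := by
      have h1 : X₁ ^ av ≤ x ^ av := Real.rpow_le_rpow hX₁0.le hx hav.le
      rw [hX₁a] at h1
      linarith
    have h2 := hintlow x hxX
    have h3 := hsnonneg X hX1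
    rw [hsplit, hd₁def]
    have h4 : c₁ / (2 * av) * x ^ av ≤ c₁ * ((x ^ av - X ^ av) / av) := by
      rw [div_mul_eq_mul_div, div_le_iff₀ (by positivity : (0:ℝ) < 2 * av)]
      have heq : c₁ * ((x ^ av - X ^ av) / av) * (2 * av) = 2 * c₁ * (x ^ av - X ^ av) := by
        field_simp
      rw [heq]
      nlinarith
    linarith
  have hsub2 : ∀ x, X ≤ x → s x ≤ d₂ * x ^ bv := by
    intro x hx
    have hx0 : 0 < x := lt_of_lt_of_le hX0 hx
    have hx1 : 1 ≤ x := le_trans hX1 hx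
    have hsplit : s x = s X + ∫ u in X..x, s' u := by
      have := hssub X x hX0 hx0
      linarith
    have h2 := hintup x hx
    have hxb1 : 1 ≤ x ^ bv := by
      have := Real.rpow_le_rpow (le_of_lt one_pos) hx1 hbv.le
      simpa using this
    have hXb : 0 ≤ X ^ bv := by positivity
    have h3 := hsnonneg X hX1
    rw [hsplit, hd₂def]
    have h4 : c₂ * ((x ^ bv - X ^ bv) / bv) ≤ c₂ / bv * x ^ bv := by
      rw [div_mul_eq_mul_div, mul_div_assoc]
      apply mul_le_mul_of_nonneg_left _ hc₂0.le
      exact (div_le_div_iff_of_pos_right hbv).mpr (by linarith)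
    have hexp : (s X + c₂ / bv) * x ^ bv = s X * x ^ bv + c₂ / bv * x ^ bv := by ring
    have h5 : s X * 1 ≤ s X * x ^ bv := mul_le_mul_of_nonneg_left hxb1 h3
    linarith
  -- ratio bounds
  set e₁ : ℝ := d₁ / c₂ with he₁def
  set e₂ : ℝ := d₂ / c₁ with he₂def
  have he₁0 : 0 < e₁ := by rw [he₁def]; positivity
  have he₂0 : 0 < e₂ := by rw [he₂def]; positivity
  have hexp1 : av - (bv - 1) = 1 - 2*δ := by rw [havdef, hbvdef]; ring
  have hexp2 : bv - (av - 1) = 1 + 2*δ := by rw [havdef, hbvdef]; ring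
  have hrlb : ∀ x, X₁ ≤ x → e₁ * x ^ (1 - 2*δ) ≤ s x / s' x := by
    intro x hx
    have hxX : X ≤ x := le_trans hX₁X hx
    have hx0 : 0 < x := lt_of_lt_of_le hX0 hxX
    have h1 : d₁ * x ^ av / (c₂ * x ^ (bv-1)) ≤ s x / s' x :=
      div_le_div₀ (hsnonneg x (le_trans hX₁1 hx)) (hslb x hx) (hs'pos x hx0) (hs'ub x hxX)
    have hxeq : x ^ (av - (bv-1)) = x ^ av / x ^ (bv-1) := Real.rpow_sub hx0 _ _
    calc e₁ * x ^ (1-2*δ) = d₁ * x ^ av / (c₂ * x ^ (bv-1)) := by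
          rw [he₁def, ← hexp1, hxeq, div_mul_div_comm]
      _ ≤ s x / s' x := h1
  have hrub : ∀ x, X₁ ≤ x → s x / s' x ≤ e₂ * x ^ (1 + 2*δ) := by
    intro x hx
    have hxX : X ≤ x := le_trans hX₁X hx
    have hx0 : 0 < x := lt_of_lt_of_le hX0 hxX
    have h1 : s x / s' x ≤ d₂ * x ^ bv / (c₁ * x ^ (av-1)) :=
      div_le_div₀ (by positivity) (hsub2 x hxX) (by positivity) (hs'lb x hxX)
    calc s x / s' x ≤ d₂ * x ^ bv / (c₁ * x ^ (av-1)) := h1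
      _ = e₂ * x ^ (1+2*δ) := by
          have hxeq : x ^ (bv - (av-1)) = x ^ bv / x ^ (av-1) := Real.rpow_sub hx0 _ _
          rw [he₂def, ← hexp2, hxeq, div_mul_div_comm]
  -- integral bounds
  set p : ℝ := 2 - 2*δ with hpdef
  set q : ℝ := 2 + 2*δ with hqdef
  have hp0 : 0 < p := by rw [hpdef]; linarith only [hδhalf]
  have hq0 : 0 < q := by rw [hqdef]; linarith only [hδpos]
  have hrint : ∀ u v : ℝ, 1 ≤ u → 1 ≤ v →
      IntervalIntegrable (fun x => s x / s' x) volume u v := by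
    intro u v hu hv
    have hsb : uIcc u v ⊆ Ioi 0 := by
      intro z hz
      rw [uIcc] at hz
      exact lt_of_lt_of_le one_pos (le_trans (le_min hu hv) hz.1)
    exact ((hscont.mono hsb).div (hs'cont.mono hsb)
      (fun z hz => ne_of_gt (hs'pos z (hsb hz)))).intervalIntegrable
  set K₀ : ℝ := ∫ x in (1:ℝ)..X₁, s x / s' x with hK₀def
  have hK₀0 : 0 ≤ K₀ := by
    rw [hK₀def]
    apply intervalIntegral.integral_nonneg hX₁1
    intro u hu
    exact div_nonneg (hsnonneg u hu.1) (hs'pos u (lt_of_lt_of_le one_pos hu.1)).le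
  set Y₂ : ℝ := (2:ℝ) ^ (p⁻¹) * X₁ with hY₂def
  have h2powp : (1:ℝ) ≤ (2:ℝ) ^ (p⁻¹) := by
    have := Real.rpow_le_rpow_of_exponent_le (x := 2) (by norm_num)
      (inv_nonneg.mpr hp0.le : (0:ℝ) ≤ p⁻¹)
    simpa using this
  have hY₂X₁ : X₁ ≤ Y₂ := by
    rw [hY₂def]
    exact le_mul_of_one_le_left hX₁0.le h2powp
  have hY₂1 : 1 ≤ Y₂ := le_trans hX₁1 hY₂X₁
  have hY₂0 : 0 < Y₂ := lt_of_lt_of_le one_pos hY₂1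
  have hY₂p : Y₂ ^ p = 2 * X₁ ^ p := by
    rw [hY₂def, Real.mul_rpow (by positivity) hX₁0.le, ← Real.rpow_mul (by norm_num),
      inv_mul_cancel₀ (ne_of_gt hp0), Real.rpow_one]
  set m₁ : ℝ := e₁ / (2*p) with hm₁def
  set M₁ : ℝ := K₀ + e₂ / q with hM₁def
  have hm₁0 : 0 < m₁ := by rw [hm₁def]; positivity
  have hM₁0 : 0 < M₁ := by rw [hM₁def]; positivity
  have hintegralb : ∀ y, Y₂ ≤ y → m₁ * y ^ p ≤ (∫ x in (1:ℝ)..y, s x / s' x) ∧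
      (∫ x in (1:ℝ)..y, s x / s' x) ≤ M₁ * y ^ q := by
    intro y hy
    have hyX₁ : X₁ ≤ y := le_trans hY₂X₁ hy
    have hy1 : 1 ≤ y := le_trans hX₁1 hyX₁
    have hy0 : 0 < y := lt_of_lt_of_le one_pos hy1
    have hsplit : (∫ x in (1:ℝ)..y, s x / s' x) = K₀ + ∫ x in X₁..y, s x / s' x := by
      rw [hK₀def]
      exact (intervalIntegral.integral_add_adjacent_intervals
        (hrint 1 X₁ le_rfl hX₁1) (hrint X₁ y hX₁1 hy1)).symm
    constructor
    · have hcmp : (∫ x in X₁..y, e₁ * x ^ (1-2*δ)) ≤ ∫ x in X₁..y, s x / s' x := by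
        apply intervalIntegral.integral_mono_on hyX₁
          ((intervalIntegral.intervalIntegrable_rpow' (by linarith only [hδpos, hδhalf])).const_mul e₁)
          (hrint X₁ y hX₁1 hy1)
        intro u hu
        exact hrlb u hu.1
      rw [intervalIntegral.integral_const_mul,
        integral_rpow (Or.inl (by linarith only [hδpos, hδhalf]))] at hcmp
      have he : 1 - 2*δ + 1 = p := by rw [hpdef]; ring
      rw [he] at hcmp
      have hX₁p : X₁ ^ p ≤ y ^ p / 2 := by
        have h1 : Y₂ ^ p ≤ y ^ p := Real.rpow_le_rpow hY₂0.le hy hp0.le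
        rw [hY₂p] at h1
        linarith only [h1]
      have h6 : m₁ * y ^ p ≤ e₁ * ((y ^ p - X₁ ^ p)/p) := by
        rw [hm₁def, div_mul_eq_mul_div, div_le_iff₀ (by positivity : (0:ℝ) < 2*p)]
        have heq : e₁ * ((y ^ p - X₁ ^ p)/p) * (2*p) = 2*e₁*(y ^ p - X₁ ^ p) := by
          field_simp
        rw [heq]
        have h7 : e₁ * X₁ ^ p ≤ e₁ * (y ^ p / 2) := mul_le_mul_of_nonneg_left hX₁p he₁0.le
        linarith only [h7]
      rw [hsplit]
      linarith only [hcmp, h6, hK₀0]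
    · have hcmp : (∫ x in X₁..y, s x / s' x) ≤ ∫ x in X₁..y, e₂ * x ^ (1+2*δ) := by
        apply intervalIntegral.integral_mono_on hyX₁ (hrint X₁ y hX₁1 hy1)
          ((intervalIntegral.intervalIntegrable_rpow' (by linarith only [hδpos, hδhalf])).const_mul e₂)
        intro u hu
        exact hrub u hu.1
      rw [intervalIntegral.integral_const_mul,
        integral_rpow (Or.inl (by linarith only [hδpos, hδhalf]))] at hcmp
      have he : 1 + 2*δ + 1 = q := by rw [hqdef]; ring
      rw [he] at hcmp
      have h4 : e₂ * ((y ^ q - X₁ ^ q)/q) ≤ e₂ / q * y ^ q := by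
        have h4a : (y ^ q - X₁ ^ q)/q ≤ y ^ q / q := by
          apply (div_le_div_iff_of_pos_right hq0).mpr
          have : (0:ℝ) ≤ X₁ ^ q := by positivity
          linarith only [this]
        calc e₂ * ((y ^ q - X₁ ^ q)/q) ≤ e₂ * (y ^ q / q) :=
              mul_le_mul_of_nonneg_left h4a he₂0.le
          _ = e₂ / q * y ^ q := by ring
      have hyq1 : 1 ≤ y ^ q := by
        have := Real.rpow_le_rpow (le_of_lt one_pos) hy1 hq0.le
        simpa using this
      have hexp : M₁ * y ^ q = K₀ * y ^ q + e₂/q * y ^ q := by rw [hM₁def]; ring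
      have h5 : K₀ * 1 ≤ K₀ * y ^ q := mul_le_mul_of_nonneg_left hyq1 hK₀0
      rw [hsplit]
      linarith only [hcmp, h4, h5, hexp]
  -- final combination
  set A : ℝ := m₁ / c₂ with hAdef
  set B : ℝ := M₁ / c₁ with hBdef
  have hA0 : 0 < A := by rw [hAdef]; positivity
  have hB0 : 0 < B := by rw [hBdef]; positivity
  set r : ℝ := ε - 3*δ with hrdef
  have hr0 : 0 < r := by rw [hrdef]; linarith only [hδε, hε]
  set T : ℝ := max (max (1/A) B) 1 with hTdef
  have hT1 : (1:ℝ) ≤ T := le_max_right _ _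
  have hT0 : (0:ℝ) < T := lt_of_lt_of_le one_pos hT1
  set Y₃ : ℝ := T ^ r⁻¹ with hY₃def
  have hY₃1 : 1 ≤ Y₃ := by
    rw [hY₃def]
    have := Real.rpow_le_rpow (le_of_lt one_pos) hT1 (inv_nonneg.mpr hr0.le)
    simpa using this
  refine ⟨max Y₂ Y₃, le_trans hY₃1 (le_max_right _ _), ?_⟩
  intro y hy
  have hyY₂ : Y₂ ≤ y := le_trans (le_max_left _ _) hy
  have hyY₃ : Y₃ ≤ y := le_trans (le_max_right _ _) hy
  have hy1 : 1 ≤ y := le_trans hY₂1 hyY₂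
  have hy0 : 0 < y := lt_of_lt_of_le one_pos hy1
  have hyX₁ : X₁ ≤ y := le_trans hY₂X₁ hyY₂
  have hyX : X ≤ y := le_trans hX₁X hyX₁
  have hyr : T ≤ y ^ r := by
    have h1 : Y₃ ^ r ≤ y ^ r := Real.rpow_le_rpow (le_trans zero_le_one hY₃1) hyY₃ hr0.le
    rw [hY₃def, ← Real.rpow_mul hT0.le, inv_mul_cancel₀ (ne_of_gt hr0), Real.rpow_one] at h1
    exact h1
  have hI := hintegralb y hyY₂
  have hs'y : 0 < s' y := hs'pos y hy0
  have hIpos : 0 < m₁ * y ^ p := by positivity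
  have hInt0 : 0 ≤ ∫ x in (1:ℝ)..y, s x / s' x := le_trans hIpos.le hI.1
  have hinvlb : c₂⁻¹ * y ^ (1-bv) ≤ 1 / s' y := by
    rw [one_div]
    have h2 : s' y ≤ c₂ * y ^ (bv-1) := hs'ub y hyX
    have h3 := inv_anti₀ hs'y h2
    have h5 : c₂⁻¹ * y ^ (1-bv) = (c₂ * y ^ (bv-1))⁻¹ := by
      calc c₂⁻¹ * y ^ (1-bv) = c₂⁻¹ * y ^ (-(bv-1)) := by rw [neg_sub bv 1]
        _ = c₂⁻¹ * (y ^ (bv-1))⁻¹ := by rw [Real.rpow_neg hy0.le]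
        _ = (c₂ * y ^ (bv-1))⁻¹ := (mul_inv _ _).symm
    rw [h5]
    exact h3
  have hinvub : 1 / s' y ≤ c₁⁻¹ * y ^ (1-av) := by
    rw [one_div]
    have h2 : c₁ * y ^ (av-1) ≤ s' y := hs'lb y hyX
    have h3 := inv_anti₀ (by positivity) h2
    have h5 : c₁⁻¹ * y ^ (1-av) = (c₁ * y ^ (av-1))⁻¹ := by
      calc c₁⁻¹ * y ^ (1-av) = c₁⁻¹ * y ^ (-(av-1)) := by rw [neg_sub av 1]
        _ = c₁⁻¹ * (y ^ (av-1))⁻¹ := by rw [Real.rpow_neg hy0.le]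
        _ = (c₁ * y ^ (av-1))⁻¹ := (mul_inv _ _).symm
    rw [h5]
    exact h3
  have hlow : A * y ^ ((1-bv) + p) ≤ (1 / s' y) * ∫ x in (1:ℝ)..y, s x / s' x := by
    have key : A * y ^ ((1-bv)+p) = (c₂⁻¹ * y ^ (1-bv)) * (m₁ * y ^ p) := by
      rw [hAdef, Real.rpow_add hy0]
      ring
    rw [key]
    exact mul_le_mul hinvlb hI.1 hIpos.le (one_div_pos.mpr hs'y).le
  have hupp : (1 / s' y) * (∫ x in (1:ℝ)..y, s x / s' x) ≤ B * y ^ ((1-av) + q) := by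
    have key : B * y ^ ((1-av)+q) = (c₁⁻¹ * y ^ (1-av)) * (M₁ * y ^ q) := by
      rw [hBdef, Real.rpow_add hy0]
      ring
    rw [key]
    exact mul_le_mul hinvub hI.2 hInt0 (by positivity)
  constructor
  · have hA' : (y ^ r)⁻¹ ≤ A := by
      have h1 : 1/A ≤ y ^ r := le_trans (le_trans (le_max_left _ _) (le_max_left _ _)) hyr
      rw [one_div] at h1
      exact inv_le_of_inv_le₀ hA0 h1
    have hkey : y ^ (3 - hinfty - ε) = y ^ ((1-bv)+p) * (y ^ r)⁻¹ := by
      rw [← Real.rpow_neg hy0.le, ← Real.rpow_add hy0]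
      congr 1
      rw [hbvdef, hpdef, hrdef]
      ring
    rw [hkey]
    calc y ^ ((1-bv)+p) * (y ^ r)⁻¹ ≤ y ^ ((1-bv)+p) * A :=
          mul_le_mul_of_nonneg_left hA' (by positivity)
      _ = A * y ^ ((1-bv)+p) := mul_comm _ _
      _ ≤ _ := hlow
  · have hB' : B ≤ y ^ r := le_trans (le_trans (le_max_right _ _) (le_max_left _ _)) hyr
    have hkey : y ^ (3 - hinfty + ε) = y ^ r * y ^ ((1-av)+q) := by
      rw [← Real.rpow_add hy0]
      congr 1
      rw [havdef, hqdef, hrdef]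
      ring
    calc (1 / s' y) * ∫ x in (1:ℝ)..y, s x / s' x ≤ B * y ^ ((1-av)+q) := hupp
      _ ≤ y ^ r * y ^ ((1-av)+q) := mul_le_mul_of_nonneg_right hB' (by positivity)
      _ = y ^ (3 - hinfty + ε) := by rw [hkey]
end

section
/- Suppose h(l) converges to a finite limit h_∞ as l → ∞ and h_∞ > 2. Then ∫_y^∞ dx/s'(x) is finite for every y ≥ 1, and for every ε > 0 there exists Y ≥ 1 such that for all y ≥ Y one has y^{3 − h_∞ − ε} ≤ (s(y)/s'(y))·∫_y^∞ (1/s'(x)) dx ≤ y^{3 − h_∞ + ε}. -/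
open MeasureTheory Set Filter
namespace Stmt16



variable {φ h G : ℝ → ℝ} {C : ℝ}

lemma phi_integrableOn (hφm : Measurable φ)
    (hφb : ∀ u, 0 ≤ u → |φ u| ≤ C) {b : ℝ} (hb : 0 ≤ b) :
    IntegrableOn φ (Icc 0 b) := by
  refine Measure.integrableOn_of_bounded (M := C) (by simp) hφm.aestronglyMeasurable ?_
  refine (ae_restrict_iff' measurableSet_Icc).2 (Filter.Eventually.of_forall fun x hx => ?_)
  simpa [Real.norm_eq_abs] using hφb x hx.1

lemma h_bound (hφm : Measurable φ) (hφb : ∀ u, 0 ≤ u → |φ u| ≤ C)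
    (hh : ∀ l, h l = ∫ u in (0:ℝ)..l, φ u) {l : ℝ} (hl : 0 ≤ l) :
    |h l| ≤ C * l := by
  rw [hh]
  have := intervalIntegral.norm_integral_le_of_norm_le_const (C := C) (f := φ)
    (a := 0) (b := l) (fun x hx => by
      rw [uIoc_of_le hl] at hx
      simpa [Real.norm_eq_abs] using hφb x hx.1.le)
  simpa [Real.norm_eq_abs, abs_of_nonneg hl] using this

lemma h_contAt (hφm : Measurable φ) (hφb : ∀ u, 0 ≤ u → |φ u| ≤ C)
    (hh : ∀ l, h l = ∫ u in (0:ℝ)..l, φ u) {x : ℝ} (hx : 0 < x) :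
    ContinuousAt h x := by
  have hint : IntegrableOn φ (uIcc 0 (x+1)) := by
    rw [uIcc_of_le (by linarith)]
    exact phi_integrableOn hφm hφb (by linarith)
  have hc := intervalIntegral.continuousOn_primitive_interval (a := 0) (b := x+1)
    (μ := volume) hint
  have : ContinuousOn h (uIcc 0 (x+1)) := by
    refine hc.congr fun y hy => (hh y)
  refine this.continuousAt ?_
  rw [uIcc_of_le (by linarith)]
  exact Icc_mem_nhds hx (by linarith)



variable {φ h G : ℝ → ℝ} {C : ℝ}

lemma q_integrableOn (hcont : ∀ x : ℝ, 0 < x → ContinuousAt h x)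
    (hbd : ∀ l, 0 ≤ l → |h l| ≤ C * l) {b : ℝ} (hb : 0 ≤ b) :
    IntegrableOn (fun l => h l / l) (Ioc 0 b) := by
  have hcOn : ContinuousOn (fun l => h l / l) (Ioc 0 b) := by
    intro x hx
    exact ((hcont x hx.1).div continuousAt_id hx.1.ne').continuousWithinAt
  refine ⟨hcOn.aestronglyMeasurable measurableSet_Ioc,
    HasFiniteIntegral.restrict_of_bounded (C := C) (by simp) ?_⟩
  refine (ae_restrict_iff' measurableSet_Ioc).2 (Filter.Eventually.of_forall fun x hx => ?_)
  rw [Real.norm_eq_abs, abs_div, abs_of_pos hx.1, div_le_iff₀ hx.1]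
  exact hbd x hx.1.le

lemma q_intervalIntegrable (hcont : ∀ x : ℝ, 0 < x → ContinuousAt h x)
    (hbd : ∀ l, 0 ≤ l → |h l| ≤ C * l) {a b : ℝ} (ha : 0 ≤ a) (hab : a ≤ b) :
    IntervalIntegrable (fun l => h l / l) volume a b := by
  rw [intervalIntegrable_iff_integrableOn_Ioc_of_le hab]
  exact (q_integrableOn hcont hbd (ha.trans hab)).mono_set
    (Ioc_subset_Ioc ha le_rfl)

lemma G_diff (hcont : ∀ x : ℝ, 0 < x → ContinuousAt h x)
    (hbd : ∀ l, 0 ≤ l → |h l| ≤ C * l)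
    (hG : ∀ x, G x = ∫ l in (0:ℝ)..x, h l / l) {a b : ℝ} (ha : 0 ≤ a) (hab : a ≤ b) :
    G b = G a + ∫ l in a..b, h l / l := by
  rw [hG, hG]
  exact (intervalIntegral.integral_add_adjacent_intervals
    (q_intervalIntegrable hcont hbd le_rfl ha)
    (q_intervalIntegrable hcont hbd ha hab)).symm

lemma G_contAt (hcont : ∀ x : ℝ, 0 < x → ContinuousAt h x)
    (hbd : ∀ l, 0 ≤ l → |h l| ≤ C * l)
    (hG : ∀ x, G x = ∫ l in (0:ℝ)..x, h l / l) {x : ℝ} (hx : 0 < x) :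
    ContinuousAt G x := by
  have hint : IntegrableOn (fun l => h l / l) (uIcc 0 (x+1)) := by
    rw [uIcc_of_le (by linarith)]
    exact (integrableOn_Icc_iff_integrableOn_Ioc).2 (q_integrableOn hcont hbd (by linarith))
  have hc := intervalIntegral.continuousOn_primitive_interval (a := 0) (b := x+1)
    (μ := volume) hint
  have : ContinuousOn G (uIcc 0 (x+1)) := hc.congr fun y _ => (hG y)
  refine this.continuousAt ?_
  rw [uIcc_of_le (by linarith)]
  exact Icc_mem_nhds hx (by linarith)



lemma pow_alg {x X a : ℝ} (hx : 0 < x) (hX : 0 < X) (E : ℝ) :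
    x⁻¹ * (Real.exp E * (x / X) ^ a) = Real.exp E * X ^ (-a) * x ^ (a - 1) := by
  rw [Real.div_rpow hx.le hX.le, Real.rpow_sub hx, Real.rpow_neg hX.le, Real.rpow_one]
  field_simp

variable {h G s' : ℝ → ℝ} {C hinfty : ℝ}

lemma sprime_bounds
    (hcont : ∀ x : ℝ, 0 < x → ContinuousAt h x)
    (hbd : ∀ l, 0 ≤ l → |h l| ≤ C * l)
    (hG : ∀ x, G x = ∫ l in (0:ℝ)..x, h l / l)
    (hs' : ∀ x, 0 < x → s' x = x⁻¹ * Real.exp (G x))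
    {δ X : ℝ} (hX : 1 ≤ X) (hnear : ∀ l, X ≤ l → |h l - hinfty| ≤ δ)
    {x : ℝ} (hx : X ≤ x) :
    Real.exp (G X) * X ^ (-(hinfty - δ)) * x ^ (hinfty - δ - 1) ≤ s' x ∧
    s' x ≤ Real.exp (G X) * X ^ (-(hinfty + δ)) * x ^ (hinfty + δ - 1) := by
  have hX0 : (0:ℝ) < X := lt_of_lt_of_le one_pos hX
  have hx0 : (0:ℝ) < x := lt_of_lt_of_le hX0 hx
  have hq := q_intervalIntegrable hcont hbd hX0.le hx
  have h0uIcc : (0:ℝ) ∉ uIcc X x := by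
    rw [uIcc_of_le hx]
    intro hmem
    exact absurd hmem.1 (not_le.2 hX0)
  have hlog : ∀ a : ℝ, ∫ l in X..x, a * (1 / l) = a * Real.log (x / X) := by
    intro a
    rw [intervalIntegral.integral_const_mul, integral_one_div h0uIcc]
  have hGx : G x = G X + ∫ l in X..x, h l / l :=
    G_diff hcont hbd hG hX0.le hx
  have hIub : (∫ l in X..x, h l / l) ≤ (hinfty + δ) * Real.log (x / X) := by
    rw [← hlog]
    refine intervalIntegral.integral_mono_on hx hq ?_ ?_
    · refine ContinuousOn.intervalIntegrable (fun l hl => ?_)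
      have hl0 : (0:ℝ) < l := by
        rw [uIcc_of_le hx] at hl; exact lt_of_lt_of_le hX0 hl.1
      exact (continuousAt_const.mul ((continuousAt_const.div continuousAt_id
        hl0.ne'))).continuousWithinAt
    · intro l hl
      have hl0 : (0:ℝ) < l := lt_of_lt_of_le hX0 hl.1
      rw [mul_one_div, div_le_div_iff_of_pos_right hl0]
      have := hnear l hl.1
      rw [abs_sub_le_iff] at this
      linarith [this.1]
  have hIlb : (hinfty - δ) * Real.log (x / X) ≤ ∫ l in X..x, h l / l := by
    rw [← hlog]
    refine intervalIntegral.integral_mono_on hx ?_ hq ?_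
    · refine ContinuousOn.intervalIntegrable (fun l hl => ?_)
      have hl0 : (0:ℝ) < l := by
        rw [uIcc_of_le hx] at hl; exact lt_of_lt_of_le hX0 hl.1
      exact (continuousAt_const.mul ((continuousAt_const.div continuousAt_id
        hl0.ne'))).continuousWithinAt
    · intro l hl
      have hl0 : (0:ℝ) < l := lt_of_lt_of_le hX0 hl.1
      rw [mul_one_div, div_le_div_iff_of_pos_right hl0]
      have := hnear l hl.1
      rw [abs_sub_le_iff] at this
      linarith [this.2]
  have hexp : ∀ a : ℝ, Real.exp (G X + a * Real.log (x / X)) =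
      Real.exp (G X) * (x / X) ^ a := by
    intro a
    rw [Real.exp_add, Real.rpow_def_of_pos (div_pos hx0 hX0), mul_comm (Real.log _)]
  constructor
  · rw [hs' x hx0, ← pow_alg hx0 hX0, ← hexp]
    refine mul_le_mul_of_nonneg_left ?_ (inv_nonneg.2 hx0.le)
    exact Real.exp_le_exp.2 (by rw [hGx]; linarith)
  · rw [hs' x hx0, ← pow_alg hx0 hX0, ← hexp]
    refine mul_le_mul_of_nonneg_left ?_ (inv_nonneg.2 hx0.le)
    exact Real.exp_le_exp.2 (by rw [hGx]; linarith)




variable {G s' : ℝ → ℝ}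

lemma inv_const_rpow {c x e : ℝ} (hc : 0 < c) (hx : 0 < x) :
    (c * x ^ e)⁻¹ = c⁻¹ * x ^ (-e) := by
  rw [mul_inv, Real.rpow_neg hx.le]

lemma F_contOn (hGc : ∀ x : ℝ, 0 < x → ContinuousAt G x) :
    ContinuousOn (fun x => x * Real.exp (-G x)) (Ioi (0:ℝ)) := fun x hx =>
  (continuousAt_id.mul (Real.continuous_exp.continuousAt.comp (hGc x hx).neg)).continuousWithinAt

lemma one_div_sprime_eq (hs' : ∀ x, 0 < x → s' x = x⁻¹ * Real.exp (G x))
    {x : ℝ} (hx : 0 < x) : 1 / s' x = x * Real.exp (-G x) := by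
  rw [hs' x hx, one_div, mul_inv, inv_inv, Real.exp_neg]

lemma integrable_one_div_sprime
    (hGc : ∀ x : ℝ, 0 < x → ContinuousAt G x)
    (hs' : ∀ x, 0 < x → s' x = x⁻¹ * Real.exp (G x))
    {X c e : ℝ} (hX : 1 ≤ X) (he : e < -1)
    (hbound : ∀ x, X ≤ x → ‖1 / s' x‖ ≤ c * x ^ e)
    {y : ℝ} (hy : 1 ≤ y) : IntegrableOn (fun x => 1 / s' x) (Ioi y) := by
  set T := max y X with hT
  have hy0 : (0:ℝ) < y := lt_of_lt_of_le one_pos hy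
  have hT0 : (0:ℝ) < T := lt_of_lt_of_le hy0 (le_max_left y X)
  have hEq : EqOn (fun x => x * Real.exp (-G x)) (fun x => 1 / s' x) (Ioi (0:ℝ)) :=
    fun x hx => (one_div_sprime_eq hs' hx).symm
  rw [← Ioc_union_Ioi_eq_Ioi (le_max_left y X)]
  refine IntegrableOn.union ?_ ?_
  · have hA : IntegrableOn (fun x => x * Real.exp (-G x)) (Icc y T) :=
      ((F_contOn hGc).mono (fun x hx => lt_of_lt_of_le hy0 hx.1)).integrableOn_Icc
    exact (hA.mono_set Ioc_subset_Icc_self).congr_fun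
      (fun x hx => hEq (lt_of_lt_of_le hy0 hx.1.le)) measurableSet_Ioc
  · have hg : IntegrableOn (fun x => c * x ^ e) (Ioi T) :=
      (integrableOn_Ioi_rpow_of_lt he hT0).const_mul c
    refine MeasureTheory.Integrable.mono hg ?_ ?_
    · refine (((F_contOn hGc).mono (fun x (hx : x ∈ Ioi T) =>
        lt_trans hT0 hx)).aestronglyMeasurable measurableSet_Ioi).congr ?_
      exact (ae_restrict_mem measurableSet_Ioi).mono fun x hx => hEq (lt_trans hT0 hx)
    · refine (ae_restrict_mem measurableSet_Ioi).mono fun x hx => ?_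
      have hXx : X ≤ x := le_trans (le_max_right y X) (le_of_lt hx)
      refine (hbound x hXx).trans ?_
      have : 0 ≤ c * x ^ e := le_trans (norm_nonneg _) (hbound x hXx)
      rw [Real.norm_eq_abs, abs_of_nonneg this]


lemma div_rpow_helper {y a b c d : ℝ} (hy : 0 < y) (hd : 0 < d) :
    (c * y ^ a) / (d * y ^ b) = (c / d) * y ^ (a - b) := by
  rw [Real.rpow_sub hy]
  have h1 := (Real.rpow_pos_of_pos hy b).ne'
  field_simp

theorem stmt_16 (φ h G s' s : ℝ → ℝ)
    (hφm : Measurable φ)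
    (hφb : ∃ C : ℝ, ∀ u, 0 ≤ u → |φ u| ≤ C)
    (hh : ∀ l, h l = ∫ u in (0:ℝ)..l, φ u)
    (hG : ∀ x, G x = ∫ l in (0:ℝ)..x, h l / l)
    (hs' : ∀ x, 0 < x → s' x = x⁻¹ * Real.exp (G x))
    (hs : ∀ x, 0 < x → s x = ∫ u in (1:ℝ)..x, s' u)
    (hinfty : ℝ) (hlim : Tendsto h atTop (nhds hinfty)) (h2 : 2 < hinfty) :
    (∀ y : ℝ, 1 ≤ y → IntegrableOn (fun x => 1 / s' x) (Ioi y)) ∧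
    (∀ ε : ℝ, 0 < ε → ∃ Y : ℝ, 1 ≤ Y ∧ ∀ y, Y ≤ y →
      y ^ (3 - hinfty - ε) ≤ (s y / s' y) * ∫ x in Ioi y, 1 / s' x ∧
      (s y / s' y) * ∫ x in Ioi y, 1 / s' x ≤ y ^ (3 - hinfty + ε)) := by
  obtain ⟨C, hC⟩ := hφb
  have hbd : ∀ l, 0 ≤ l → |h l| ≤ C * l := fun l hl => h_bound hφm hC hh hl
  have hcont : ∀ x : ℝ, 0 < x → ContinuousAt h x := fun x hx => h_contAt hφm hC hh hx
  have hGc : ∀ x : ℝ, 0 < x → ContinuousAt G x := fun x hx => G_contAt hcont hbd hG hx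
  have hs'pos : ∀ x : ℝ, 0 < x → 0 < s' x := fun x hx => by
    rw [hs' x hx]; positivity
  have getX : ∀ δ : ℝ, 0 < δ → ∃ X : ℝ, 1 ≤ X ∧ ∀ l, X ≤ l → |h l - hinfty| ≤ δ := by
    intro δ hδ
    obtain ⟨N, hN⟩ := Metric.tendsto_atTop.mp hlim δ hδ
    exact ⟨max N 1, le_max_right _ _, fun l hl => le_of_lt (by
      simpa [Real.dist_eq] using hN l (le_trans (le_max_left N 1) hl))⟩
  have key : ∀ δ : ℝ, 0 < δ → ∃ X c₁ c₂ : ℝ, 1 ≤ X ∧ 0 < c₁ ∧ 0 < c₂ ∧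
      ∀ x, X ≤ x → c₁ * x ^ (hinfty - δ - 1) ≤ s' x ∧ s' x ≤ c₂ * x ^ (hinfty + δ - 1) := by
    intro δ hδ
    obtain ⟨X, hX1, hnear⟩ := getX δ hδ
    exact ⟨X, Real.exp (G X) * X ^ (-(hinfty - δ)), Real.exp (G X) * X ^ (-(hinfty + δ)),
      hX1, by positivity, by positivity,
      fun x hx => sprime_bounds hcont hbd hG hs' hX1 hnear hx⟩
  have part1 : ∀ y : ℝ, 1 ≤ y → IntegrableOn (fun x => 1 / s' x) (Ioi y) := by
    obtain ⟨X, c₁, c₂, hX1, hc₁, hc₂, hkey⟩ := key ((hinfty - 2)/2) (by linarith)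
    intro y hy
    refine integrable_one_div_sprime hGc hs' hX1
      (e := 1 + (hinfty-2)/2 - hinfty) (by linarith) (c := c₁⁻¹) ?_ hy
    intro x hx
    have hx0 : (0:ℝ) < x := lt_of_lt_of_le (lt_of_lt_of_le one_pos hX1) hx
    have h1 := (hkey x hx).1
    have hpos : 0 < c₁ * x ^ (hinfty - (hinfty-2)/2 - 1) := by positivity
    have hs'x := hs'pos x hx0
    rw [Real.norm_eq_abs, abs_of_pos (by positivity : 0 < 1 / s' x), one_div]
    calc (s' x)⁻¹ ≤ (c₁ * x ^ (hinfty - (hinfty-2)/2 - 1))⁻¹ :=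
          inv_anti₀ hpos h1
      _ = c₁⁻¹ * x ^ (1 + (hinfty-2)/2 - hinfty) := by
          rw [inv_const_rpow hc₁ hx0,
            show -(hinfty - (hinfty-2)/2 - 1) = 1 + (hinfty-2)/2 - hinfty by ring]
  refine ⟨part1, ?_⟩
  intro ε hε
  set δ := min (ε/4) ((hinfty-2)/2) with hδdef
  have hδ0 : 0 < δ := lt_min (by linarith) (by linarith)
  have hδε : 3*δ ≤ 3*(ε/4) := by
    have := min_le_left (ε/4) ((hinfty-2)/2); linarith
  have hεδ' : 0 < ε - 3*δ := by linarith
  have hδh : δ < hinfty - 2 := lt_of_le_of_lt (min_le_right _ _) (by linarith)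
  obtain ⟨X, c₁, c₂, hX1, hc₁, hc₂, hkey⟩ := key δ hδ0
  have hX0 : (0:ℝ) < X := lt_of_lt_of_le one_pos hX1
  have hpδ : 0 < hinfty - δ := by linarith
  have hpδ2 : 0 < hinfty - 2 - δ := by linarith
  have hpδ3 : 0 < hinfty - 2 + δ := by linarith
  have hppδ : 0 < hinfty + δ := by linarith
  set c₁' := c₁ / (hinfty - δ) with hc₁'def
  have hc₁' : 0 < c₁' := div_pos hc₁ hpδ
  set E := |s X| + c₂/(hinfty+δ) with hEdef
  have hE : 0 < E := add_pos_of_nonneg_of_pos (abs_nonneg _) (div_pos hc₂ hppδ)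
  set L := c₁'/2/c₂ * c₂⁻¹ / (hinfty-2+δ) with hLdef
  have hL : 0 < L := div_pos (mul_pos (div_pos (half_pos hc₁') hc₂) (inv_pos.2 hc₂)) hpδ3
  set U := E/c₁ * c₁⁻¹ / (hinfty-2-δ) with hUdef
  have hU : 0 < U := div_pos (mul_pos (div_pos hE hc₁) (inv_pos.2 hc₁)) hpδ2
  -- interval integrability of s'
  have hs'ii : ∀ a b : ℝ, 1 ≤ a → a ≤ b → IntervalIntegrable s' volume a b := by
    intro a b ha hab
    rw [intervalIntegrable_iff_integrableOn_Ioc_of_le hab]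
    have hcOn : ContinuousOn (fun x => x⁻¹ * Real.exp (G x)) (Icc a b) := by
      intro x hx
      have hx0 : (0:ℝ) < x := lt_of_lt_of_le one_pos (le_trans ha hx.1)
      exact ((continuousAt_id.inv₀ hx0.ne').mul
        (Real.continuous_exp.continuousAt.comp (hGc x hx0))).continuousWithinAt
    exact (hcOn.integrableOn_Icc.mono_set Ioc_subset_Icc_self).congr_fun
      (fun x hx => (hs' x (lt_of_lt_of_le one_pos (le_trans ha hx.1.le))).symm)
      measurableSet_Ioc
  have hsdiff : ∀ y, X ≤ y → s y = s X + ∫ u in X..y, s' u := by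
    intro y hy
    rw [hs y (lt_of_lt_of_le hX0 hy), hs X hX0]
    exact (intervalIntegral.integral_add_adjacent_intervals
      (hs'ii 1 X le_rfl hX1) (hs'ii X y hX1 hy)).symm
  -- rpow interval integral
  have hrii : ∀ (cc r : ℝ) (y : ℝ), X ≤ y →
      IntervalIntegrable (fun x => cc * x ^ r) volume X y := by
    intro cc r y hy
    refine ContinuousOn.intervalIntegrable fun x hx => ?_
    have hx0 : (0:ℝ) < x := by
      rw [uIcc_of_le hy] at hx; exact lt_of_lt_of_le hX0 hx.1
    exact (continuousAt_const.mul
      (Real.continuousAt_rpow_const x r (Or.inl hx0.ne'))).continuousWithinAt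
  have hrint : ∀ (cc r : ℝ), -1 < r → ∀ y, X ≤ y →
      ∫ x in X..y, cc * x ^ r = cc * ((y^(r+1) - X^(r+1))/(r+1)) := by
    intro cc r hr y hy
    rw [intervalIntegral.integral_const_mul, integral_rpow (Or.inl hr)]
  -- s upper bound
  have hsub : ∀ y, X ≤ y → s y ≤ E * y ^ (hinfty+δ) := by
    intro y hy
    have hy1 : (1:ℝ) ≤ y := le_trans hX1 hy
    have h1 : (∫ u in X..y, s' u) ≤ c₂ * ((y^(hinfty+δ-1+1) - X^(hinfty+δ-1+1))/(hinfty+δ-1+1)) := by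
      rw [← hrint c₂ (hinfty+δ-1) (by linarith) y hy]
      exact intervalIntegral.integral_mono_on hy (hs'ii X y hX1 hy)
        (hrii c₂ (hinfty+δ-1) y hy) (fun x hx => (hkey x hx.1).2)
    rw [show hinfty+δ-1+1 = hinfty+δ by ring] at h1
    have hyp : (1:ℝ) ≤ y ^ (hinfty+δ) := Real.one_le_rpow hy1 (by linarith)
    have hXp : (0:ℝ) ≤ X ^ (hinfty+δ) := Real.rpow_nonneg hX0.le _
    have habs : s X ≤ |s X| := le_abs_self _
    have h2 := hsdiff y hy
    have h3 : c₂ * ((y^(hinfty+δ) - X^(hinfty+δ))/(hinfty+δ)) ≤ (c₂/(hinfty+δ)) * y^(hinfty+δ) := by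
      rw [show c₂/(hinfty+δ) * y^(hinfty+δ) = c₂ * y^(hinfty+δ)/(hinfty+δ) by ring,
        show c₂ * ((y^(hinfty+δ) - X^(hinfty+δ))/(hinfty+δ))
          = c₂ * (y^(hinfty+δ) - X^(hinfty+δ))/(hinfty+δ) by ring,
        div_le_div_iff_of_pos_right hppδ]
      nlinarith
    have h4 : |s X| * 1 ≤ |s X| * y ^ (hinfty+δ) :=
      mul_le_mul_of_nonneg_left hyp (abs_nonneg _)
    rw [hEdef, add_mul]
    linarith
  -- s lower bound
  have hslb : ∀ y, X ≤ y → s X + c₁' * (y^(hinfty-δ) - X^(hinfty-δ)) ≤ s y := by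
    intro y hy
    have h1 : c₂ = c₂ := rfl
    have h1' : c₁ * ((y^(hinfty-δ-1+1) - X^(hinfty-δ-1+1))/(hinfty-δ-1+1)) ≤ ∫ u in X..y, s' u := by
      rw [← hrint c₁ (hinfty-δ-1) (by linarith) y hy]
      exact intervalIntegral.integral_mono_on hy
        (hrii c₁ (hinfty-δ-1) y hy) (hs'ii X y hX1 hy) (fun x hx => (hkey x hx.1).1)
    rw [show hinfty-δ-1+1 = hinfty-δ by ring] at h1'
    have h2 := hsdiff y hy
    rw [hc₁'def, div_mul_eq_mul_div, mul_div_assoc]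
    linarith [h1']
  -- pointwise bounds on 1/s'
  have hinv_ub : ∀ x, X ≤ x → 1 / s' x ≤ c₁⁻¹ * x ^ (1+δ-hinfty) := by
    intro x hx
    have hx0 : (0:ℝ) < x := lt_of_lt_of_le hX0 hx
    have hpos : 0 < c₁ * x ^ (hinfty - δ - 1) := mul_pos hc₁ (Real.rpow_pos_of_pos hx0 _)
    rw [one_div]
    calc (s' x)⁻¹ ≤ (c₁ * x ^ (hinfty - δ - 1))⁻¹ := inv_anti₀ hpos (hkey x hx).1
      _ = c₁⁻¹ * x ^ (1+δ-hinfty) := by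
          rw [inv_const_rpow hc₁ hx0, show -(hinfty - δ - 1) = 1+δ-hinfty by ring]
  have hinv_lb : ∀ x, X ≤ x → c₂⁻¹ * x ^ (1-δ-hinfty) ≤ 1 / s' x := by
    intro x hx
    have hx0 : (0:ℝ) < x := lt_of_lt_of_le hX0 hx
    have hs'x := hs'pos x hx0
    rw [one_div]
    calc c₂⁻¹ * x ^ (1-δ-hinfty) = (c₂ * x ^ (hinfty + δ - 1))⁻¹ := by
          rw [inv_const_rpow hc₂ hx0, show -(hinfty + δ - 1) = 1-δ-hinfty by ring]
      _ ≤ (s' x)⁻¹ := inv_anti₀ hs'x (hkey x hx).2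
  -- integral bounds
  have hIub : ∀ y, X ≤ y → (∫ x in Ioi y, 1 / s' x) ≤ c₁⁻¹ * (y^(2+δ-hinfty)/(hinfty-2-δ)) := by
    intro y hy
    have hy0 : (0:ℝ) < y := lt_of_lt_of_le hX0 hy
    have he : (1+δ-hinfty) < -1 := by linarith
    have hg : IntegrableOn (fun x => c₁⁻¹ * x ^ (1+δ-hinfty)) (Ioi y) :=
      (integrableOn_Ioi_rpow_of_lt he hy0).const_mul _
    have hmono := setIntegral_mono_on (part1 y (le_trans hX1 hy)) hg measurableSet_Ioi
      (fun x hx => hinv_ub x (le_trans hy (le_of_lt hx)))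
    have hgval : (∫ x in Ioi y, c₁⁻¹ * x ^ (1+δ-hinfty))
        = c₁⁻¹ * (y^(2+δ-hinfty)/(hinfty-2-δ)) := by
      rw [MeasureTheory.integral_const_mul, integral_Ioi_rpow_of_lt he hy0,
        show (1+δ-hinfty)+1 = 2+δ-hinfty by ring]
      congr 1
      rw [div_eq_div_iff (ne_of_lt (show 2+δ-hinfty < 0 by linarith)) (ne_of_gt hpδ2)]
      ring
    rw [← hgval]; exact hmono
  have hIlb : ∀ y, X ≤ y → c₂⁻¹ * (y^(2-δ-hinfty)/(hinfty-2+δ)) ≤ ∫ x in Ioi y, 1 / s' x := by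
    intro y hy
    have hy0 : (0:ℝ) < y := lt_of_lt_of_le hX0 hy
    have he : (1-δ-hinfty) < -1 := by linarith
    have hg : IntegrableOn (fun x => c₂⁻¹ * x ^ (1-δ-hinfty)) (Ioi y) :=
      (integrableOn_Ioi_rpow_of_lt he hy0).const_mul _
    have hmono := setIntegral_mono_on hg (part1 y (le_trans hX1 hy)) measurableSet_Ioi
      (fun x hx => hinv_lb x (le_trans hy (le_of_lt hx)))
    have hgval : (∫ x in Ioi y, c₂⁻¹ * x ^ (1-δ-hinfty))
        = c₂⁻¹ * (y^(2-δ-hinfty)/(hinfty-2+δ)) := by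
      rw [MeasureTheory.integral_const_mul, integral_Ioi_rpow_of_lt he hy0,
        show (1-δ-hinfty)+1 = 2-δ-hinfty by ring]
      congr 1
      rw [div_eq_div_iff (ne_of_lt (show 2-δ-hinfty < 0 by linarith)) (ne_of_gt hpδ3)]
      ring
    exact le_trans (le_of_eq hgval.symm) hmono
  -- eventual bounds
  have ev1 : ∀ᶠ y in atTop, c₁' * X^(hinfty-δ) - s X ≤ (c₁'/2) * y^(hinfty-δ) :=
    (Tendsto.const_mul_atTop (half_pos hc₁') (tendsto_rpow_atTop hpδ)).eventually_ge_atTop _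
  have ev2 : ∀ᶠ y in atTop, U ≤ y ^ (ε - 3*δ) :=
    (tendsto_rpow_atTop hεδ').eventually_ge_atTop U
  have ev3 : ∀ᶠ y in atTop, y ^ (-(ε - 3*δ)) < L :=
    (tendsto_rpow_neg_atTop hεδ').eventually_lt_const hL
  have hfinal : ∀ᶠ y in atTop,
      y ^ (3 - hinfty - ε) ≤ (s y / s' y) * (∫ x in Ioi y, 1 / s' x) ∧
      (s y / s' y) * (∫ x in Ioi y, 1 / s' x) ≤ y ^ (3 - hinfty + ε) := by
    filter_upwards [eventually_ge_atTop X, ev1, ev2, ev3] with y hyX hy1 hy2 hy3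
    have hy1' : (1:ℝ) ≤ y := le_trans hX1 hyX
    have hy0 : (0:ℝ) < y := lt_of_lt_of_le one_pos hy1'
    have hs'y := hs'pos y hy0
    have hkl := (hkey y hyX).1
    have hku := (hkey y hyX).2
    have hsyl : c₁'/2 * y^(hinfty-δ) ≤ s y := by
      have h1 := hslb y hyX
      nlinarith [h1, hy1]
    have hsyu := hsub y hyX
    have hsy0 : (0:ℝ) ≤ s y :=
      le_trans (le_of_lt (mul_pos (half_pos hc₁') (Real.rpow_pos_of_pos hy0 _))) hsyl
    have hratio0 : (0:ℝ) ≤ s y / s' y := div_nonneg hsy0 hs'y.le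
    -- ratio bounds
    have hrl : (c₁'/2/c₂) * y ^ ((hinfty-δ) - (hinfty+δ-1)) ≤ s y / s' y := by
      rw [← div_rpow_helper hy0 hc₂]
      exact div_le_div₀ hsy0 hsyl hs'y hku
    have hru : s y / s' y ≤ (E/c₁) * y ^ ((hinfty+δ) - (hinfty-δ-1)) := by
      rw [← div_rpow_helper hy0 hc₁]
      exact div_le_div₀ (mul_nonneg hE.le (Real.rpow_pos_of_pos hy0 _).le) hsyu
        (mul_pos hc₁ (Real.rpow_pos_of_pos hy0 _)) hkl
    have hiu := hIub y hyX
    have hil := hIlb y hyX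
    have hJ0 : (0:ℝ) ≤ ∫ x in Ioi y, 1 / s' x :=
      le_trans (le_of_lt (mul_pos (inv_pos.2 hc₂)
        (div_pos (Real.rpow_pos_of_pos hy0 _) hpδ3))) hil
    constructor
    · calc y ^ (3 - hinfty - ε) = y ^ (-(ε - 3*δ)) * y ^ (3 - hinfty - 3*δ) := by
            rw [← Real.rpow_add hy0]; congr 1; ring
        _ ≤ L * y ^ (3 - hinfty - 3*δ) :=
            mul_le_mul_of_nonneg_right hy3.le (Real.rpow_nonneg hy0.le _)
        _ = ((c₁'/2/c₂) * y ^ ((hinfty-δ) - (hinfty+δ-1))) *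
              (c₂⁻¹ * (y^(2-δ-hinfty)/(hinfty-2+δ))) := by
            rw [show (3 - hinfty - 3*δ) = ((hinfty-δ) - (hinfty+δ-1)) + (2-δ-hinfty) by ring,
              Real.rpow_add hy0, hLdef]
            generalize y ^ ((hinfty-δ) - (hinfty+δ-1)) = A
            generalize y ^ (2-δ-hinfty) = B
            ring
        _ ≤ (s y / s' y) * (∫ x in Ioi y, 1 / s' x) :=
            mul_le_mul hrl hil
              (mul_nonneg (inv_pos.2 hc₂).le
                (div_nonneg (Real.rpow_nonneg hy0.le _) hpδ3.le)) hratio0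
    · calc (s y / s' y) * (∫ x in Ioi y, 1 / s' x)
          ≤ ((E/c₁) * y ^ ((hinfty+δ) - (hinfty-δ-1))) *
              (c₁⁻¹ * (y^(2+δ-hinfty)/(hinfty-2-δ))) :=
            mul_le_mul hru hiu hJ0
              (mul_nonneg (div_pos hE hc₁).le (Real.rpow_nonneg hy0.le _))
        _ = U * y ^ (3 - hinfty + 3*δ) := by
            rw [show (3 - hinfty + 3*δ) = ((hinfty+δ) - (hinfty-δ-1)) + (2+δ-hinfty) by ring,
              Real.rpow_add hy0, hUdef]
            generalize y ^ ((hinfty+δ) - (hinfty-δ-1)) = A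
            generalize y ^ (2+δ-hinfty) = B
            ring
        _ ≤ y ^ (ε - 3*δ) * y ^ (3 - hinfty + 3*δ) :=
            mul_le_mul_of_nonneg_right hy2 (Real.rpow_nonneg hy0.le _)
        _ = y ^ (3 - hinfty + ε) := by
            rw [← Real.rpow_add hy0]; congr 1; ring
  obtain ⟨Y, hY⟩ := eventually_atTop.mp hfinal
  exact ⟨max Y 1, le_max_right _ _, fun y hy => hY y (le_trans (le_max_left _ _) hy)⟩

end Stmt16

/-- If `h(l) → h∞ > 2` as `l → ∞`, then `∫_y^∞ dx/s'(x)` is finite for every `y ≥ 1`,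
and for every `ε > 0`, for all large `y`,
`y^(3-h∞-ε) ≤ (s(y)/s'(y))·∫_y^∞ dx/s'(x) ≤ y^(3-h∞+ε)`. -/
theorem stmt_16 (φ h G s' s : ℝ → ℝ)
    (hφm : Measurable φ)
    (hφb : ∃ C : ℝ, ∀ u, 0 ≤ u → |φ u| ≤ C)
    (hh : ∀ l, h l = ∫ u in (0:ℝ)..l, φ u)
    (hG : ∀ x, G x = ∫ l in (0:ℝ)..x, h l / l)
    (hs' : ∀ x, 0 < x → s' x = x⁻¹ * Real.exp (G x))
    (hs : ∀ x, 0 < x → s x = ∫ u in (1:ℝ)..x, s' u)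
    (hinfty : ℝ) (hlim : Tendsto h atTop (nhds hinfty)) (h2 : 2 < hinfty) :
    (∀ y : ℝ, 1 ≤ y → IntegrableOn (fun x => 1 / s' x) (Ioi y)) ∧
    (∀ ε : ℝ, 0 < ε → ∃ Y : ℝ, 1 ≤ Y ∧ ∀ y, Y ≤ y →
      y ^ (3 - hinfty - ε) ≤ (s y / s' y) * ∫ x in Ioi y, 1 / s' x ∧
      (s y / s' y) * ∫ x in Ioi y, 1 / s' x ≤ y ^ (3 - hinfty + ε)) :=
  Stmt16.stmt_16 φ h G s' s hφm hφb hh hG hs' hs hinfty hlim h2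
end
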